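/- arXiv:2603.21844 — 10 statements merged into one kernel-verified Lean document; each statement's English description precedes it below -/
import Mathlib

section
/- Let G be a DAG and S a prefix node set. Suppose u ∈ V and v ∈ V\S are such that u and v are d-separated given S ∪ W for some W ⊆ V\S, and u and v are d-connected given S ∪ W' for every proper subset W' ⊂ W. Then W ⊆ Anc(u) ∪ Anc(v). -/
/-- A relation (directed graph) is acyclic: no directed cycle. -/
def AcyclicRel {V : Type*} (E : V → V → Prop) : Prop :=
  ∀ v, ¬ Relation.TransGen E v v

/-- A prefix node set: closed under taking (strict) ancestors. -/
def PrefixSet {V : Type*} (E : V → V → Prop) (S : Set V) : Prop :=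
  ∀ v ∈ S, ∀ u, Relation.TransGen E u v → u ∈ S

/-- Strict ancestors of `v`. -/
def Anc {V : Type*} (E : V → V → Prop) (v : V) : Set V :=
  {u | Relation.TransGen E u v}

/-- Inclusive ancestors of `v` : `Anc[v] = Anc(v) ∪ {v}`. -/
def AncI {V : Type*} (E : V → V → Prop) (v : V) : Set V :=
  {u | Relation.ReflTransGen E u v}

/-- A path (list of vertices, consecutive ones adjacent in the skeleton) is
active given the conditioning set `C`: every interior non-collider is outside
`C` and every collider has an inclusive descendant in `C`. -/
def ActivePath {V : Type*} (E : V → V → Prop) (C : Set V) (p : List V) : Prop :=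
  p.Chain' (fun a b => E a b ∨ E b a) ∧
  (∀ a w b, [a, w, b] <:+: p → ¬(E a w ∧ E b w) → w ∉ C) ∧
  (∀ a w b, [a, w, b] <:+: p → E a w → E b w → ∃ d ∈ C, Relation.ReflTransGen E w d)

/-- `u` and `v` are d-connected given `C`. -/
def DConn {V : Type*} (E : V → V → Prop) (C : Set V) (u v : V) : Prop :=
  ∃ p : List V, p.head? = some u ∧ p.getLast? = some v ∧ ActivePath E C p

/-- `u` and `v` are d-separated given `C`. -/
def DSep {V : Type*} (E : V → V → Prop) (C : Set V) (u v : V) : Prop :=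
  ¬ DConn E C u v

/-- Forward sweep along an active path: a vertex with an outgoing edge along
the path is an ancestor of the final endpoint or of some node of `C`. -/
lemma sweep_aux {V : Type*} (E : V → V → Prop) (C : Set V) (p : List V) (v : V)
    (hlast : p.getLast? = some v)
    (hchain : p.Chain' (fun a b => E a b ∨ E b a))
    (hcoll : ∀ a w b, [a, w, b] <:+: p → E a w → E b w →
      ∃ d ∈ C, Relation.ReflTransGen E w d) :
    ∀ rest (w x : V), (w :: x :: rest) <:+ p → E w x →
      Relation.TransGen E w v ∨ ∃ d ∈ C, Relation.TransGen E w d := by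
  intro rest
  induction rest with
  | nil =>
    intro w x hsuf hwx
    obtain ⟨t, ht⟩ := hsuf
    have hx : p.getLast? = some x := by
      rw [← ht]
      simp
    rw [hlast] at hx
    obtain rfl : v = x := Option.some_inj.mp hx
    exact Or.inl (Relation.TransGen.single hwx)
  | cons y rest ih =>
    intro w x hsuf hwx
    obtain ⟨t, ht⟩ := hsuf
    have hinf : [w, x, y] <:+: p := ⟨t, rest, by rw [← ht]; simp⟩
    have hch : (w :: x :: y :: rest).Chain' (fun a b => E a b ∨ E b a) :=
      hchain.suffix ⟨t, ht⟩
    have hxy : E x y ∨ E y x := (List.isChain_cons_cons.mp (List.isChain_cons_cons.mp hch).2).1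
    rcases hxy with hxy | hyx
    · have hsuf' : (x :: y :: rest) <:+ p := ⟨t ++ [w], by rw [← ht]; simp⟩
      rcases ih x y hsuf' hxy with h | ⟨d, hd, hxd⟩
      · exact Or.inl (h.head hwx)
      · exact Or.inr ⟨d, hd, hxd.head hwx⟩
    · obtain ⟨d, hd, hxd⟩ := hcoll w x y hinf hwx hyx
      exact Or.inr ⟨d, hd, Relation.TransGen.head' hwx hxd⟩

/-- Minimal separating sets over a prefix node set consist of ancestors of the
two separated nodes. -/
theorem stmt_5 {V : Type*} [Fintype V] (E : V → V → Prop) (hacyc : AcyclicRel E)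
    (S : Set V) (hS : PrefixSet E S) (u v : V) (hv : v ∉ S)
    (W : Set V) (hW : W ⊆ Sᶜ)
    (hsep : DSep E (S ∪ W) u v)
    (hmin : ∀ W' ⊂ W, DConn E (S ∪ W') u v) :
    W ⊆ Anc E u ∪ Anc E v := by
  intro w₀ hw₀
  by_contra hwa
  set W' : Set V := W ∩ (Anc E u ∪ Anc E v) with hW'def
  have hW'sub : W' ⊆ W := Set.inter_subset_left
  have hW'A : W' ⊆ Anc E u ∪ Anc E v := Set.inter_subset_right
  have hW'ss : W' ⊂ W := ⟨hW'sub, fun h => hwa ((h hw₀).2)⟩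
  obtain ⟨p, hh, hl, hchain, hnc, hcol⟩ := hmin W' hW'ss
  -- resolve: a vertex of `W \ W'` cannot be an ancestor of `u`, `v`, or `S ∪ W'`
  have resolve : ∀ z, z ∈ W → z ∉ W' →
      (Relation.TransGen E z u ∨ Relation.TransGen E z v ∨
        ∃ d ∈ S ∪ W', Relation.TransGen E z d) → False := by
    intro z hzW hzW' h
    rcases h with h | h | ⟨d, hd, hzd⟩
    · exact hzW' ⟨hzW, Or.inl h⟩
    · exact hzW' ⟨hzW, Or.inr h⟩
    · rcases hd with hd | hd
      · exact hW hzW (hS d hd z hzd)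
      · rcases hW'A hd with h' | h'
        · exact hzW' ⟨hzW, Or.inl (hzd.trans h')⟩
        · exact hzW' ⟨hzW, Or.inr (hzd.trans h')⟩
  apply hsep
  refine ⟨p, hh, hl, hchain, ?_, ?_⟩
  · -- non-collider condition for the larger set `S ∪ W`
    intro a z b hinf hncol hz
    have hz' : z ∉ S ∪ W' := hnc a z b hinf hncol
    have hzW : z ∈ W := by
      rcases hz with hz | hz
      · exact absurd (Or.inl hz) hz'
      · exact hz
    have hzW' : z ∉ W' := fun h => hz' (Or.inr h)
    obtain ⟨l₁, l₂, hp⟩ := hinf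
    have hch : ([a, z, b]).Chain' (fun a b => E a b ∨ E b a) := hchain.infix ⟨l₁, l₂, hp⟩
    have haz : E a z ∨ E z a := (List.isChain_cons_cons.mp hch).1
    have hzb : E z b ∨ E b z := (List.isChain_cons_cons.mp (List.isChain_cons_cons.mp hch).2).1
    rcases hzb with hzb | hbz
    · -- sweep forward towards v
      have hsuf : (z :: b :: l₂) <:+ p := ⟨l₁ ++ [a], by rw [← hp]; simp⟩
      rcases sweep_aux E (S ∪ W') p v hl hchain hcol l₂ z b hsuf hzb with h | ⟨d, hd, hzd⟩
      · exact resolve z hzW hzW' (Or.inr (Or.inl h))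
      · exact resolve z hzW hzW' (Or.inr (Or.inr ⟨d, hd, hzd⟩))
    · have hza : E z a := by
        rcases haz with haz | hza
        · exact absurd ⟨haz, hbz⟩ hncol
        · exact hza
      -- sweep backward towards u, using the reversed path
      have hl' : p.reverse.getLast? = some u := by simp [hh]
      have hchain' : p.reverse.Chain' (fun a b => E a b ∨ E b a) := by
        exact List.isChain_reverse.mpr (hchain.imp fun _ _ h => h.symm)
      have hcol' : ∀ a w b, [a, w, b] <:+: p.reverse → E a w → E b w →
          ∃ d ∈ S ∪ W', Relation.ReflTransGen E w d := by
        intro a w b hinf h1 h2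
        have : [b, w, a] <:+: p := by
          rw [← List.reverse_infix] at hinf
          simpa using hinf
        exact hcol b w a this h2 h1
      have hsuf : (z :: a :: l₁.reverse) <:+ p.reverse :=
        ⟨l₂.reverse ++ [b], by rw [← hp]; simp⟩
      rcases sweep_aux E (S ∪ W') p.reverse u hl' hchain' hcol' l₁.reverse z a hsuf hza with
        h | ⟨d, hd, hzd⟩
      · exact resolve z hzW hzW' (Or.inl h)
      · exact resolve z hzW hzW' (Or.inr (Or.inr ⟨d, hd, hzd⟩))
  · -- collider condition: monotone in the conditioning set
    intro a z b hinf h1 h2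
    obtain ⟨d, hd, hr⟩ := hcol a z b hinf h1 h2
    rcases hd with hd | hd
    · exact ⟨d, Or.inl hd, hr⟩
    · exact ⟨d, Or.inr (hW'sub hd), hr⟩
end

section
/- Let G be a DAG and S ⊆ V a prefix node set. Let A ⊆ V and B, C ⊆ V\S be pairwise disjoint, and let H = G[S̄ ∪ A] be the induced subgraph on (V\S) ∪ A. Then A and B are d-connected in G given (S\A) ∪ C if and only if A and B are d-connected in H given C. -/
section Aux
variable {V : Type*} {E : V → V → Prop} {S A C : Set V}

lemma descClosed (hS : PrefixSet E S) {x y : V}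
    (h : Relation.ReflTransGen E x y) (hx : x ∈ Sᶜ) : y ∈ Sᶜ := by
  induction h with
  | refl => exact hx
  | tail h1 h2 ih => exact fun hc => ih (hS _ hc _ (Relation.TransGen.single h2))

lemma liftDesc (hS : PrefixSet E S) {x d : V} (h : Relation.ReflTransGen E x d) :
    x ∈ Sᶜ → Relation.ReflTransGen (fun u v => E u v ∧ u ∈ Sᶜ ∪ A ∧ v ∈ Sᶜ ∪ A) x d := by
  induction h using Relation.ReflTransGen.head_induction_on with
  | refl => exact fun _ => .refl
  | head h1 h2 ih =>
      intro hx
      have hc : _ ∈ Sᶜ := descClosed hS (Relation.ReflTransGen.single h1) hx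
      exact Relation.ReflTransGen.head ⟨h1, Or.inl hx, Or.inl hc⟩ (ih hc)

lemma mem_tail_of_infix {x w y : V} {q : List V} (h : [x, w, y] <:+: q) :
    w ∈ q.tail ∧ y ∈ q.tail := by
  obtain ⟨s, t, rfl⟩ := h
  cases s with
  | nil => simp
  | cons a s => constructor <;> simp [List.mem_append]

lemma suffix_tail_of_lt {r q : List V} (h : r <:+ q) (hl : r.length < q.length) :
    r <:+ q.tail := by
  obtain ⟨t, rfl⟩ := h
  cases t with
  | nil => simp at hl
  | cons a t => exact ⟨t, by simp⟩

lemma exists_cons_suffix {r q : List V} (h : r <:+ q) (hl : r.length < q.length) :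
    ∃ x, x :: r <:+ q := by
  obtain ⟨t, rfl⟩ := h
  rcases t.eq_nil_or_concat with rfl | ⟨t', x, rfl⟩
  · simp at hl
  · exact ⟨x, t', by simp⟩

lemma exists_suffix_last_mem {p : List V} (h : ∃ v ∈ p, v ∈ A) :
    ∃ q, q <:+ p ∧ (∃ a' ∈ A, q.head? = some a') ∧ q.getLast? = p.getLast? ∧
      ∀ v ∈ q.tail, v ∉ A := by
  induction p with
  | nil => simp at h
  | cons x p ih =>
    by_cases h' : ∃ v ∈ p, v ∈ A
    · obtain ⟨q, hq, ha, hl, ht⟩ := ih h'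
      refine ⟨q, hq.trans (List.suffix_cons x p), ha, ?_, ht⟩
      rw [hl]
      obtain ⟨v, hv, _⟩ := h'
      cases p with
      | nil => simp at hv
      | cons y p => simp [List.getLast?_cons_cons]
    · refine ⟨x :: p, List.suffix_refl _, ⟨x, ?_, rfl⟩, rfl,
        fun v hv hvA => h' ⟨v, by simpa using hv, hvA⟩⟩
      obtain ⟨v, hv, hvA⟩ := h
      rcases List.mem_cons.mp hv with rfl | hv
      · exact hvA
      · exact absurd ⟨v, hv, hvA⟩ h'

lemma ActivePath.infix_closed {p q : List V} (h : ActivePath E C p) (hq : q <:+: p) :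
    ActivePath E C q :=
  ⟨h.1.infix hq, fun a w b ht => h.2.1 a w b (ht.trans hq),
   fun a w b ht => h.2.2 a w b (ht.trans hq)⟩

lemma chain'_and_mem {R : V → V → Prop} {P : V → Prop} {l : List V}
    (h : l.Chain' R) (hP : ∀ v ∈ l, P v) :
    l.Chain' (fun a b => R a b ∧ P a ∧ P b) := by
  induction l with
  | nil => exact List.isChain_nil
  | cons x l ih =>
    cases l with
    | nil => exact List.isChain_singleton _
    | cons y l =>
      unfold List.Chain' at h ⊢; rw [List.isChain_cons_cons] at h ⊢
      exact ⟨⟨h.1, hP x (by simp), hP y (by simp)⟩,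
        ih h.2 (fun v hv => hP v (List.mem_cons_of_mem _ hv))⟩

lemma tail_avoids_S (hS : PrefixSet E S) {q : List V} {b : V}
    (hact : ActivePath E (S \ A ∪ C) q)
    (hql : q.getLast? = some b) (hb : b ∈ Sᶜ)
    (htA : ∀ v ∈ q.tail, v ∉ A) :
    ∀ v ∈ q.tail, v ∈ Sᶜ := by
  have key : ∀ n r, r <:+ q → r.length = n → r.length < q.length →
      ∀ w, r.head? = some w → w ∈ Sᶜ := by
    intro n
    induction n with
    | zero =>
      intro r _ h0 _ w hw
      rw [List.length_eq_zero_iff.mp h0] at hw; simp at hw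
    | succ n ih =>
      intro r hr hlen hlt w hw
      cases r with
      | nil => simp at hw
      | cons w' r' =>
        have h0 : w = w' := by simpa [eq_comm] using hw
        subst h0
        cases r' with
        | nil =>
          obtain ⟨t, rfl⟩ := hr
          rw [show t ++ [w] = t ++ [w] ++ [] by simp] at hql
          have : w = b := by
            simpa [List.getLast?_append] using hql
          subst this; exact hb
        | cons y r'' =>
          by_contra hwS
          have hwS' : w ∈ S := not_not.mp hwS
          have hrt : (w :: y :: r'') <:+ q.tail := suffix_tail_of_lt hr hlt
          have hwA : w ∉ A := htA w (hrt.mem (by simp))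
          obtain ⟨x, hx⟩ := exists_cons_suffix hr hlt
          have hinf : [x, w, y] <:+: q :=
            List.IsInfix.trans ⟨[], r'', by simp⟩ hx.isInfix
          by_cases hcol : E x w ∧ E y w
          · have hyS : y ∈ S := hS w hwS' y (Relation.TransGen.single hcol.2)
            have hys : (y :: r'') <:+ q :=
              (List.suffix_cons w (y :: r'')).trans hr
            have hylt : (y :: r'').length < q.length := by
              simp only [List.length_cons] at hlt ⊢
              omega
            have hylen : (y :: r'').length = n := by
              simp only [List.length_cons] at hlen ⊢
              omega
            exact ih (y :: r'') hys hylen hylt y rfl hyS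
          · have := hact.2.1 x w y hinf hcol
            exact this (Or.inl ⟨hwS', hwA⟩)
  intro v hv
  obtain ⟨s, t, hst⟩ := List.append_of_mem hv
  have hsuf : (v :: t) <:+ q.tail := ⟨s, hst.symm⟩
  have hsuf' : (v :: t) <:+ q := hsuf.trans (List.tail_suffix q)
  have hlt : (v :: t).length < q.length := by
    have h1 := hsuf.length_le
    have h2 : q.tail.length < q.length := by
      cases q with
      | nil => simp at hv
      | cons a q => simp
    omega
  exact key (v :: t).length (v :: t) hsuf' rfl hlt v rfl

end Aux

/-- d-connection given a prefix node set reduces to d-connection in the induced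
subgraph on the complement of `S` together with `A`. -/
theorem stmt_6 {V : Type*} [Fintype V] (E : V → V → Prop) (hacyc : AcyclicRel E)
    (S : Set V) (hS : PrefixSet E S) (A B C : Set V)
    (hB : B ⊆ Sᶜ) (hC : C ⊆ Sᶜ)
    (hAB : Disjoint A B) (hAC : Disjoint A C) (hBC : Disjoint B C) :
    (∃ a ∈ A, ∃ b ∈ B, DConn E (S \ A ∪ C) a b) ↔
      (∃ a ∈ A, ∃ b ∈ B,
        DConn (fun x y => E x y ∧ x ∈ Sᶜ ∪ A ∧ y ∈ Sᶜ ∪ A) C a b) := by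
  constructor
  · rintro ⟨a, ha, b, hb, p, hph, hpl, hact⟩
    have hamem : a ∈ p := by
      cases p with
      | nil => simp at hph
      | cons x p =>
        obtain rfl : x = a := by simpa using hph
        simp
    obtain ⟨q, hq, ⟨a', ha', hqh⟩, hql, htA⟩ := exists_suffix_last_mem ⟨a, hamem, ha⟩
    have hactq := hact.infix_closed hq.isInfix
    have hqlb : q.getLast? = some b := hql.trans hpl
    have htS : ∀ v ∈ q.tail, v ∈ Sᶜ := tail_avoids_S hS hactq hqlb (hB hb) htA
    have hqmem : ∀ v ∈ q, v ∈ Sᶜ ∪ A := by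
      intro v hv
      cases q with
      | nil => simp at hqh
      | cons x t =>
        obtain rfl : x = a' := by simpa using hqh
        rcases List.mem_cons.mp hv with rfl | hv
        · exact Or.inr ha'
        · exact Or.inl (htS v hv)
    refine ⟨a', ha', b, hb, q, hqh, hqlb, ?_, ?_, ?_⟩
    · exact (chain'_and_mem hactq.1 hqmem).imp (fun u v h =>
        h.1.elim (fun he => Or.inl ⟨he, h.2.1, h.2.2⟩)
          (fun he => Or.inr ⟨he, h.2.2, h.2.1⟩))
    · intro x w y hinf hnc
      by_cases hcol : E x w ∧ E y w
      · exact absurd ⟨⟨hcol.1, hqmem x (hinf.mem (by simp)), hqmem w (hinf.mem (by simp))⟩,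
          hcol.2, hqmem y (hinf.mem (by simp)), hqmem w (hinf.mem (by simp))⟩ hnc
      · intro hwC
        exact hactq.2.1 x w y hinf hcol (Or.inr hwC)
    · intro x w y hinf h1 h2
      obtain ⟨d, hd, hwd⟩ := hactq.2.2 x w y hinf h1.1 h2.1
      have hwS : w ∈ Sᶜ := htS w (mem_tail_of_infix hinf).1
      have hdS : d ∈ Sᶜ := descClosed hS hwd hwS
      rcases hd with hd | hd
      · exact absurd hd.1 hdS
      · exact ⟨d, hd, liftDesc hS hwd hwS⟩
  · rintro ⟨a, ha, b, hb, p, hph, hpl, hch, hnc, hcol⟩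
    refine ⟨a, ha, b, hb, p, hph, hpl, ?_, ?_, ?_⟩
    · exact hch.imp (fun u v h => h.elim (fun he => Or.inl he.1) (fun he => Or.inr he.1))
    · intro x w y hinf hncG hwmem
      have hc := hch.infix hinf
      rw [List.isChain_cons_cons] at hc
      have hwSA : w ∈ Sᶜ ∪ A := hc.1.elim (fun h => h.2.2) (fun h => h.2.1)
      rcases hwmem with hmem | hmem
      · rcases hwSA with h | h
        · exact h hmem.1
        · exact hmem.2 h
      · exact hnc x w y hinf (fun hE => hncG ⟨hE.1.1, hE.2.1⟩) hmem
    · intro x w y hinf h1 h2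
      have hc := hch.infix hinf
      rw [List.isChain_cons_cons, List.isChain_cons_cons] at hc
      obtain ⟨hxw, hwy, -⟩ := hc
      have e1 := hxw.resolve_right (fun h =>
        hacyc x (Relation.TransGen.head h1 (Relation.TransGen.single h.1)))
      have e2 := hwy.resolve_left (fun h =>
        hacyc w (Relation.TransGen.head h.1 (Relation.TransGen.single h2)))
      obtain ⟨d, hd, hwd⟩ := hcol x w y hinf e1 e2
      exact ⟨d, Or.inr hd, Relation.ReflTransGen.mono (r := fun x y => E x y ∧ x ∈ Sᶜ ∪ A ∧ y ∈ Sᶜ ∪ A) (p := E) (fun a b h => h.1) w d hwd⟩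
end

section
/- Let G be a DAG, S a prefix node set, and let u ∈ V, k, v ∈ V\S form a v-structure u → k ← v (u, v both parents of k and u not adjacent to v). Then, with W = (Pa(u) ∪ Pa(v)) \ S, the nodes u and v are d-separated given S ∪ W, while u and v are d-connected given S ∪ W ∪ {k}. -/
section Aux

variable {V : Type*} {E : V → V → Prop} {C S : Set V}

private lemma active_suffix {p l : List V} (h : ActivePath E C p) (hl : l <:+ p) :
    ActivePath E C l := by
  obtain ⟨h1, h2, h3⟩ := h
  exact ⟨h1.suffix hl, fun a w b hi => h2 a w b (hi.trans hl.isInfix),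
    fun a w b hi => h3 a w b (hi.trans hl.isInfix)⟩

private lemma active_reverse {p : List V} (h : ActivePath E C p) :
    ActivePath E C p.reverse := by
  obtain ⟨h1, h2, h3⟩ := h
  refine ⟨?_, ?_, ?_⟩
  · show List.IsChain _ p.reverse
    rw [List.isChain_reverse]
    exact h1.imp (fun a b => Or.symm)
  · intro a w b hi hnc
    have hi' : [b, w, a] <:+: p := by
      have := List.reverse_infix.mpr hi
      simpa using this
    exact h2 b w a hi' (fun hc => hnc ⟨hc.2, hc.1⟩)
  · intro a w b hi haw hbw
    have hi' : [b, w, a] <:+: p := by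
      have := List.reverse_infix.mpr hi
      simpa using this
    exact h3 b w a hi' hbw haw

private lemma prefix_rtg (hS : PrefixSet E S) {c d : V}
    (h : Relation.ReflTransGen E c d) : d ∈ S → c ∈ S := by
  induction h with
  | refl => exact id
  | tail h' e ih => exact fun hd => ih (hS _ hd _ (Relation.TransGen.single e))

private lemma walk : ∀ (l : List V) (a b t : V), ActivePath E C (a :: b :: l) → E a b →
    (a :: b :: l).getLast? = some t →
    Relation.ReflTransGen E b t ∨
      ∃ c, Relation.ReflTransGen E b c ∧ ∃ d ∈ C, Relation.ReflTransGen E c d := by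
  intro l
  induction l with
  | nil =>
    intro a b t _ _ hlast
    simp only [List.getLast?_cons_cons, List.getLast?_singleton, Option.some.injEq] at hlast
    subst hlast
    exact Or.inl Relation.ReflTransGen.refl
  | cons c l' ih =>
    intro a b t hact hab hlast
    by_cases hcb : E c b
    · exact Or.inr ⟨b, Relation.ReflTransGen.refl, hact.2.2 a b c ⟨[], l', rfl⟩ hab hcb⟩
    · have hbc : E b c := by
        have h2 := hact.1.tail
        rcases (List.isChain_cons_cons.mp h2).1 with h | h
        · exact h
        · exact absurd h hcb
      have htail : ActivePath E C (b :: c :: l') :=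
        active_suffix hact (List.suffix_cons a _)
      rcases ih b c t htail hbc (by simpa using hlast) with h | ⟨c₀, h₁, h₂⟩
      · exact Or.inl (h.head hbc)
      · exact Or.inr ⟨c₀, h₁.head hbc, h₂⟩

private lemma oneside (hacyc : AcyclicRel E) {s t : V} (hst : s ≠ t)
    (hest : ¬ E s t) (hets : ¬ E t s) (hPa : ∀ a, E a s → a ∈ C) {p : List V}
    (hh : p.head? = some s) (hl : p.getLast? = some t) (hact : ActivePath E C p) :
    Relation.TransGen E s t ∨
      ∃ c, Relation.TransGen E s c ∧ ∃ d ∈ C, Relation.ReflTransGen E c d := by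
  match p with
  | [] => simp at hh
  | [x] =>
    simp only [List.head?_cons, Option.some.injEq] at hh
    simp only [List.getLast?_singleton, Option.some.injEq] at hl
    exact absurd (hh.symm.trans hl) hst
  | x :: y :: rest =>
    have hx : s = x := by symm; simpa using hh
    subst hx
    have hedge : E s y ∨ E y s := (List.isChain_cons_cons.mp hact.1).1
    match rest with
    | [] =>
      have hy : y = t := by simpa using hl
      subst hy
      rcases hedge with h | h
      · exact absurd h hest
      · exact absurd h hets
    | z :: rest' =>
      have hsy : E s y := by
        rcases hedge with h | h
        · exact h
        · by_cases hcol : E s y ∧ E z y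
          · exact hcol.1
          · exact absurd (hPa y h) (hact.2.1 s y z ⟨[], rest', rfl⟩ hcol)
      rcases walk (z :: rest') s y t hact hsy hl with h | ⟨c, h₁, h₂⟩
      · exact Or.inl (Relation.TransGen.head' hsy h)
      · exact Or.inr ⟨c, Relation.TransGen.head' hsy h₁, h₂⟩

end Aux

/-- For a v-structure `u → k ← v` with `k, v ∉ S` (`S` prefix), the set
`W = (Pa(u) ∪ Pa(v)) \ S` d-separates `u` and `v` given `S ∪ W`, while
additionally conditioning on `k` d-connects them. -/
theorem stmt_7 {V : Type*} [Fintype V] (E : V → V → Prop) (hacyc : AcyclicRel E)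
    (S : Set V) (hS : PrefixSet E S) (u k v : V)
    (hk : k ∈ Sᶜ) (hv : v ∈ Sᶜ)
    (huk : E u k) (hvk : E v k) (huv : u ≠ v)
    (hnadj : ¬ E u v ∧ ¬ E v u) :
    DSep E (S ∪ (({a | E a u} ∪ {a | E a v}) \ S)) u v ∧
    DConn E (S ∪ (({a | E a u} ∪ {a | E a v}) \ S) ∪ {k}) u v := by
  constructor
  · rintro ⟨p, hh, hl, hact⟩
    set C : Set V := S ∪ (({a | E a u} ∪ {a | E a v}) \ S) with hCdef
    have hC : ∀ d, d ∈ C → d ∈ S ∨ E d u ∨ E d v := by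
      intro d hd
      simp only [hCdef, Set.mem_union, Set.mem_diff, Set.mem_setOf_eq] at hd
      tauto
    have hPau : ∀ a, E a u → a ∈ C := by
      intro a ha
      by_cases haS : a ∈ S
      · exact Or.inl haS
      · exact Or.inr ⟨Or.inl ha, haS⟩
    have hPav : ∀ a, E a v → a ∈ C := by
      intro a ha
      by_cases haS : a ∈ S
      · exact Or.inl haS
      · exact Or.inr ⟨Or.inr ha, haS⟩
    have hvu : Relation.TransGen E v u := by
      rcases oneside hacyc (Ne.symm huv) hnadj.2 hnadj.1 hPav
          (p := p.reverse) (by simp [hl]) (by simp [hh]) (active_reverse hact) with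
        h | ⟨c, hvc, d, hdC, hcd⟩
      · exact h
      · rcases hC d hdC with hd | hd | hd
        · exact absurd (hS c (prefix_rtg hS hcd hd) v hvc) hv
        · exact (hvc.trans_left hcd).tail hd
        · exact absurd ((hvc.trans_left hcd).tail hd) (hacyc v)
    rcases oneside hacyc huv hnadj.1 hnadj.2 hPau hh hl hact with
      h | ⟨c, huc, d, hdC, hcd⟩
    · exact hacyc u (h.trans hvu)
    · rcases hC d hdC with hd | hd | hd
      · exact absurd (hS u (hS c (prefix_rtg hS hcd hd) u huc) v hvu) hv
      · exact hacyc u ((huc.trans_left hcd).tail hd)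
      · exact hacyc u (((huc.trans_left hcd).tail hd).trans hvu)
  · refine ⟨[u, k, v], rfl, by simp, ?_, ?_, ?_⟩
    · exact List.isChain_cons_cons.mpr ⟨Or.inl huk,
        List.isChain_cons_cons.mpr ⟨Or.inr hvk, List.isChain_singleton _⟩⟩
    · intro a w b hinf hnc
      obtain ⟨st, tl, hstl⟩ := hinf
      have hlen := congrArg List.length hstl
      simp only [List.length_append, List.length_cons] at hlen
      have hst0 : st = [] := List.eq_nil_of_length_eq_zero (by omega)
      have htl0 : tl = [] := List.eq_nil_of_length_eq_zero (by omega)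
      subst hst0; subst htl0
      simp only [List.nil_append, List.append_nil, List.cons.injEq] at hstl
      obtain ⟨h1, h2, h3, -⟩ := hstl
      exact (hnc ⟨by rw [h1, h2]; exact huk, by rw [h2, h3]; exact hvk⟩).elim
    · intro a w b hinf haw hbw
      obtain ⟨st, tl, hstl⟩ := hinf
      have hlen := congrArg List.length hstl
      simp only [List.length_append, List.length_cons] at hlen
      have hst0 : st = [] := List.eq_nil_of_length_eq_zero (by omega)
      have htl0 : tl = [] := List.eq_nil_of_length_eq_zero (by omega)
      subst hst0; subst htl0
      simp only [List.nil_append, List.append_nil, List.cons.injEq] at hstl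
      obtain ⟨h1, h2, h3, -⟩ := hstl
      exact ⟨k, Or.inr rfl, by rw [h2]⟩
end

section
/- Let G be a DAG with a prefix node set S, and let w ∈ S̄ be a source node of S̄ (no ancestors in S̄). Then for any u ∈ V and v ∈ S̄ with u d-separated from v given S, u remains d-separated from v given S ∪ {w}. -/
/-!
An active path given `S ∪ {w}` is already active given `S`. Non-colliders outside `S ∪ {w}` are
outside `S`. A collider with an inclusive descendant in `S` is unaffected, and a collider `c ≠ w`
whose descendant is `w` is a strict ancestor of `w`, so lies in `S` itself. Finally `w` cannot be a
collider: its successor `b` on the path is a parent of `w`, hence in `S`; it is not the endpoint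
`v ∉ S`, so it is an interior vertex, a non-collider because `b → w` and `E` is acyclic, and
conditioning on it blocks the path.
-/

theorem List.IsInfix.getLast?_eq_or_infix_cons {α : Type*} {a c b : α} {p : List α}
    (h : [a, c, b] <:+: p) : p.getLast? = some b ∨ ∃ y, [c, b, y] <:+: p := by
  obtain ⟨s, t, rfl⟩ := h
  rcases t with _ | ⟨y, t⟩
  · simp
  · exact Or.inr ⟨y, s ++ [a], t, by simp⟩

namespace ActivePath

variable {V : Type*} {E : V → V → Prop} {C : Set V} {w v : V} {p : List V}

theorem source_not_collider (hacyc : AcyclicRel E) (hanc : Anc E w ⊆ C)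
    (hp : ActivePath E (C ∪ {w}) p) (hlast : p.getLast? = some v) (hv : v ∉ C)
    {a b : V} (hinf : [a, w, b] <:+: p) (hbw : E b w) : False := by
  have hbC : b ∈ C := hanc (Relation.TransGen.single hbw)
  rcases hinf.getLast?_eq_or_infix_cons with hb | ⟨y, hinf'⟩
  · exact hv (Option.some_injective _ (hlast.symm.trans hb) ▸ hbC)
  · have hb_noncollider : ¬(E w b ∧ E y b) := fun ⟨hwb, _⟩ =>
      hacyc w (Relation.TransGen.head hwb (Relation.TransGen.single hbw))
    exact hp.2.1 w b y hinf' hb_noncollider (Or.inl hbC)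

theorem of_union_source (hacyc : AcyclicRel E) (hanc : Anc E w ⊆ C)
    (hp : ActivePath E (C ∪ {w}) p) (hlast : p.getLast? = some v) (hv : v ∉ C) :
    ActivePath E C p := by
  refine ⟨hp.1, fun a c b hinf hnc hcC => hp.2.1 a c b hinf hnc (Or.inl hcC), ?_⟩
  intro a c b hinf hac hbc
  obtain ⟨d, hd | rfl, hcd⟩ := hp.2.2 a c b hinf hac hbc
  · exact ⟨d, hd, hcd⟩
  · rcases Relation.reflTransGen_iff_eq_or_transGen.mp hcd with rfl | hcw
    · exact (hp.source_not_collider hacyc hanc hlast hv hinf hbc).elim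
    · exact ⟨c, hanc hcw, Relation.ReflTransGen.refl⟩

end ActivePath

theorem stmt_9_general {V : Type*} (E : V → V → Prop) (hacyc : AcyclicRel E)
    (S : Set V) (w : V)
    (hsrc : Anc E w ∩ Sᶜ = ∅)
    (u v : V) (hv : v ∈ Sᶜ) (hsep : DSep E S u v) :
    DSep E (S ∪ {w}) u v := by
  have hanc : Anc E w ⊆ S := fun x hx => by
    by_contra hxS
    exact (hsrc ▸ ⟨hx, hxS⟩ : x ∈ (∅ : Set V))
  rintro ⟨p, hhead, hlast, hp⟩
  exact hsep ⟨p, hhead, hlast, hp.of_union_source hacyc hanc hlast hv⟩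

/-- Conditioning additionally on a source node of the complement of a prefix
node set cannot break a d-separation. -/
theorem stmt_9 {V : Type*} [Fintype V] (E : V → V → Prop) (hacyc : AcyclicRel E)
    (S : Set V) (hS : PrefixSet E S) (w : V) (hw : w ∈ Sᶜ)
    (hsrc : Anc E w ∩ Sᶜ = ∅)
    (u v : V) (hv : v ∈ Sᶜ) (hsep : DSep E S u v) :
    DSep E (S ∪ {w}) u v :=
  stmt_9_general E hacyc S w hsrc u v hv hsep
end

section
/- Let G be a DAG and S a set of nodes. Suppose for some u ∈ V, v ∈ V\S, and w ∈ V\S, u and v are d-separated given S but d-connected given S ∪ {w}. Then for every descendant x of w (inclusive), u and v are d-connected given S ∪ {x}. -/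
namespace Stmt10Aux
open List Relation

variable {V : Type*} {E : V → V → Prop} {S C : Set V}

lemma triple_rev {a t b : V} {p : List V} :
    [a, t, b] <:+: p.reverse ↔ [b, t, a] <:+: p := by
  rw [show [a,t,b] = [b,t,a].reverse from rfl]
  exact List.reverse_infix

lemma infix_triple_append {s t r : V} :
    ∀ (A B : List V), [s, t, r] <:+: A ++ B →
      [s, t, r] <:+: A ∨ [s, t, r] <:+: B ∨
      (∃ A' B', A = A' ++ [s, t] ∧ B = r :: B') ∨
      (∃ A' B', A = A' ++ [s] ∧ B = t :: r :: B') := by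
  intro A
  induction A with
  | nil => intro B h; exact Or.inr (Or.inl (by simpa using h))
  | cons c A ih =>
    intro B h
    rcases List.infix_cons_iff.mp (by simpa using h) with hpre | hrest
    · obtain ⟨rest, hres⟩ := hpre
      simp only [cons_append, cons.injEq] at hres
      obtain ⟨rfl, hres⟩ := hres
      match A, hres with
      | [], hres =>
        simp only [nil_append] at hres
        exact Or.inr (Or.inr (Or.inr ⟨[], rest, by simp, hres.symm⟩))
      | [t0], hres =>
        simp only [cons_append, nil_append, cons.injEq] at hres
        obtain ⟨rfl, hres⟩ := hres
        exact Or.inr (Or.inr (Or.inl ⟨[], rest, by simp, hres.symm⟩))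
      | t0 :: r0 :: A', hres =>
        simp only [cons_append, cons.injEq] at hres
        obtain ⟨rfl, rfl, _⟩ := hres
        exact Or.inl ⟨[], A', by simp⟩
    · rcases ih B hrest with h1 | h2 | ⟨A', B', hA', hB⟩ | ⟨A', B', hA', hB⟩
      · exact Or.inl (h1.trans ⟨[c], [], by simp⟩)
      · exact Or.inr (Or.inl h2)
      · exact Or.inr (Or.inr (Or.inl ⟨c :: A', B', by simp [hA'], hB⟩))
      · exact Or.inr (Or.inr (Or.inr ⟨c :: A', B', by simp [hA'], hB⟩))

lemma mem_tail_of_triple {s t r : V} {M : List V} (h : [s, t, r] <:+: M) : t ∈ M.tail := by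
  obtain ⟨γ, δ, hM⟩ := h
  cases γ with
  | nil => rw [← hM]; simp
  | cons g γ' => rw [← hM]; simp

lemma pair_left_of_triple {s t r : V} {M : List V} (h : [s, t, r] <:+: M) : [s, t] <:+: M :=
  List.IsInfix.trans ⟨[], [r], by simp⟩ h

lemma rel_of_chain'_infix {R : V → V → Prop} {s t : V} {M : List V}
    (hch : M.Chain' R) (h : [s, t] <:+: M) : R s t :=
  List.isChain_pair.mp (hch.infix h)

lemma chain'_glue {R : V → V → Prop} {A B : List V} {z : V}
    (hA : A.Chain' R) (hB : B.Chain' R) (hAz : A.getLast? = some z) (hBz : B.head? = some z) :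
    (A ++ B.tail).Chain' R := by
  cases B with
  | nil => simp at hBz
  | cons b B' =>
    obtain rfl : b = z := by simpa using hBz
    rw [List.Chain', List.isChain_append]
    refine ⟨hA, (List.isChain_cons.mp hB).2, ?_⟩
    intro a ha y hy
    rw [hAz] at ha
    obtain rfl : b = a := by simpa using ha
    exact (List.isChain_cons.mp hB).1 y hy

lemma glue_getLast {A B : List V} {z : V} (hA : A.getLast? = some z)
    (hB : B.head? = some z) : (A ++ B.tail).getLast? = B.getLast? := by
  cases B with
  | nil => simp at hB
  | cons b B' =>
    obtain rfl : b = z := by simpa using hB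
    cases B' with
    | nil => simpa using hA
    | cons c B'' =>
      rw [List.getLast?_cons_cons]
      rw [List.getLast?_append]
      simp only [List.tail_cons]
      cases h : (c :: B'').getLast? with
      | none => simp at h
      | some y => simp

lemma tail_append_left {m l : List V} (h : m ≠ []) : (m ++ l).tail = m.tail ++ l := by
  cases m with
  | nil => simp at h
  | cons a m' => simp

lemma head?_append_left {m l : List V} {z : V} (h : m.head? = some z) :
    (m ++ l).head? = some z := by
  cases m with
  | nil => simp at h
  | cons a m' => simpa using h


lemma rtg_list {c d : V} (h : Relation.ReflTransGen E c d) :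
    ∃ ν : List V, ν.head? = some c ∧ ν.getLast? = some d ∧ ν.Chain' E ∧
      ∀ z ∈ ν, Relation.ReflTransGen E c z := by
  induction h using Relation.ReflTransGen.head_induction_on with
  | refl =>
    refine ⟨[d], by simp, by simp, List.isChain_singleton _, ?_⟩
    intro z hz
    obtain rfl : z = d := by simpa using hz
    exact ReflTransGen.refl
  | @head a c' h' hrest ih =>
    obtain ⟨ν, hh, hl, hch, hmem⟩ := ih
    cases ν with
    | nil => simp at hh
    | cons e ν' =>
      obtain rfl : e = c' := by simpa using hh
      refine ⟨a :: e :: ν', by simp, by rw [List.getLast?_cons_cons]; exact hl, ?_, ?_⟩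
      · exact List.isChain_cons.mpr ⟨by simpa using h', hch⟩
      · intro z hz
        rcases List.mem_cons.mp hz with rfl | hz'
        · exact ReflTransGen.refl
        · exact ReflTransGen.head h' (hmem z hz')

lemma exists_first (P : V → V → V → Prop) (p : List V)
    (h : ∃ a t b, [a, t, b] <:+: p ∧ P a t b) :
    ∃ l1 a t b l2, p = l1 ++ [a, t, b] ++ l2 ∧ P a t b ∧
      ¬ ∃ a' t' b', [a', t', b'] <:+: (l1 ++ [a, t]) ∧ P a' t' b' := by
  obtain ⟨a, t, b, hinf, hP⟩ := h
  obtain ⟨l1, l2, hdec⟩ := hinf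
  by_cases hcl : ∃ a' t' b', [a', t', b'] <:+: (l1 ++ [a, t]) ∧ P a' t' b'
  · obtain ⟨m1, a', t', b', m2, hq, hP', hcl'⟩ := exists_first P (l1 ++ [a, t]) hcl
    refine ⟨m1, a', t', b', m2 ++ b :: l2, ?_, hP', hcl'⟩
    rw [← hdec]
    rw [show l1 ++ [a, t, b] ++ l2 = (l1 ++ [a, t]) ++ (b :: l2) by simp, hq]
    simp
  · exact ⟨l1, a, t, b, l2, hdec.symm, hP, hcl⟩
termination_by p.length
decreasing_by
  subst hdec
  simp

lemma active_reverse {p : List V} (h : ActivePath E C p) : ActivePath E C p.reverse := by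
  refine ⟨?_, ?_, ?_⟩
  · rw [List.Chain', List.isChain_reverse]
    exact h.1.imp (fun a b hab => hab.symm)
  · intro a t b hinf hnc
    exact h.2.1 b t a (triple_rev.mp hinf) (fun ⟨h1, h2⟩ => hnc ⟨h2, h1⟩)
  · intro a t b hinf h1 h2
    exact h.2.2 b t a (triple_rev.mp hinf) h2 h1

lemma dconn_comm {u v : V} (h : DConn E C u v) : DConn E C v u := by
  obtain ⟨p, hh, hl, hA⟩ := h
  exact ⟨p.reverse, by rw [List.head?_reverse]; exact hl,
    by rw [List.getLast?_reverse]; exact hh, active_reverse hA⟩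

lemma swap_witness {p : List V} {w x : V} (hdes : Relation.ReflTransGen E w x)
    (h : ActivePath E (S ∪ {w}) p)
    (hnb : ∀ a b, [a, x, b] <:+: p → E a x ∧ E b x) :
    ActivePath E (S ∪ {x}) p := by
  refine ⟨h.1, ?_, ?_⟩
  · intro a t b hinf hnc hmem
    rcases hmem with hS | hx
    · exact h.2.1 a t b hinf hnc (Or.inl hS)
    · obtain rfl : t = x := hx
      exact hnc (hnb a b hinf)
  · intro a t b hinf h1 h2
    obtain ⟨d, hd, htd⟩ := h.2.2 a t b hinf h1 h2
    rcases hd with hS | hw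
    · exact ⟨d, Or.inl hS, htd⟩
    · obtain rfl : d = w := hw
      exact ⟨x, Or.inr rfl, htd.trans hdes⟩

lemma active_S_of {p : List V} {w : V} (h : ActivePath E (S ∪ {w}) p)
    (hcol : ∀ a t b, [a, t, b] <:+: p → E a t → E b t → ∃ d ∈ S, Relation.ReflTransGen E t d) :
    ActivePath E S p :=
  ⟨h.1, fun a t b hi hn hmem => h.2.1 a t b hi hn (Or.inl hmem), hcol⟩

lemma sweep {p : List V} {w x : V}
    (hacyc : AcyclicRel E) (hA : ActivePath E (S ∪ {w}) p)
    (hdes : Relation.ReflTransGen E w x) :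
    ∀ (l1 : List V) (a b : V) (l2 : List V), p = l1 ++ a :: b :: l2 → E b a →
      Relation.ReflTransGen E x b → b ∉ S →
      (∃ s ∈ S, Relation.ReflTransGen E x s) ∨
      ((l1 ++ [a, b]).Chain' (fun s t => E t s) ∧ ∀ z ∈ (l1 ++ [a, b]).tail, z ∉ S) := by
  intro l1
  induction l1 using List.reverseRecOn with
  | nil =>
    intro a b l2 hp hba hxb hbS
    right
    refine ⟨List.isChain_pair.mpr hba, ?_⟩
    intro z hz
    obtain rfl : z = b := by simpa using hz
    exact hbS
  | append_singleton l1' a' ih =>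
    intro a b l2 hp hba hxb hbS
    have hp' : p = l1' ++ a' :: a :: (b :: l2) := by rw [hp]; simp
    have trip : [a', a, b] <:+: p := ⟨l1', l2, by rw [hp']; simp⟩
    have hxa : Relation.ReflTransGen E x a := hxb.tail hba
    by_cases hc : E a' a
    · obtain ⟨d, hd, hads⟩ := hA.2.2 a' a b trip hc hba
      rcases hd with hdS | hdw
      · exact Or.inl ⟨d, hdS, hxa.trans hads⟩
      · obtain rfl : d = w := hdw
        have hax : Relation.ReflTransGen E a x := hads.trans hdes
        have hTxa : Relation.TransGen E x a := Relation.TransGen.tail' hxb hba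
        exact absurd (Relation.TransGen.trans_right hax hTxa) (hacyc a)
    · have hnc : ¬ (E a' a ∧ E b a) := fun hh => hc hh.1
      have haS : a ∉ S ∪ {w} := hA.2.1 a' a b trip hnc
      have hadj : E a' a ∨ E a a' :=
        rel_of_chain'_infix (R := fun s t => E s t ∨ E t s) hA.1 (pair_left_of_triple trip)
      have haa' : E a a' := hadj.resolve_left hc
      rcases ih a' a (b :: l2) hp' haa' hxa (fun hS => haS (Or.inl hS)) with hL | ⟨hch, hmS⟩
      · exact Or.inl hL
      · right
        have hre : (l1' ++ [a']) ++ [a, b] = (l1' ++ [a', a]) ++ [b] := by simp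
        rw [hre]
        constructor
        · rw [List.Chain', List.isChain_append]
          refine ⟨hch, by simp, ?_⟩
          intro y hy z hz
          obtain rfl : b = z := by simpa using hz
          obtain rfl : a = y := by
            have hgl : (l1' ++ [a', a]).getLast? = some a := by simp
            rw [hgl] at hy
            simpa using hy
          exact hba
        · rw [tail_append_left (by simp)]
          intro z hz
          rcases List.mem_append.mp hz with h1 | h2
          · exact hmS z h1
          · obtain rfl : z = b := by simpa using h2
            exact hbS
lemma head?_of_eq_append {p m l : List V} {z : V} (hpm : p = m ++ l) (hmne : m ≠ [])
    (hh : p.head? = some z) : m.head? = some z := by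
  cases m with
  | nil => exact absurd rfl hmne
  | cons e m' =>
    rw [hpm] at hh
    simpa using hh

lemma out_contra {p : List V} {w x u' v' : V}
    (hacyc : AcyclicRel E) (hA : ActivePath E (S ∪ {w}) p)
    (hh : p.head? = some u') (hl : p.getLast? = some v')
    (hns : ¬ DConn E S u' v')
    (hAnS : ¬ ∃ s ∈ S, Relation.ReflTransGen E x s)
    (hdes : Relation.ReflTransGen E w x)
    (l1 l2' : List V) (a : V)
    (hp : p = l1 ++ a :: x :: l2') (hxa : E x a) (hxS : x ∉ S) : False := by
  rcases sweep hacyc hA hdes l1 a x l2' hp hxa Relation.ReflTransGen.refl hxS with hL | ⟨hch, hmS⟩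
  · exact hAnS hL
  set m : List V := l1 ++ [a, x] with hm
  have hpm : p = m ++ l2' := by rw [hp, hm]; simp
  have hmne : m ≠ [] := by rw [hm]; simp
  have hmlast : m.getLast? = some x := by rw [hm]; simp
  have hmhead : m.head? = some u' := by
    rw [hpm] at hh
    cases hm2 : m with
    | nil => rw [hm2] at hmne; exact absurd rfl hmne
    | cons e m' =>
      rw [hm2] at hh
      simpa using hh
  by_cases hbc : ∃ f c g, [f, c, g] <:+: p ∧ (E f c ∧ E g c ∧ ¬ ∃ d ∈ S, Relation.ReflTransGen E c d)
  case neg =>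
    apply hns
    refine ⟨p, by rw [hpm]; exact head?_append_left hmhead, hl, active_S_of hA ?_⟩
    intro f c g hi h1 h2
    by_contra hno
    exact hbc ⟨f, c, g, hi, h1, h2, hno⟩
  case pos =>
  obtain ⟨f0, c0, g0, hi0, h10, h20, hno0⟩ := hbc
  obtain ⟨m1, g, c, f, m2, hqdec, hPc, hclean⟩ :=
    exists_first (fun g c f => E f c ∧ E g c ∧ ¬ ∃ d ∈ S, Relation.ReflTransGen E c d) p.reverse
      ⟨g0, c0, f0, triple_rev.mpr hi0, h10, h20, hno0⟩
  obtain ⟨hfc, hgc, hnoc⟩ := hPc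
  have hpdec : p = m2.reverse ++ [f, c, g] ++ m1.reverse := by
    have h2 := congrArg List.reverse hqdec
    simpa using h2
  have hcG : ∀ s t r, [s, t, r] <:+: (c :: g :: m1.reverse) → E s t → E r t →
      ∃ d ∈ S, Relation.ReflTransGen E t d := by
    intro s t r hinf h1 h2
    by_contra hno
    apply hclean
    refine ⟨r, t, s, ?_, h1, h2, hno⟩
    have he : (m1 ++ [g, c]).reverse = c :: g :: m1.reverse := by simp
    rw [← he] at hinf
    exact triple_rev.mp hinf
  have hfcg : [f, c, g] <:+: p := ⟨m2.reverse, m1.reverse, by rw [hpdec]⟩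
  obtain ⟨d, hd, hcd⟩ := hA.2.2 f c g hfcg hfc hgc
  have hcw : Relation.ReflTransGen E c w := by
    rcases hd with hdS | hdw
    · exact absurd ⟨d, hdS, hcd⟩ hnoc
    · obtain rfl : d = w := hdw
      exact hcd
  have hcx : Relation.ReflTransGen E c x := hcw.trans hdes
  have hznS : ∀ z, Relation.ReflTransGen E c z → z ∉ S := fun z hz hzS => hnoc ⟨z, hzS, hz⟩
  have hcS : c ∉ S := hznS c Relation.ReflTransGen.refl
  obtain ⟨ν, hνh, hνl, hνch, hνmem⟩ := rtg_list hcx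
  have hνrevh : ν.reverse.head? = some x := by rw [List.head?_reverse]; exact hνl
  have hνrevl : ν.reverse.getLast? = some c := by rw [List.getLast?_reverse]; exact hνh
  have hνrevch : ν.reverse.Chain' (fun s t => E t s) := by
    rw [List.Chain', List.isChain_reverse]; exact hνch
  set M : List V := m ++ ν.reverse.tail with hM
  have hMch : M.Chain' (fun s t => E t s) := chain'_glue hch hνrevch hmlast hνrevh
  have hMlast : M.getLast? = some c := by
    rw [hM, glue_getLast hmlast hνrevh]
    exact hνrevl
  have hMhead : M.head? = some u' := by rw [hM]; exact head?_append_left hmhead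
  have hMtail : ∀ z ∈ M.tail, z ∉ S := by
    rw [hM, tail_append_left hmne]
    intro z hz
    rcases List.mem_append.mp hz with h1 | h2
    · exact hmS z h1
    · exact hznS z (hνmem z (List.mem_reverse.mp (List.mem_of_mem_tail h2)))
  set B0 : List V := m1.reverse with hB0
  have hsufp : (c :: g :: B0) <:+: p := ⟨m2.reverse ++ [f], [], by rw [hpdec, hB0]; simp⟩
  have hgB0 : (g :: B0) <:+: p := ⟨m2.reverse ++ [f, c], [], by rw [hpdec, hB0]; simp⟩
  set Q : List V := M ++ (g :: B0) with hQ
  have hQch : Q.Chain' (fun s t => E s t ∨ E t s) := by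
    rw [hQ, List.Chain', List.isChain_append]
    refine ⟨hMch.imp (fun s t h => Or.inr h), hA.1.infix hgB0, ?_⟩
    intro y hy z hz
    rw [hMlast] at hy
    obtain rfl : c = y := by simpa using hy
    obtain rfl : g = z := by simpa using hz
    exact Or.inr hgc
  have hQh : Q.head? = some u' := by rw [hQ]; exact head?_append_left hMhead
  have hgB0last : (g :: B0).getLast? = some v' := by
    have hpl : p.getLast? = (g :: B0).getLast? := by
      conv_lhs => rw [hpdec]
      rw [show m2.reverse ++ [f, c, g] ++ m1.reverse
            = (m2.reverse ++ [f, c]) ++ (g :: m1.reverse) by simp]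
      rw [List.getLast?_append]
      cases hgl : (g :: m1.reverse).getLast? with
      | none => simp at hgl
      | some y => simp
    rw [← hpl]
    exact hl
  have hQl : Q.getLast? = some v' := by
    rw [hQ, List.getLast?_append, hgB0last]
    rfl
  have hclass : ∀ s t r, [s, t, r] <:+: Q →
      (¬(E s t ∧ E r t) → t ∉ S) ∧
      (E s t → E r t → ∃ d ∈ S, Relation.ReflTransGen E t d) := by
    intro s t r hinf
    rw [hQ] at hinf
    rcases infix_triple_append M (g :: B0) hinf with h1 | h2 | h3 | h4
    · have hts : E t s := rel_of_chain'_infix (R := fun s t => E t s) hMch (pair_left_of_triple h1)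
      constructor
      · intro _
        exact hMtail t (mem_tail_of_triple h1)
      · intro h1' _
        exact absurd (Relation.TransGen.head hts (Relation.TransGen.single h1')) (hacyc t)
    · have hsufc : [s, t, r] <:+: (c :: g :: B0) := h2.trans ⟨[c], [], by simp⟩
      have hinp : [s, t, r] <:+: p := h2.trans hgB0
      exact ⟨fun hnc hmem => hA.2.1 s t r hinp hnc (Or.inl hmem),
             fun h1' h2' => hcG s t r hsufc h1' h2'⟩
    · obtain ⟨M', B', hM', hB'⟩ := h3
      obtain rfl : t = c := by
        have hx2 := hMlast
        rw [hM'] at hx2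
        simpa using hx2
      have hts : E t s := by
        have hpair : [s, t] <:+: M := by rw [hM']; exact ⟨M', [], by simp⟩
        exact rel_of_chain'_infix (R := fun s t => E t s) hMch hpair
      exact ⟨fun _ => hcS,
             fun h1' _ => absurd (Relation.TransGen.head hts (Relation.TransGen.single h1')) (hacyc t)⟩
    · obtain ⟨M', B', hM', hB'⟩ := h4
      have hsc : s = c := by
        have hx2 := hMlast
        rw [hM'] at hx2
        simpa using hx2
      have hsufc : [s, t, r] <:+: (c :: g :: B0) := by
        rw [hB']
        exact ⟨[], B', by rw [hsc]; simp⟩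
      have hinp : [s, t, r] <:+: p := hsufc.trans hsufp
      exact ⟨fun hnc hmem => hA.2.1 s t r hinp hnc (Or.inl hmem),
             fun h1' h2' => hcG s t r hsufc h1' h2'⟩
  exact hns ⟨Q, hQh, hQl, hQch,
    fun s t r hi hnc hmem => (hclass s t r hi).1 hnc hmem,
    fun s t r hi h1 h2 => (hclass s t r hi).2 h1 h2⟩

end Stmt10Aux

theorem stmt_10' {V : Type*} (E : V → V → Prop) (hacyc : AcyclicRel E)
    (S : Set V) (u v w : V) (hv : v ∉ S) (hw : w ∉ S)
    (hsep : ¬ DConn E S u v) (hconn : DConn E (S ∪ {w}) u v)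
    (x : V) (hdes : Relation.ReflTransGen E w x) :
    DConn E (S ∪ {x}) u v := by
  obtain ⟨p, hh, hl, hA⟩ := hconn
  by_cases hbad : ∃ a b, [a, x, b] <:+: p ∧ ¬(E a x ∧ E b x)
  case neg =>
    push_neg at hbad
    exact ⟨p, hh, hl, Stmt10Aux.swap_witness hdes hA hbad⟩
  case pos =>
  obtain ⟨a1, b1, hi1, hnc1⟩ := hbad
  have hxSW : x ∉ S ∪ {w} := hA.2.1 a1 x b1 hi1 hnc1
  have hxS : x ∉ S := fun h => hxSW (Or.inl h)
  have hAnS : ¬ ∃ s ∈ S, Relation.ReflTransGen E x s := by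
    rintro ⟨s, hs, hxs⟩
    apply hsep
    refine ⟨p, hh, hl, Stmt10Aux.active_S_of hA ?_⟩
    intro a t b hi h1 h2
    obtain ⟨d, hd, htd⟩ := hA.2.2 a t b hi h1 h2
    rcases hd with hdS | hdw
    · exact ⟨d, hdS, htd⟩
    · obtain rfl : d = w := hdw
      exact ⟨s, hs, (htd.trans hdes).trans hxs⟩
  obtain ⟨l1, a, t, b, l2, hdec, ⟨ht, hnc⟩, hclean⟩ :=
    Stmt10Aux.exists_first (fun a t b => x = t ∧ ¬(E a x ∧ E b x)) p ⟨a1, x, b1, hi1, rfl, hnc1⟩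
  subst ht
  by_cases hax : E a x
  case neg =>
    have hxa : E x a := by
      have hadj := Stmt10Aux.rel_of_chain'_infix (R := fun s t => E s t ∨ E t s) hA.1
        (Stmt10Aux.pair_left_of_triple (⟨l1, l2, by rw [hdec]⟩ : [a, x, b] <:+: p))
      exact hadj.resolve_left hax
    exact (Stmt10Aux.out_contra hacyc hA hh hl hsep hAnS hdes l1 (b :: l2) a
      (by rw [hdec]; simp) hxa hxS).elim
  case pos =>
  have hArev := Stmt10Aux.active_reverse hA
  have hhrev : p.reverse.head? = some v := by rw [List.head?_reverse]; exact hl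
  have hlrev : p.reverse.getLast? = some u := by rw [List.getLast?_reverse]; exact hh
  have hnsrev : ¬ DConn E S v u := fun h => hsep (Stmt10Aux.dconn_comm h)
  obtain ⟨r1, a', t', b', r2, hdec', ⟨ht', hnc'⟩, hclean'⟩ :=
    Stmt10Aux.exists_first (fun a t b => x = t ∧ ¬(E a x ∧ E b x)) p.reverse
      ⟨b1, x, a1, Stmt10Aux.triple_rev.mpr hi1, rfl, fun hu => hnc1 ⟨hu.2, hu.1⟩⟩
  subst ht'
  by_cases hax' : E a' x
  case neg =>
    have hxa' : E x a' := by
      have hadj := Stmt10Aux.rel_of_chain'_infix (R := fun s t => E s t ∨ E t s) hArev.1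
        (Stmt10Aux.pair_left_of_triple (⟨r1, r2, by rw [hdec']⟩ : [a', x, b'] <:+: p.reverse))
      exact hadj.resolve_left hax'
    exact (Stmt10Aux.out_contra hacyc hArev hhrev hlrev hnsrev hAnS hdes r1 (b' :: r2) a'
      (by rw [hdec']; simp) hxa' hxS).elim
  case pos =>
  -- the construction
  set P1 : List V := l1 ++ [a, x] with hP1def
  set P2 : List V := r1 ++ [a', x] with hP2def
  have hP1p : p = P1 ++ (b :: l2) := by rw [hdec, hP1def]; simp
  have hP2p : p.reverse = P2 ++ (b' :: r2) := by rw [hdec', hP2def]; simp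
  have hP1ne : P1 ≠ [] := by rw [hP1def]; simp
  have hP2ne : P2 ≠ [] := by rw [hP2def]; simp
  have hP1inf : P1 <:+: p := ⟨[], b :: l2, by rw [hP1p]; simp⟩
  have hP2inf : P2 <:+: p.reverse := ⟨[], b' :: r2, by rw [hP2p]; simp⟩
  have hP1last : P1.getLast? = some x := by rw [hP1def]; simp
  have hP2last : P2.getLast? = some x := by rw [hP2def]; simp
  have hP2rev : P2.reverse = x :: a' :: r1.reverse := by rw [hP2def]; simp
  have hP1h : P1.head? = some u := Stmt10Aux.head?_of_eq_append hP1p hP1ne hh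
  have hP2h : P2.head? = some v := Stmt10Aux.head?_of_eq_append hP2p hP2ne hhrev
  have hP2revh : P2.reverse.head? = some x := by rw [List.head?_reverse]; exact hP2last
  have hP2revl : P2.reverse.getLast? = some v := by rw [List.getLast?_reverse]; exact hP2h
  have hP2revch : P2.reverse.Chain' (fun s t => E s t ∨ E t s) := by
    rw [List.Chain', List.isChain_reverse]
    exact (hArev.1.infix hP2inf).imp (fun s t h => h.symm)
  set W : List V := P1 ++ (a' :: r1.reverse) with hWdef
  have hWtail : W = P1 ++ P2.reverse.tail := by rw [hWdef, hP2rev]; rfl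
  have hWh : W.head? = some u := by rw [hWdef]; exact Stmt10Aux.head?_append_left hP1h
  have hWl : W.getLast? = some v := by
    rw [hWtail, Stmt10Aux.glue_getLast hP1last hP2revh]
    exact hP2revl
  have hWch : W.Chain' (fun s t => E s t ∨ E t s) := by
    rw [hWtail]
    exact Stmt10Aux.chain'_glue (hA.1.infix hP1inf) hP2revch hP1last hP2revh
  have handler : ∀ s t r, [s, t, r] <:+: P2.reverse →
      (¬(E s t ∧ E r t) → t ∉ S ∪ {x}) ∧
      (E s t → E r t → ∃ d ∈ S ∪ {x}, Relation.ReflTransGen E t d) := by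
    intro s t r hinf
    have hrevtrip : [r, t, s] <:+: P2 := Stmt10Aux.triple_rev.mp hinf
    have hinprev : [r, t, s] <:+: p.reverse := hrevtrip.trans hP2inf
    constructor
    · intro hncx hmem
      rcases hmem with hS | hxx
      · exact hArev.2.1 r t s hinprev (fun hu => hncx ⟨hu.2, hu.1⟩) (Or.inl hS)
      · have hxt : x = t := (Set.mem_singleton_iff.mp hxx).symm
        exact hclean' ⟨r, t, s, hrevtrip, hxt, by rw [hxt]; exact fun hu => hncx ⟨hu.2, hu.1⟩⟩
    · intro h1 h2
      obtain ⟨d, hd, htd⟩ := hArev.2.2 r t s hinprev h2 h1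
      rcases hd with hdS | hdw
      · exact ⟨d, Or.inl hdS, htd⟩
      · obtain rfl : d = w := hdw
        exact ⟨x, Or.inr rfl, htd.trans hdes⟩
  have hclass : ∀ s t r, [s, t, r] <:+: W →
      (¬(E s t ∧ E r t) → t ∉ S ∪ {x}) ∧
      (E s t → E r t → ∃ d ∈ S ∪ {x}, Relation.ReflTransGen E t d) := by
    intro s t r hinf
    rw [hWdef] at hinf
    rcases Stmt10Aux.infix_triple_append P1 (a' :: r1.reverse) hinf with h1 | h2 | h3 | h4
    · have hinp : [s, t, r] <:+: p := h1.trans hP1inf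
      constructor
      · intro hncx hmem
        rcases hmem with hS | hxx
        · exact hA.2.1 s t r hinp hncx (Or.inl hS)
        · have hxt : x = t := (Set.mem_singleton_iff.mp hxx).symm
          exact hclean ⟨s, t, r, h1, hxt, by rw [hxt]; exact hncx⟩
      · intro h1' h2'
        obtain ⟨d, hd, htd⟩ := hA.2.2 s t r hinp h1' h2'
        rcases hd with hdS | hdw
        · exact ⟨d, Or.inl hdS, htd⟩
        · obtain rfl : d = w := hdw
          exact ⟨x, Or.inr rfl, htd.trans hdes⟩
    · exact handler s t r (h2.trans ⟨[x], [], by rw [hP2rev]; simp⟩)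
    · obtain ⟨A', B', hM', hB'⟩ := h3
      have ht2 : t = x := by
        have h5 := hP1last
        rw [hM'] at h5
        simpa using h5
      have hr2 : r = a' := by
        have h5 := hB'.symm
        simp only [List.cons.injEq] at h5
        exact h5.1
      have hs2 : s = a := by
        have h5 : l1 ++ [a, x] = A' ++ [s, t] := by rw [← hP1def, hM']
        have h6 := congrArg List.dropLast h5
        rw [show l1 ++ [a, x] = (l1 ++ [a]) ++ [x] by simp,
            show A' ++ [s, t] = (A' ++ [s]) ++ [t] by simp,
            List.dropLast_concat, List.dropLast_concat] at h6
        have h7 := congrArg List.getLast? h6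
        simp at h7
        exact h7.symm
      constructor
      · intro hncx
        exact (hncx ⟨by rw [hs2, ht2]; exact hax, by rw [hr2, ht2]; exact hax'⟩).elim
      · intro _ _
        exact ⟨x, Or.inr rfl, by rw [ht2]⟩
    · obtain ⟨A', B', hM', hB'⟩ := h4
      have hs2 : s = x := by
        have h5 := hP1last
        rw [hM'] at h5
        simpa using h5
      have ht2 : t = a' := by
        have h5 := hB'.symm
        simp only [List.cons.injEq] at h5
        exact h5.1
      have hr1r : r1.reverse = r :: B' := by
        have h5 := hB'.symm
        simp only [List.cons.injEq] at h5
        exact h5.2.symm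
      refine handler s t r ⟨[], B', ?_⟩
      rw [hP2rev, hs2, ht2, hr1r]
      simp
  exact ⟨W, hWh, hWl, hWch,
    fun s t r hi hnc2 hmem => (hclass s t r hi).1 hnc2 hmem,
    fun s t r hi h1 h2 => (hclass s t r hi).2 h1 h2⟩


/-- If conditioning on `w` d-connects a d-separated pair, so does conditioning
on any inclusive descendant `x` of `w`. -/
theorem stmt_10 {V : Type*} [Fintype V] (E : V → V → Prop) (hacyc : AcyclicRel E)
    (S : Set V) (u v w : V) (hv : v ∉ S) (hw : w ∉ S)
    (hsep : DSep E S u v) (hconn : DConn E (S ∪ {w}) u v)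
    (x : V) (hdes : Relation.ReflTransGen E w x) :
    DConn E (S ∪ {x}) u v := by
  exact stmt_10' E hacyc S u v w hv hw hsep hconn x hdes
end

section
/- Let A, B, C be disjoint subsets of the vertices of a DAG G. Then C d-separates A from B in G if and only if C separates A from B in the moral graph of the induced subgraph of G on Anc[A ∪ B ∪ C]. -/
/-- Moral-graph adjacency of the induced subgraph on `T`. -/
def MoralAdj {V : Type*} (E : V → V → Prop) (T : Set V) (a b : V) : Prop :=
  a ≠ b ∧ a ∈ T ∧ b ∈ T ∧ (E a b ∨ E b a ∨ ∃ c ∈ T, E a c ∧ E b c)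

/-- `C` separates `A` from `B` in the undirected graph `M`: every `M`-path
from a vertex of `A` to a vertex of `B` meets `C`. -/
def USep {V : Type*} (M : V → V → Prop) (A B C : Set V) : Prop :=
  ∀ (p : List V) (a b : V), p.head? = some a → p.getLast? = some b →
    a ∈ A → b ∈ B → p.Chain' M → ∃ x ∈ p, x ∈ C

namespace Stmt11

variable {V : Type*}

def sk (E : V → V → Prop) (a b : V) : Prop := E a b ∨ E b a

def reachC (E : V → V → Prop) (C : Set V) (w : V) : Prop :=
  ∃ d ∈ C, Relation.ReflTransGen E w d

def TT (E : V → V → Prop) (S : Set V) : Set V :=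
  {x | ∃ v ∈ S, Relation.ReflTransGen E x v}

def collCond (E : V → V → Prop) (C : Set V) (p : List V) : Prop :=
  ∀ x y z, [x, y, z] <:+: p → E x y → E z y → reachC E C y

lemma ne_of_edge {E : V → V → Prop} (h : AcyclicRel E) {a b : V} (hab : E a b) : a ≠ b := by
  rintro rfl; exact h a (Relation.TransGen.single hab)

lemma not_both {E : V → V → Prop} (h : AcyclicRel E) {a b : V} (hab : E a b) (hba : E b a) :
    False :=
  h a (Relation.TransGen.trans (Relation.TransGen.single hab) (Relation.TransGen.single hba))

lemma TT_closed {E : V → V → Prop} {S : Set V} {u v : V}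
    (huv : Relation.ReflTransGen E u v) (hv : v ∈ TT E S) : u ∈ TT E S := by
  obtain ⟨t, ht, hvt⟩ := hv
  exact ⟨t, ht, huv.trans hvt⟩

lemma mem_TT_self {E : V → V → Prop} {S : Set V} {v : V} (hv : v ∈ S) : v ∈ TT E S :=
  ⟨v, hv, Relation.ReflTransGen.refl⟩

variable {E : V → V → Prop} {C S : Set V}

open Classical in
noncomputable def pairInd (E : V → V → Prop) (x : V) : List V → ℕ
  | y :: _ => if sk E x y then 0 else 1
  | _ => 0

noncomputable def nu (E : V → V → Prop) : List V → ℕ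
  | [] => 0
  | x :: t => pairInd E x t + nu E t

open Classical in
noncomputable def triInd (E : V → V → Prop) (C : Set V) (x : V) : List V → ℕ
  | y :: z :: _ => if E x y ∧ E z y ∧ ¬ reachC E C y then 1 else 0
  | _ => 0

noncomputable def kappa (E : V → V → Prop) (C : Set V) : List V → ℕ
  | [] => 0
  | x :: t => triInd E C x t + kappa E C t


lemma nu_nil : nu E ([] : List V) = 0 := rfl

lemma kappa_nil : kappa E C ([] : List V) = 0 := rfl

lemma nu_cons (x : V) (t : List V) : nu E (x :: t) = pairInd E x t + nu E t := rfl

lemma kappa_cons (x : V) (t : List V) :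
    kappa E C (x :: t) = triInd E C x t + kappa E C t := rfl

open Classical in
lemma pairInd_cons (x y : V) (t : List V) :
    pairInd E x (y :: t) = if sk E x y then 0 else 1 := rfl

lemma pairInd_nil (x : V) : pairInd E x [] = 0 := rfl

open Classical in
lemma triInd_cons2 (x y z : V) (t : List V) :
    triInd E C x (y :: z :: t) = if E x y ∧ E z y ∧ ¬ reachC E C y then 1 else 0 := rfl

lemma triInd_nil (x : V) : triInd E C x [] = 0 := rfl

lemma triInd_single (x y : V) : triInd E C x [y] = 0 := rfl

lemma pairInd_congr (x : V) (pre : List V) (u : V) (s s' : List V) :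
    pairInd E x (pre ++ u :: s) = pairInd E x (pre ++ u :: s') := by
  cases pre <;> rfl

lemma triInd_congr (x : V) (pre : List V) (u w : V) (s s' : List V) :
    triInd E C x (pre ++ u :: w :: s) = triInd E C x (pre ++ u :: w :: s') := by
  rcases pre with _ | ⟨a, _ | ⟨b, pre⟩⟩ <;> rfl

lemma nu_split : ∀ (pre : List V) (x : V) (s : List V),
    nu E (pre ++ x :: s) = nu E (pre ++ [x]) + nu E (x :: s) := by
  intro pre
  induction pre with
  | nil => intro x s; simp [nu_cons, pairInd_nil, nu_nil]
  | cons a pre ih =>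
    intro x s
    have e1 : nu E ((a :: pre) ++ x :: s) = pairInd E a (pre ++ x :: s) + nu E (pre ++ x :: s) :=
      rfl
    have e2 : nu E ((a :: pre) ++ [x]) = pairInd E a (pre ++ [x]) + nu E (pre ++ [x]) := rfl
    rw [e1, e2, ih x s, pairInd_congr a pre x s []]
    omega

lemma kappa_split : ∀ (pre : List V) (x y : V) (s : List V),
    kappa E C (pre ++ x :: y :: s) = kappa E C (pre ++ [x, y]) + kappa E C (x :: y :: s) := by
  intro pre
  induction pre with
  | nil =>
    intro x y s
    simp [kappa_cons, triInd_nil, triInd_single, kappa_nil]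
  | cons a pre ih =>
    intro x y s
    have e1 : kappa E C ((a :: pre) ++ x :: y :: s)
        = triInd E C a (pre ++ x :: y :: s) + kappa E C (pre ++ x :: y :: s) := rfl
    have e2 : kappa E C ((a :: pre) ++ [x, y])
        = triInd E C a (pre ++ [x, y]) + kappa E C (pre ++ [x, y]) := rfl
    rw [e1, e2, ih x y s, triInd_congr a pre x y s []]
    omega

lemma nu_zero_of_chain : ∀ {l : List V}, l.Chain' (sk E) → nu E l = 0 := by
  intro l
  induction l with
  | nil => intro _; rfl
  | cons x t ih =>
    intro h
    have ht := h.tail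
    cases t with
    | nil => simp [nu_cons, pairInd_nil, nu_nil]
    | cons y t' =>
      have hxy : sk E x y := (List.isChain_cons_cons.1 h).1
      rw [nu_cons, pairInd_cons, if_pos hxy, ih ht]

lemma kappa_zero_of_dir (hacyc : AcyclicRel E) :
    ∀ {l : List V}, l.Chain' E → kappa E C l = 0 := by
  intro l
  induction l with
  | nil => intro _; rfl
  | cons x t ih =>
    intro h
    have ht := h.tail
    rcases t with _ | ⟨y, _ | ⟨z, t'⟩⟩
    · simp [kappa_cons, triInd_nil, kappa_nil]
    · simp [kappa_cons, triInd_nil, triInd_single, kappa_nil, ih ht]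
    · have hyz : E y z := (List.isChain_cons_cons.1 ht).1
      rw [kappa_cons, triInd_cons2, if_neg, ih ht]
      rintro ⟨-, hzy, -⟩
      exact not_both hacyc hyz hzy

lemma kappa_revdir (hacyc : AcyclicRel E) (v : V) (r : List V) :
    ∀ (m : List V), m.Chain' (flip E) → (∀ x ∈ m.getLast?, E v x) →
      kappa E C (m ++ v :: r) ≤ kappa E C (v :: r) := by
  intro m
  induction m with
  | nil => intro _ _; simp
  | cons x m ih =>
    intro hch hlast
    have e1 : kappa E C ((x :: m) ++ v :: r)
        = triInd E C x (m ++ v :: r) + kappa E C (m ++ v :: r) := rfl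
    have hz : triInd E C x (m ++ v :: r) = 0 := by
      cases m with
      | nil =>
        have hvx : E v x := hlast x (by simp)
        cases r with
        | nil => rfl
        | cons z r' =>
          rw [List.nil_append, triInd_cons2, if_neg]
          rintro ⟨hxv, -, -⟩
          exact not_both hacyc hxv hvx
      | cons y m' =>
        have hyx : E y x := (List.isChain_cons_cons.1 hch).1
        rcases hm : m' ++ v :: r with _ | ⟨z, t⟩
        · exact absurd hm (by simp)
        · rw [List.cons_append, hm, triInd_cons2, if_neg]
          rintro ⟨hxy, -, -⟩
          exact not_both hacyc hxy hyx
    have hrec : kappa E C (m ++ v :: r) ≤ kappa E C (v :: r) := by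
      cases m with
      | nil => simp
      | cons y m' =>
        refine ih hch.tail ?_
        intro w hw
        apply hlast
        rwa [List.getLast?_cons_cons]
    omega


lemma rtg_path {c t : V} (h : Relation.ReflTransGen E c t) :
    ∃ l : List V, l.head? = some c ∧ l.getLast? = some t ∧ l.Chain' E ∧
      ∀ x ∈ l, Relation.ReflTransGen E c x ∧ Relation.ReflTransGen E x t := by
  induction h using Relation.ReflTransGen.head_induction_on with
  | refl => exact ⟨[t], rfl, rfl, List.isChain_singleton t, by simp [Relation.ReflTransGen.refl]⟩
  | @head a c' h' h ih =>
    obtain ⟨l, hh, hl, hch, hmem⟩ := ih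
    cases l with
    | nil => simp at hh
    | cons x l' =>
      have hx : x = c' := by simpa using hh
      refine ⟨a :: x :: l', rfl, by rwa [List.getLast?_cons_cons], ?_, ?_⟩
      · exact List.isChain_cons_cons.2 ⟨hx ▸ h', hch⟩
      · intro y hy
        rcases List.mem_cons.1 hy with rfl | hy'
        · exact ⟨Relation.ReflTransGen.refl, Relation.ReflTransGen.head h' h⟩
        · obtain ⟨h1, h2⟩ := hmem y hy'
          exact ⟨Relation.ReflTransGen.head h' h1, h2⟩

lemma exists_bad_pair {R Q : V → V → Prop} : ∀ {p : List V}, p.Chain' Q → ¬ p.Chain' R →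
    ∃ pre u v r, p = pre ++ u :: v :: r ∧ Q u v ∧ ¬ R u v := by
  intro p
  induction p with
  | nil => intro _ h; exact absurd List.isChain_nil h
  | cons x t ih =>
    intro hQ hR
    cases t with
    | nil => exact absurd (List.isChain_singleton x) hR
    | cons y t' =>
      by_cases hxy : R x y
      · have hnt : ¬ (y :: t').Chain' R := fun h => hR (List.isChain_cons_cons.2 ⟨hxy, h⟩)
        obtain ⟨pre, u, v, r, heq, hQuv, hRuv⟩ := ih hQ.tail hnt
        exact ⟨x :: pre, u, v, r, by rw [heq]; rfl, hQuv, hRuv⟩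
      · exact ⟨[], x, y, t', rfl, (List.isChain_cons_cons.1 hQ).1, hxy⟩

lemma moral_of_edge (hacyc : AcyclicRel E) {u v : V} (hu : u ∈ TT E S) (hv : v ∈ TT E S)
    (h : sk E u v) : MoralAdj E (TT E S) u v := by
  rcases h with h | h
  · exact ⟨ne_of_edge hacyc h, hu, hv, Or.inl h⟩
  · exact ⟨(ne_of_edge hacyc h).symm, hu, hv, Or.inr (Or.inl h)⟩

lemma chain_sk_to_moral (hacyc : AcyclicRel E) :
    ∀ {p : List V}, p.Chain' (sk E) → (∀ x ∈ p, x ∈ TT E S) →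
      p.Chain' (MoralAdj E (TT E S)) := by
  intro p
  induction p with
  | nil => intro _ _; exact List.isChain_nil
  | cons x t ih =>
    intro hch hmem
    cases t with
    | nil => exact List.isChain_singleton x
    | cons y t' =>
      refine List.isChain_cons_cons.2 ⟨?_, ih hch.tail (fun z hz => hmem z (List.mem_cons_of_mem x hz))⟩
      exact moral_of_edge hacyc (hmem x (by simp)) (hmem y (by simp)) (List.isChain_cons_cons.1 hch).1

lemma forwardT (hacyc : AcyclicRel E) (hCS : C ⊆ S) :
    ∀ (t : List V) (u w : V), (u :: w :: t).Chain' (sk E) →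
    collCond E C (u :: w :: t) →
    (∀ b, (u :: w :: t).getLast? = some b → b ∈ TT E S) → E u w → u ∈ TT E S := by
  intro t
  induction t with
  | nil =>
    intro u w _ _ hlast huw
    exact TT_closed (Relation.ReflTransGen.single huw) (hlast w rfl)
  | cons y t' ih =>
    intro u w hch hcoll hlast huw
    rcases (List.isChain_cons_cons.1 hch.tail).1 with hwy | hyw
    · -- E w y : continue forward
      have hw : w ∈ TT E S := by
        refine ih w y hch.tail ?_ ?_ hwy
        · intro a b c hinf hab hcb
          exact hcoll a b c (hinf.trans (List.suffix_cons u _).isInfix) hab hcb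
        · intro b hb
          exact hlast b (by rwa [List.getLast?_cons_cons])
      exact TT_closed (Relation.ReflTransGen.single huw) hw
    · -- E y w : w is a collider
      have hreach : reachC E C w := hcoll u w y ⟨[], t', rfl⟩ huw hyw
      obtain ⟨d, hd, hwd⟩ := hreach
      exact TT_closed (Relation.ReflTransGen.single huw)
        (TT_closed hwd (mem_TT_self (hCS hd)))

lemma allT (hacyc : AcyclicRel E) (hCS : C ⊆ S) :
    ∀ (p : List V), p.Chain' (sk E) → collCond E C p →
    (∀ x, p.head? = some x → x ∈ TT E S) → (∀ x, p.getLast? = some x → x ∈ TT E S) →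
    ∀ v ∈ p, v ∈ TT E S := by
  intro p
  induction p with
  | nil => intro _ _ _ _ v hv; simp at hv
  | cons a t ih =>
    intro hch hcoll hhead hlast v hv
    rcases List.mem_cons.1 hv with rfl | hv'
    · exact hhead v rfl
    · cases t with
      | nil => simp at hv'
      | cons w t' =>
        have hwT : w ∈ TT E S := by
          rcases (List.isChain_cons_cons.1 hch).1 with haw | hwa
          · -- E a w
            cases t' with
            | nil => exact hlast w rfl
            | cons y t'' =>
              rcases (List.isChain_cons_cons.1 hch.tail).1 with hwy | hyw
              · refine forwardT hacyc hCS t'' w y hch.tail ?_ ?_ hwy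
                · intro x b c hinf hxb hcb
                  exact hcoll x b c (hinf.trans (List.suffix_cons a _).isInfix) hxb hcb
                · intro b hb
                  exact hlast b (by rwa [List.getLast?_cons_cons])
              · obtain ⟨d, hd, hwd⟩ := hcoll a w y ⟨[], t'', rfl⟩ haw hyw
                exact TT_closed hwd (mem_TT_self (hCS hd))
          · exact TT_closed (Relation.ReflTransGen.single hwa) (hhead a rfl)
        refine ih hch.tail ?_ ?_ ?_ v hv'
        · intro x b c hinf hxb hcb
          exact hcoll x b c (hinf.trans (List.suffix_cons a _).isInfix) hxb hcb
        · intro x hx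
          cases hx; exact hwT
        · intro x hx
          exact hlast x (by rwa [List.getLast?_cons_cons])

lemma contract (hacyc : AcyclicRel E) (hCS : C ⊆ S) :
    ∀ (n : ℕ) (p : List V), p.length ≤ n →
    p.Chain' (MoralAdj E (TT E S)) →
    (∀ x w y, [x, w, y] <:+: p → w ∈ C → E x w ∧ E y w) →
    ∀ a b, p.head? = some a → p.getLast? = some b → a ∉ C → b ∉ C →
    ∃ q : List V, q.Chain' (MoralAdj E (TT E S)) ∧ q.head? = some a ∧
      q.getLast? = some b ∧ ∀ x ∈ q, x ∉ C := by
  intro n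
  induction n with
  | zero =>
    intro p hlen _ _ a b hha _ _ _
    cases p with
    | nil => simp at hha
    | cons x t => simp at hlen
  | succ n ih =>
    intro p hlen hch tripC a b hha hlb haC hbC
    cases p with
    | nil => simp at hha
    | cons a' t =>
      have ha' : a = a' := (show a' = a by simpa using hha).symm
      subst ha'
      cases t with
      | nil =>
        have hb : a = b := by simpa using hlb
        subst hb
        exact ⟨[a], List.isChain_singleton a, rfl, rfl, by
          intro x hx; rcases List.mem_singleton.1 hx with rfl; exact haC⟩
      | cons w t' =>
        cases t' with
        | nil =>
          have hb : w = b := by simpa [eq_comm] using hlb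
          subst hb
          exact ⟨[a, w], hch, rfl, rfl, by
            intro x hx
            rcases List.mem_cons.1 hx with rfl | hx'
            · exact haC
            · rcases List.mem_singleton.1 hx' with rfl; exact hbC⟩
        | cons z t'' =>
          have hsuffix : (w :: z :: t'') <:+ (a :: w :: z :: t'') := List.suffix_cons a _
          have tripC' : ∀ x u y, [x, u, y] <:+: (w :: z :: t'') → u ∈ C → E x u ∧ E y u :=
            fun x u y hinf hu => tripC x u y (hinf.trans hsuffix.isInfix) hu
          have hlb' : (w :: z :: t'').getLast? = some b := by
            rwa [List.getLast?_cons_cons] at hlb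
          by_cases hwC : w ∈ C
          · obtain ⟨haw, hzw⟩ := tripC a w z ⟨[], t'', rfl⟩ hwC
            have hzC : z ∉ C := by
              intro hzC
              cases t'' with
              | nil =>
                have : z = b := by simpa using hlb
                exact hbC (this ▸ hzC)
              | cons y t3 =>
                obtain ⟨hwz, _⟩ := tripC w z y ⟨[a], t3, rfl⟩ hzC
                exact not_both hacyc hwz hzw
            by_cases haz : a = z
            · refine ih (z :: t'') ?_ hch.tail.tail ?_ a b ?_ ?_ haC hbC
              · simp at hlen ⊢; omega
              · intro x u y hinf hu
                exact tripC x u y (hinf.trans ((List.suffix_cons w _).trans hsuffix).isInfix) hu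
              · simp [haz]
              · rwa [List.getLast?_cons_cons] at hlb'
            · have haT : a ∈ TT E S := (List.isChain_cons_cons.1 hch).1.2.1
              have hzT : z ∈ TT E S := (List.isChain_cons_cons.1 hch.tail).1.2.2.1
              have hwT : w ∈ TT E S := mem_TT_self (hCS hwC)
              have hMaz : MoralAdj E (TT E S) a z :=
                ⟨haz, haT, hzT, Or.inr (Or.inr ⟨w, hwT, haw, hzw⟩)⟩
              refine ih (a :: z :: t'') ?_ (List.isChain_cons_cons.2 ⟨hMaz, hch.tail.tail⟩) ?_
                a b rfl ?_ haC hbC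
              · simp at hlen ⊢; omega
              · intro x u y hinf hu
                rcases List.infix_cons_iff.1 hinf with hpre | hinf'
                · obtain ⟨rfl, h2⟩ := List.cons_prefix_cons.1 hpre
                  obtain ⟨rfl, _⟩ := List.cons_prefix_cons.1 h2
                  exact absurd hu hzC
                · exact tripC x u y
                    (hinf'.trans ((List.suffix_cons w _).trans hsuffix).isInfix) hu
              · rw [List.getLast?_cons_cons]
                rwa [List.getLast?_cons_cons] at hlb'
          · obtain ⟨q, hqch, hqh, hql, hqC⟩ :=
              ih (w :: z :: t'') (by simp at hlen ⊢; omega) hch.tail tripC' w b rfl hlb' hwC hbC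
            cases q with
            | nil => simp at hqh
            | cons w' q' =>
              have hw' : w = w' := (show w' = w by simpa using hqh).symm
              subst hw'
              refine ⟨a :: w :: q', List.isChain_cons_cons.2 ⟨(List.isChain_cons_cons.1 hch).1, hqch⟩,
                rfl, ?_, ?_⟩
              · rwa [List.getLast?_cons_cons]
              · intro x hx
                rcases List.mem_cons.1 hx with rfl | hx'
                · exact haC
                · exact hqC x hx'

def goodEdge (E : V → V → Prop) (C : Set V) (u v : V) : Prop :=
  sk E u v ∨ ∃ c, E u c ∧ E v c ∧ reachC E C c

lemma getLast?_append' {l m : List V} {b : V} (h : m.getLast? = some b) :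
    (l ++ m).getLast? = some b := by
  rw [List.getLast?_append, h]; rfl

lemma head?_append_cons (pre : List V) (x : V) (s s' : List V) :
    (pre ++ x :: s).head? = (pre ++ x :: s').head? := by
  cases pre <;> rfl

lemma phase1 {A B : Set V} (hacyc : AcyclicRel E)
    (hS : S = A ∪ B ∪ C) :
    ∀ (n : ℕ) (p : List V) (a b : V), nu E p ≤ n →
    p.Chain' (MoralAdj E (TT E S)) → p.head? = some a → p.getLast? = some b →
    a ∈ A → b ∈ B → (∀ x ∈ p, x ∉ C) → (∀ x ∈ p, x ∈ TT E S) →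
    ∃ (q : List V) (a' b' : V), q.Chain' (MoralAdj E (TT E S)) ∧ q.Chain' (goodEdge E C) ∧
      q.head? = some a' ∧ q.getLast? = some b' ∧ a' ∈ A ∧ b' ∈ B ∧
      (∀ x ∈ q, x ∉ C) ∧ (∀ x ∈ q, x ∈ TT E S) := by
  intro n
  induction n with
  | zero =>
    intro p a b hnu hch hha hlb haA hbB hpC hpT
    by_cases hg : p.Chain' (goodEdge E C)
    · exact ⟨p, a, b, hch, hg, hha, hlb, haA, hbB, hpC, hpT⟩
    · exfalso
      obtain ⟨pre, u, v, r, rfl, hMuv, hguv⟩ := exists_bad_pair hch hg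
      have hnsk : ¬ sk E u v := fun h => hguv (Or.inl h)
      have : nu E (pre ++ u :: v :: r)
          = nu E (pre ++ [u]) + (pairInd E u (v :: r) + nu E (v :: r)) := by
        rw [nu_split pre u (v :: r)]; rfl
      rw [pairInd_cons, if_neg hnsk] at this
      omega
  | succ n ih =>
    intro p a b hnu hch hha hlb haA hbB hpC hpT
    by_cases hg : p.Chain' (goodEdge E C)
    · exact ⟨p, a, b, hch, hg, hha, hlb, haA, hbB, hpC, hpT⟩
    obtain ⟨pre, u, v, r, rfl, hMuv, hguv⟩ := exists_bad_pair hch hg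
    have hnsk : ¬ sk E u v := fun h => hguv (Or.inl h)
    have hnusplit : nu E (pre ++ u :: v :: r)
        = nu E (pre ++ [u]) + (pairInd E u (v :: r) + nu E (v :: r)) := by
      rw [nu_split pre u (v :: r)]; rfl
    rw [pairInd_cons, if_neg hnsk] at hnusplit
    rcases hMuv.2.2.2 with h | h | ⟨c, hcT, huc, hvc⟩
    · exact absurd (Or.inl h) hnsk
    · exact absurd (Or.inr h) hnsk
    have hcreach : ¬ reachC E C c := fun h => hguv (Or.inr ⟨c, huc, hvc, h⟩)
    obtain ⟨t, htS, hct⟩ := hcT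
    obtain ⟨l, lh, ll, lch, lmem⟩ := rtg_path hct
    have hlC : ∀ x ∈ l, x ∉ C := fun x hx hxC => hcreach ⟨x, hxC, (lmem x hx).1⟩
    have hlT : ∀ x ∈ l, x ∈ TT E S := fun x hx => ⟨t, htS, (lmem x hx).2⟩
    have hcT' : c ∈ TT E S := ⟨t, htS, hct⟩
    have hlne : l ≠ [] := by rintro rfl; simp at lh
    have htAB : t ∈ A ∪ B := by
      rw [hS] at htS
      rcases htS with h | h
      · exact h
      · exact absurd ⟨t, h, hct⟩ hcreach
    have hskchainl : l.Chain' (sk E) := lch.imp (fun a b h => Or.inl h)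
    have hvr_suffix : (v :: r) <:+ (pre ++ u :: v :: r) := ⟨pre ++ [u], by simp⟩
    have hvrC : ∀ x ∈ v :: r, x ∉ C := fun x hx => hpC x (hvr_suffix.subset hx)
    have hvrT : ∀ x ∈ v :: r, x ∈ TT E S := fun x hx => hpT x (hvr_suffix.subset hx)
    have hlbvr : (v :: r).getLast? = some b := by
      have h1 : (pre ++ u :: v :: r).getLast? = (u :: v :: r).getLast? := by
        rw [List.getLast?_append]; rfl
      rw [h1, List.getLast?_cons_cons] at hlb
      exact hlb
    rcases htAB with htA | htB
    · -- reroute the prefix : new path l.reverse ++ v :: r from t to b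
      set q := l.reverse ++ v :: r with hq
      have hrevsk : l.reverse.Chain' (sk E) := by
        show List.IsChain _ _; rw [List.isChain_reverse]
        exact lch.imp (fun a b h => Or.inr h)
      have hrevT : ∀ x ∈ l.reverse, x ∈ TT E S := fun x hx => hlT x (List.mem_reverse.1 hx)
      have hrevM : l.reverse.Chain' (MoralAdj E (TT E S)) := chain_sk_to_moral hacyc hrevsk hrevT
      have hrevlast : l.reverse.getLast? = some c := by rw [List.getLast?_reverse]; exact lh
      have hchq : q.Chain' (MoralAdj E (TT E S)) := by
        rw [hq]; show List.IsChain _ _; rw [List.isChain_append]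
        refine ⟨hrevM, hch.suffix hvr_suffix, ?_⟩
        intro x hx y hy
        rw [hrevlast] at hx
        cases hx
        cases hy
        exact moral_of_edge hacyc hcT' (hMuv.2.2.1) (Or.inr hvc)
      have hqC : ∀ x ∈ q, x ∉ C := by
        intro x hx
        rcases List.mem_append.1 hx with hx | hx
        · exact hlC x (List.mem_reverse.1 hx)
        · exact hvrC x hx
      have hqT : ∀ x ∈ q, x ∈ TT E S := by
        intro x hx
        rcases List.mem_append.1 hx with hx | hx
        · exact hrevT x hx
        · exact hvrT x hx
      have hnuq : nu E q ≤ n := by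
        have h1 : nu E q = nu E (l.reverse ++ [v]) + nu E (v :: r) := nu_split l.reverse v r
        have h2 : nu E (l.reverse ++ [v]) = 0 := by
          apply nu_zero_of_chain
          show List.IsChain _ _; rw [List.isChain_append]
          refine ⟨hrevsk, List.isChain_singleton v, ?_⟩
          intro x hx y hy
          rw [hrevlast] at hx; cases hx; cases hy
          exact Or.inr hvc
        omega
      have hqh : q.head? = some t := by
        rw [hq, List.head?_append, List.head?_reverse, ll]; rfl
      have hql : q.getLast? = some b := getLast?_append' hlbvr
      exact ih q t b hnuq hchq hqh hql htA hbB hqC hqT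
    · -- reroute the suffix : new path pre ++ u :: l from a to t
      set q := pre ++ u :: l with hq
      have hlM : l.Chain' (MoralAdj E (TT E S)) := chain_sk_to_moral hacyc hskchainl hlT
      have hulM : (u :: l).Chain' (MoralAdj E (TT E S)) := by
        cases l with
        | nil => exact absurd rfl hlne
        | cons c' l' =>
          have hc' : c' = c := by simpa using lh
          subst hc'
          exact List.isChain_cons_cons.2 ⟨moral_of_edge hacyc hMuv.2.1 hcT' (Or.inl huc), hlM⟩
      have hchq : q.Chain' (MoralAdj E (TT E S)) := by
        rw [hq]; show List.IsChain _ _; rw [List.isChain_append]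
        refine ⟨hch.prefix ⟨u :: v :: r, rfl⟩, hulM, ?_⟩
        intro x hx y hy
        have := (List.isChain_append.1 hch).2.2 x hx u (by cases l <;> rfl)
        cases hy
        exact this
      have hpreC : ∀ x ∈ pre ++ [u], x ∉ C := by
        intro x hx
        apply hpC
        rcases List.mem_append.1 hx with hx | hx
        · exact List.mem_append.2 (Or.inl hx)
        · cases List.mem_singleton.1 hx; simp
      have hpreT : ∀ x ∈ pre ++ [u], x ∈ TT E S := by
        intro x hx
        apply hpT
        rcases List.mem_append.1 hx with hx | hx
        · exact List.mem_append.2 (Or.inl hx)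
        · cases List.mem_singleton.1 hx; simp
      have hqC : ∀ x ∈ q, x ∉ C := by
        intro x hx
        rcases List.mem_append.1 hx with hx | hx
        · exact hpreC x (List.mem_append.2 (Or.inl hx))
        · rcases List.mem_cons.1 hx with rfl | hx
          · exact hpreC x (List.mem_append.2 (Or.inr (by simp)))
          · exact hlC x hx
      have hqT : ∀ x ∈ q, x ∈ TT E S := by
        intro x hx
        rcases List.mem_append.1 hx with hx | hx
        · exact hpreT x (List.mem_append.2 (Or.inl hx))
        · rcases List.mem_cons.1 hx with rfl | hx
          · exact hpreT x (List.mem_append.2 (Or.inr (by simp)))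
          · exact hlT x hx
      have hnuq : nu E q ≤ n := by
        have h1 : nu E q = nu E (pre ++ [u]) + nu E (u :: l) := nu_split pre u l
        have h2 : nu E (u :: l) = 0 := by
          apply nu_zero_of_chain
          cases l with
          | nil => exact List.isChain_singleton u
          | cons c' l' =>
            have hc' : c' = c := by simpa using lh
            subst hc'
            exact List.isChain_cons_cons.2 ⟨Or.inl huc, hskchainl⟩
        omega
      have hqh : q.head? = some a := by
        rw [hq]
        rw [head?_append_cons pre u l (v :: r)]
        exact hha
      have hql : q.getLast? = some t := by
        cases l with
        | nil => exact absurd rfl hlne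
        | cons c' l' =>
          have : (u :: c' :: l').getLast? = some t := by
            rw [List.getLast?_cons_cons]; exact ll
          exact getLast?_append' this
      exact ih q a t hnuq hchq hqh hql haA htB hqC hqT

lemma phase2 {A B : Set V} (hacyc : AcyclicRel E)
    (hS : S = A ∪ B ∪ C) :
    ∀ (n : ℕ) (p : List V) (a b : V), kappa E C p ≤ n →
    p.Chain' (goodEdge E C) → p.head? = some a → p.getLast? = some b →
    a ∈ A → b ∈ B → (∀ x ∈ p, x ∉ C) → (∀ x ∈ p, x ∈ TT E S) →
    ∃ (q : List V) (a' b' : V), q.Chain' (goodEdge E C) ∧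
      (∀ x w y, [x, w, y] <:+: q → E x w → E y w → reachC E C w) ∧
      q.head? = some a' ∧ q.getLast? = some b' ∧ a' ∈ A ∧ b' ∈ B ∧
      (∀ x ∈ q, x ∉ C) := by
  intro n
  induction n with
  | zero =>
    intro p a b hka hch hha hlb haA hbB hpC hpT
    by_cases hgood : ∀ x w y, [x, w, y] <:+: p → E x w → E y w → reachC E C w
    · exact ⟨p, a, b, hch, hgood, hha, hlb, haA, hbB, hpC⟩
    · exfalso
      push_neg at hgood
      obtain ⟨u, w, v, hinf, huw, hvw, hwre⟩ := hgood
      obtain ⟨pre, r, heq⟩ := hinf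
      rw [show pre ++ [u, w, v] ++ r = pre ++ u :: w :: v :: r by simp] at heq
      subst heq
      have h1 : kappa E C (pre ++ u :: w :: v :: r)
          = kappa E C (pre ++ [u, w]) + kappa E C (u :: w :: v :: r) :=
        kappa_split pre u w (v :: r)
      have h2 : kappa E C (u :: w :: v :: r)
          = triInd E C u (w :: v :: r) + kappa E C (w :: v :: r) := rfl
      rw [triInd_cons2, if_pos ⟨huw, hvw, hwre⟩] at h2
      omega
  | succ n ih =>
    intro p a b hka hch hha hlb haA hbB hpC hpT
    by_cases hgood : ∀ x w y, [x, w, y] <:+: p → E x w → E y w → reachC E C w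
    · exact ⟨p, a, b, hch, hgood, hha, hlb, haA, hbB, hpC⟩
    push_neg at hgood
    obtain ⟨u, w, v, hinf, huw, hvw, hwre⟩ := hgood
    obtain ⟨pre, r, heq⟩ := hinf
    rw [show pre ++ [u, w, v] ++ r = pre ++ u :: w :: v :: r by simp] at heq
    subst heq
    have h1 : kappa E C (pre ++ u :: w :: v :: r)
        = kappa E C (pre ++ [u, w]) + kappa E C (u :: w :: v :: r) :=
      kappa_split pre u w (v :: r)
    have h2 : kappa E C (u :: w :: v :: r)
        = triInd E C u (w :: v :: r) + (triInd E C w (v :: r) + kappa E C (v :: r)) := rfl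
    rw [triInd_cons2, if_pos ⟨huw, hvw, hwre⟩] at h2
    have hwT : w ∈ TT E S := hpT w (by simp)
    obtain ⟨t, htS, hwt⟩ := hwT
    obtain ⟨l, lh, ll, lch, lmem⟩ := rtg_path hwt
    have hlC : ∀ x ∈ l, x ∉ C := fun x hx hxC => hwre ⟨x, hxC, (lmem x hx).1⟩
    have hlT : ∀ x ∈ l, x ∈ TT E S := fun x hx => ⟨t, htS, (lmem x hx).2⟩
    have hlne : l ≠ [] := by rintro rfl; simp at lh
    have htAB : t ∈ A ∪ B := by
      rw [hS] at htS
      rcases htS with h | h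
      · exact h
      · exact absurd ⟨t, h, hwt⟩ hwre
    have hskchainl : l.Chain' (sk E) := lch.imp (fun a b h => Or.inl h)
    have hvr_suffix : (v :: r) <:+ (pre ++ u :: w :: v :: r) := ⟨pre ++ [u, w], by simp⟩
    have hvrC : ∀ x ∈ v :: r, x ∉ C := fun x hx => hpC x (hvr_suffix.subset hx)
    have hvrT : ∀ x ∈ v :: r, x ∈ TT E S := fun x hx => hpT x (hvr_suffix.subset hx)
    have hlbvr : (v :: r).getLast? = some b := by
      have hh : (pre ++ u :: w :: v :: r).getLast? = (u :: w :: v :: r).getLast? := by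
        rw [List.getLast?_append]; rfl
      rw [hh, List.getLast?_cons_cons, List.getLast?_cons_cons] at hlb
      exact hlb
    rcases htAB with htA | htB
    · -- reroute the prefix : q = l.reverse ++ v :: r from t to b
      set q := l.reverse ++ v :: r with hq
      have hrevflip : l.reverse.Chain' (flip E) := by
        show List.IsChain _ _; rw [List.isChain_reverse]
        exact lch
      have hrevlast : l.reverse.getLast? = some w := by rw [List.getLast?_reverse]; exact lh
      have hchq : q.Chain' (goodEdge E C) := by
        rw [hq]; show List.IsChain _ _; rw [List.isChain_append]
        refine ⟨hrevflip.imp (fun a b h => Or.inl (Or.inr h)), hch.suffix hvr_suffix, ?_⟩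
        intro x hx y hy
        rw [hrevlast] at hx
        cases hx; cases hy
        exact Or.inl (Or.inr hvw)
      have hqC : ∀ x ∈ q, x ∉ C := by
        intro x hx
        rcases List.mem_append.1 hx with hx | hx
        · exact hlC x (List.mem_reverse.1 hx)
        · exact hvrC x hx
      have hqT : ∀ x ∈ q, x ∈ TT E S := by
        intro x hx
        rcases List.mem_append.1 hx with hx | hx
        · exact hlT x (List.mem_reverse.1 hx)
        · exact hvrT x hx
      have hkq : kappa E C q ≤ n := by
        have hle : kappa E C q ≤ kappa E C (v :: r) := by
          apply kappa_revdir hacyc v r l.reverse hrevflip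
          intro x hx
          rw [hrevlast] at hx
          cases hx
          exact hvw
        omega
      have hqh : q.head? = some t := by
        rw [hq, List.head?_append, List.head?_reverse, ll]; rfl
      have hql : q.getLast? = some b := getLast?_append' hlbvr
      exact ih q t b hkq hchq hqh hql htA hbB hqC hqT
    · -- reroute the suffix : q = pre ++ u :: l from a to t
      set q := pre ++ u :: l with hq
      obtain ⟨w', l'⟩ := List.exists_cons_of_ne_nil hlne
      obtain ⟨l', rfl⟩ := l'
      have hw'' : w = w' := (show w' = w by simpa using lh).symm
      subst hw''
      have hulch : (u :: w :: l').Chain' E := List.isChain_cons_cons.2 ⟨huw, lch⟩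
      have hchq : q.Chain' (goodEdge E C) := by
        rw [hq]; show List.IsChain _ _; rw [List.isChain_append]
        refine ⟨hch.prefix ⟨u :: w :: v :: r, rfl⟩,
          hulch.imp (fun a b h => Or.inl (Or.inl h)), ?_⟩
        intro x hx y hy
        have := (List.isChain_append.1 hch).2.2 x hx u rfl
        cases hy
        exact this
      have hqC : ∀ x ∈ q, x ∉ C := by
        intro x hx
        rcases List.mem_append.1 hx with hx | hx
        · exact hpC x (List.mem_append.2 (Or.inl hx))
        · rcases List.mem_cons.1 hx with rfl | hx
          · exact hpC x (by simp)
          · exact hlC x hx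
      have hqT : ∀ x ∈ q, x ∈ TT E S := by
        intro x hx
        rcases List.mem_append.1 hx with hx | hx
        · exact hpT x (List.mem_append.2 (Or.inl hx))
        · rcases List.mem_cons.1 hx with rfl | hx
          · exact hpT x (by simp)
          · exact hlT x hx
      have hkq : kappa E C q ≤ n := by
        have hsplit : kappa E C q = kappa E C (pre ++ [u, w]) + kappa E C (u :: w :: l') :=
          kappa_split pre u w l'
        have hz : kappa E C (u :: w :: l') = 0 := kappa_zero_of_dir hacyc hulch
        omega
      have hqh : q.head? = some a := by
        rw [hq, head?_append_cons pre u (w :: l') (w :: v :: r)]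
        exact hha
      have hql : q.getLast? = some t := by
        have : (u :: w :: l').getLast? = some t := by
          rw [List.getLast?_cons_cons]; exact ll
        exact getLast?_append' this
      exact ih q a t hkq hchq hqh hql haA htB hqC hqT

lemma no_triple_of_singleton {x w y a : V} (h : [x, w, y] <:+: [a]) : False := by
  have := h.length_le
  simp at this

lemma expand (hacyc : AcyclicRel E) :
    ∀ (n : ℕ) (p : List V) (a b : V), p.length ≤ n → p.Chain' (goodEdge E C) →
    (∀ x ∈ p, x ∉ C) →
    (∀ x w y, [x, w, y] <:+: p → E x w → E y w → reachC E C w) →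
    p.head? = some a → p.getLast? = some b →
    ∃ q : List V, ActivePath E C q ∧ q.head? = some a ∧ q.getLast? = some b ∧
      (∀ y s, q = a :: y :: s → (E a y ∨ (E y a ∧ p.tail.head? = some y))) := by
  intro n
  induction n with
  | zero =>
    intro p a b hlen hch hpC htrip hha hlb
    cases p with
    | nil => simp at hha
    | cons x t => simp at hlen
  | succ n ih =>
    intro p a b hlen hch hpC htrip hha hlb
    cases p with
    | nil => simp at hha
    | cons a' t =>
      have ha' : a = a' := (show a' = a by simpa using hha).symm
      subst ha'
      cases t with
      | nil =>
        have hb : a = b := by simpa using hlb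
        subst hb
        refine ⟨[a], ⟨List.isChain_singleton a, ?_, ?_⟩, rfl, rfl, ?_⟩
        · intro x w y hinf _
          exact absurd hinf (fun h => no_triple_of_singleton h)
        · intro x w y hinf _ _
          exact absurd hinf (fun h => no_triple_of_singleton h)
        · intro y s h
          simp at h
      | cons v t =>
        have hgood : goodEdge E C a v := (List.isChain_cons_cons.1 hch).1
        have hsuf : (v :: t) <:+ (a :: v :: t) := List.suffix_cons a _
        obtain ⟨q', hact', hh', hl', hinv'⟩ :=
          ih (v :: t) v b (by simp at hlen ⊢; omega) hch.tail
            (fun x hx => hpC x (hsuf.subset hx))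
            (fun x w y hinf hxw hyw => htrip x w y (hinf.trans hsuf.isInfix) hxw hyw)
            rfl (by rwa [List.getLast?_cons_cons] at hlb)
        cases q' with
        | nil => simp at hh'
        | cons v' q'' =>
          have hv' : v = v' := (show v' = v by simpa using hh').symm
          subst hv'
          rcases hgood with hsk | ⟨c, hac, hvc, hcreach⟩
          · -- skeleton edge a-v
            refine ⟨a :: v :: q'', ⟨List.isChain_cons_cons.2 ⟨hsk, hact'.1⟩, ?_, ?_⟩, rfl,
              by rwa [List.getLast?_cons_cons], ?_⟩
            · -- non-collider condition
              intro x w y hinf hnc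
              rcases List.infix_cons_iff.1 hinf with hpre | hinf'
              · obtain ⟨rfl, h2⟩ := List.cons_prefix_cons.1 hpre
                obtain ⟨rfl, _⟩ := List.cons_prefix_cons.1 h2
                exact hpC w (by simp)
              · exact hact'.2.1 x w y hinf' hnc
            · -- collider condition
              intro x w y hinf hxw hyw
              rcases List.infix_cons_iff.1 hinf with hpre | hinf'
              · obtain ⟨rfl, h2⟩ := List.cons_prefix_cons.1 hpre
                obtain ⟨rfl, h3⟩ := List.cons_prefix_cons.1 h2
                obtain ⟨s, hs⟩ := h3
                rcases hinv' y s (by rw [← hs]; rfl) with hvy | ⟨hyv, hth⟩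
                · exact absurd hyw (fun h => not_both hacyc hvy h)
                · cases t with
                  | nil => simp at hth
                  | cons y' t₂ =>
                    have hy : y' = y := by simpa using hth
                    exact htrip x w y ⟨[], t₂, by simp [hy]⟩ hxw hyw
              · exact hact'.2.2 x w y hinf' hxw hyw
            · intro y s h
              have hy : y = v := by
                have := congrArg (fun l => List.head? (List.tail l)) h
                simpa using this.symm
              subst hy
              rcases hsk with h1 | h1
              · exact Or.inl h1
              · exact Or.inr ⟨h1, rfl⟩
          · -- married edge via child c
            refine ⟨a :: c :: v :: q'',
              ⟨List.isChain_cons_cons.2 ⟨Or.inl hac, List.isChain_cons_cons.2 ⟨Or.inr hvc, hact'.1⟩⟩,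
                ?_, ?_⟩, rfl, by rw [List.getLast?_cons_cons, List.getLast?_cons_cons]; exact hl', ?_⟩
            · intro x w y hinf hnc
              rcases List.infix_cons_iff.1 hinf with hpre | hinf'
              · obtain ⟨rfl, h2⟩ := List.cons_prefix_cons.1 hpre
                obtain ⟨rfl, h3⟩ := List.cons_prefix_cons.1 h2
                obtain ⟨rfl, _⟩ := List.cons_prefix_cons.1 h3
                exact absurd ⟨hac, hvc⟩ hnc
              rcases List.infix_cons_iff.1 hinf' with hpre | hinf''
              · obtain ⟨rfl, h2⟩ := List.cons_prefix_cons.1 hpre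
                obtain ⟨rfl, _⟩ := List.cons_prefix_cons.1 h2
                exact hpC w (by simp)
              · exact hact'.2.1 x w y hinf'' hnc
            · intro x w y hinf hxw hyw
              rcases List.infix_cons_iff.1 hinf with hpre | hinf'
              · obtain ⟨rfl, h2⟩ := List.cons_prefix_cons.1 hpre
                obtain ⟨rfl, _⟩ := List.cons_prefix_cons.1 h2
                exact hcreach
              rcases List.infix_cons_iff.1 hinf' with hpre | hinf''
              · obtain ⟨rfl, h2⟩ := List.cons_prefix_cons.1 hpre
                obtain ⟨rfl, _⟩ := List.cons_prefix_cons.1 h2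
                exact absurd hxw (fun h => not_both hacyc hvc h)
              · exact hact'.2.2 x w y hinf'' hxw hyw
            · intro y s h
              have hy : y = c := by
                have := congrArg (fun l => List.head? (List.tail l)) h
                simpa using this.symm
              subst hy
              exact Or.inl hac

lemma memT_chainM {T : Set V} : ∀ {p : List V}, p.Chain' (MoralAdj E T) → 2 ≤ p.length →
    ∀ x ∈ p, x ∈ T := by
  intro p
  induction p with
  | nil => intro _ h; simp at h
  | cons x t ih =>
    intro hch hlen z hz
    cases t with
    | nil => simp at hlen
    | cons y t' =>
      rcases List.mem_cons.1 hz with rfl | hz'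
      · exact (List.isChain_cons_cons.1 hch).1.2.1
      · cases t' with
        | nil =>
          rcases List.mem_singleton.1 hz' with rfl
          exact (List.isChain_cons_cons.1 hch).1.2.2.1
        | cons u t'' => exact ih hch.tail (by simp) z hz'

end Stmt11

/-- `C` d-separates `A` from `B` in a DAG `G` iff `C` separates `A` from `B`
in the moral graph of the induced subgraph of `G` on `Anc[A ∪ B ∪ C]`. -/
theorem stmt_11 {V : Type*} [Fintype V] (E : V → V → Prop) (hacyc : AcyclicRel E)
    (A B C : Set V)
    (hAB : Disjoint A B) (hAC : Disjoint A C) (hBC : Disjoint B C) :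
    (∀ a ∈ A, ∀ b ∈ B, DSep E C a b) ↔
      USep (MoralAdj E {x | ∃ v ∈ A ∪ B ∪ C, Relation.ReflTransGen E x v}) A B C := by
  classical
  constructor
  · -- d-separation implies separation in the moral graph
    intro h p a b hh hl haA hbB hch
    by_contra hCn
    push_neg at hCn
    have hchM : p.Chain' (MoralAdj E (Stmt11.TT E (A ∪ B ∪ C))) := hch
    have hlen2 : 2 ≤ p.length := by
      rcases p with _ | ⟨a', _ | ⟨y, t⟩⟩
      · simp at hh
      · exfalso
        have h1 : a' = a := by simpa using hh
        have h2 : a' = b := by simpa using hl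
        have hab : a = b := h1 ▸ h2
        exact Set.disjoint_left.1 hAB haA (hab ▸ hbB)
      · simp
    have hpT : ∀ x ∈ p, x ∈ Stmt11.TT E (A ∪ B ∪ C) := Stmt11.memT_chainM hchM hlen2
    obtain ⟨q1, a1, b1, hq1M, hq1g, hq1h, hq1l, ha1, hb1, hq1C, hq1T⟩ :=
      Stmt11.phase1 hacyc rfl (Stmt11.nu E p) p a b le_rfl hchM hh hl haA hbB hCn hpT
    obtain ⟨q2, a2, b2, hq2g, hq2trip, hq2h, hq2l, ha2, hb2, hq2C⟩ :=
      Stmt11.phase2 hacyc rfl (Stmt11.kappa E C q1) q1 a1 b1 le_rfl hq1g hq1h hq1l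
        ha1 hb1 hq1C hq1T
    obtain ⟨q3, hact, hq3h, hq3l, -⟩ :=
      Stmt11.expand hacyc q2.length q2 a2 b2 le_rfl hq2g hq2C hq2trip hq2h hq2l
    exact h a2 ha2 b2 hb2 ⟨q3, hq3h, hq3l, hact⟩
  · -- separation in the moral graph implies d-separation
    intro h a haA b hbB hconn
    obtain ⟨p, hh, hl, hact⟩ := hconn
    have hCsub : C ⊆ A ∪ B ∪ C := Set.subset_union_right
    have hT : ∀ v ∈ p, v ∈ Stmt11.TT E (A ∪ B ∪ C) := by
      refine Stmt11.allT hacyc hCsub p hact.1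
        (fun x y z hinf h1 h2 => hact.2.2 x y z hinf h1 h2) ?_ ?_
      · intro x hx
        have hxa : x = a := by rw [hh] at hx; exact (Option.some.inj hx).symm
        subst hxa
        exact Stmt11.mem_TT_self (Set.mem_union_left _ (Set.mem_union_left _ haA))
      · intro x hx
        have hxb : x = b := by rw [hl] at hx; exact (Option.some.inj hx).symm
        subst hxb
        exact Stmt11.mem_TT_self (Set.mem_union_left _ (Set.mem_union_right _ hbB))
    have hchM := Stmt11.chain_sk_to_moral hacyc hact.1 hT
    have tripC : ∀ x w y, [x, w, y] <:+: p → w ∈ C → E x w ∧ E y w := by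
      intro x w y hinf hwC
      by_contra hne
      exact hact.2.1 x w y hinf hne hwC
    obtain ⟨q, hqM, hqh, hql, hqC⟩ :=
      Stmt11.contract hacyc hCsub p.length p le_rfl hchM tripC a b hh hl
        (Set.disjoint_left.1 hAC haA) (Set.disjoint_left.1 hBC hbB)
    obtain ⟨x, hxq, hxC⟩ := h q a b hqh hql haA hbB hqM
    exact hqC x hxq hxC
end

section
/- In a chordal undirected graph, every minimal vertex separator between two non-adjacent vertices is a clique. -/
open SimpleGraph Walk

section Aux

variable {V : Type*} {G : SimpleGraph V}

private lemma edge_of_length_one {u v : V} (p : G.Walk u v) (h : p.length = 1) :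
    s(u, v) ∈ p.edges := by
  cases p with
  | nil => simp at h
  | cons h' q =>
    cases q with
    | nil => simp
    | cons h'' q' => simp [Walk.length_cons] at h

private lemma shortcut {x y c d : V} (p₁ : G.Walk x c) (p₂ : G.Walk c d) (p₃ : G.Walk d y)
    (h : G.Adj c d) :
    s(c, d) ∈ p₂.edges ∨
      ∃ q : G.Walk x y, q.length < (p₁.append (p₂.append p₃)).length ∧
        ∀ u ∈ q.support, u ∈ (p₁.append (p₂.append p₃)).support := by
  obtain h0 | h1 | h2 : p₂.length = 0 ∨ p₂.length = 1 ∨ 2 ≤ p₂.length := by omega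
  · exact absurd (Walk.eq_of_length_eq_zero h0) h.ne
  · exact Or.inl (edge_of_length_one p₂ h1)
  · refine Or.inr ⟨p₁.append (Walk.cons h p₃), ?_, ?_⟩
    · simp only [Walk.length_append, Walk.length_cons]
      omega
    · intro u hu
      rw [Walk.mem_support_append_iff] at hu ⊢
      rcases hu with hu | hu
      · exact Or.inl hu
      · right
        rw [Walk.mem_support_append_iff]
        rw [Walk.support_cons] at hu
        rcases List.mem_cons.mp hu with rfl | hu
        · exact Or.inl p₂.start_mem_support
        · exact Or.inr hu

private lemma exists_geodesic [DecidableEq V] {x y : V} (I : V → Prop)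
    (hex : ∃ p : G.Walk x y, p.IsPath ∧ ∀ u ∈ p.support, u ≠ x → u ≠ y → I u) :
    ∃ p : G.Walk x y, p.IsPath ∧ (∀ u ∈ p.support, u ≠ x → u ≠ y → I u) ∧
      ∀ u ∈ p.support, ∀ v ∈ p.support, G.Adj u v → s(u, v) ∈ p.edges := by
  classical
  obtain ⟨p0, hp0⟩ := hex
  have hPex : ∃ n, ∃ p : G.Walk x y,
      (p.IsPath ∧ ∀ u ∈ p.support, u ≠ x → u ≠ y → I u) ∧ p.length = n :=
    ⟨p0.length, p0, hp0, rfl⟩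
  obtain ⟨p, hp, hplen⟩ := Nat.find_spec hPex
  have hminlen : ∀ q : G.Walk x y, q.IsPath →
      (∀ u ∈ q.support, u ≠ x → u ≠ y → I u) → p.length ≤ q.length := by
    intro q hq hqI
    rw [hplen]
    exact Nat.find_min' hPex ⟨q, ⟨hq, hqI⟩, rfl⟩
  refine ⟨p, hp.1, hp.2, ?_⟩
  have key : ∀ {c d : V} (p₁ : G.Walk x c) (p₂ : G.Walk c d) (p₃ : G.Walk d y),
      G.Adj c d → p₁.append (p₂.append p₃) = p → s(c, d) ∈ p.edges := by
    intro c d p₁ p₂ p₃ hcd hdec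
    rcases shortcut p₁ p₂ p₃ hcd with he | ⟨q, hql, hqs⟩
    · rw [← hdec]
      simp only [Walk.edges_append, List.mem_append]
      tauto
    · exfalso
      rw [hdec] at hql hqs
      have h1 : p.length ≤ q.bypass.length := by
        refine hminlen q.bypass q.bypass_isPath ?_
        intro u hu hux huy
        exact hp.2 u (hqs _ (q.support_bypass_subset hu)) hux huy
      have h2 := q.length_bypass_le
      omega
  intro u hu v hv huv
  by_cases hc : v ∈ (p.dropUntil u hu).support
  · exact key (p.takeUntil u hu) ((p.dropUntil u hu).takeUntil v hc)
      ((p.dropUntil u hu).dropUntil v hc) huv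
      (by rw [Walk.take_spec, Walk.take_spec])
  · have hvt : v ∈ (p.takeUntil u hu).support := by
      have h' := hv
      rw [← Walk.take_spec p hu, Walk.mem_support_append_iff] at h'
      tauto
    have h' := key ((p.takeUntil u hu).takeUntil v hvt)
      ((p.takeUntil u hu).dropUntil v hvt) (p.dropUntil u hu) huv.symm
      (by rw [Walk.append_assoc, Walk.take_spec, Walk.take_spec])
    rwa [Sym2.eq_swap] at h'

private lemma exists_legs [DecidableEq V] {a b : V} {W : Set V}
    (hsep : ∀ p : G.Walk a b, ∃ x ∈ p.support, x ∈ W)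
    (hmin : ∀ W' ⊂ W, ¬ ∀ p : G.Walk a b, ∃ x ∈ p.support, x ∈ W')
    {w : V} (hw : w ∈ W) :
    ∃ (p : G.Walk a w) (q : G.Walk w b), p.IsPath ∧ q.IsPath ∧
      (∀ u ∈ p.support, u ∈ W → u = w) ∧ (∀ u ∈ q.support, u ∈ W → u = w) := by
  have hss : W \ {w} ⊂ W := Set.sdiff_singleton_ssubset.mpr hw
  have h0 := hmin (W \ {w}) hss
  push_neg at h0
  obtain ⟨p0, hp0⟩ := h0
  have hp0' : ∀ u ∈ p0.support, u ∈ W → u = w := by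
    intro u hu huW
    have := hp0 u hu
    by_contra hne
    exact this ⟨huW, hne⟩
  have hW1 : ∀ u ∈ p0.bypass.support, u ∈ W → u = w := fun u hu =>
    hp0' u (p0.support_bypass_subset hu)
  have hw1 : w ∈ p0.bypass.support := by
    by_contra hwn
    obtain ⟨z, hz, hzW⟩ := hsep p0.bypass
    exact hwn (hW1 z hz hzW ▸ hz)
  refine ⟨p0.bypass.takeUntil w hw1, p0.bypass.dropUntil w hw1,
    p0.bypass_isPath.takeUntil hw1, p0.bypass_isPath.dropUntil hw1, ?_, ?_⟩
  · intro u hu huW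
    exact hW1 u (p0.bypass.support_takeUntil_subset hw1 hu) huW
  · intro u hu huW
    exact hW1 u (p0.bypass.support_dropUntil_subset hw1 hu) huW

private lemma reach_of_mem_leg [DecidableEq V] {a w : V} {W : Set V} (p : G.Walk a w)
    (hp : p.IsPath) (hW : ∀ u ∈ p.support, u ∈ W → u = w)
    {u : V} (hu : u ∈ p.support) (hne : u ≠ w) :
    ∃ q : G.Walk u a, ∀ z ∈ q.support, z ∉ W := by
  refine ⟨(p.takeUntil u hu).reverse, ?_⟩
  intro z hz hzW
  rw [Walk.support_reverse, List.mem_reverse] at hz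
  have hzw : z = w := hW z (p.support_takeUntil_subset hu hz) hzW
  rw [hzw] at hz
  have h1 : w ∈ (p.dropUntil u hu).support.tail := by
    have h2 := (p.dropUntil u hu).end_mem_support
    rw [(p.dropUntil u hu).support_eq_cons] at h2
    rcases List.mem_cons.mp h2 with h3 | h3
    · exact absurd h3.symm hne
    · exact h3
  have hnd : p.support.Nodup := hp.support_nodup
  rw [← Walk.take_spec p hu, Walk.support_append] at hnd
  exact (List.disjoint_of_nodup_append hnd) hz h1

end Aux

/-- An undirected graph is chordal if every cycle of length at least four has
a chord: an edge between two vertices of the cycle that is not an edge of the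
cycle. -/
def ChordalGraph {V : Type*} (G : SimpleGraph V) : Prop :=
  ∀ (v : V) (c : G.Walk v v), c.IsCycle → 4 ≤ c.length →
    ∃ x ∈ c.support, ∃ y ∈ c.support, G.Adj x y ∧ s(x, y) ∉ c.edges

/-- Dirac: in a chordal graph, every minimal separator between two
non-adjacent vertices is a clique. -/
theorem stmt_12 {V : Type*} [Fintype V] (G : SimpleGraph V)
    (hchordal : ChordalGraph G)
    (a b : V) (hne : a ≠ b) (hnadj : ¬ G.Adj a b)
    (W : Set V) (haW : a ∉ W) (hbW : b ∉ W)
    (hsep : ∀ p : G.Walk a b, ∃ x ∈ p.support, x ∈ W)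
    (hmin : ∀ W' ⊂ W, ¬ ∀ p : G.Walk a b, ∃ x ∈ p.support, x ∈ W') :
    ∀ x ∈ W, ∀ y ∈ W, x ≠ y → G.Adj x y := by
  classical
  intro x hxW y hyW hxyne
  by_contra hxy
  obtain ⟨ax, xb, hax, hxb, haxW, hxbW⟩ := exists_legs hsep hmin hxW
  obtain ⟨ay, yb, hay, hyb, hayW, hybW⟩ := exists_legs hsep hmin hyW
  -- crossing lemmas
  have cross : ∀ u v : V, G.Adj u v → (∃ q : G.Walk u a, ∀ z ∈ q.support, z ∉ W) →
      (∃ q : G.Walk v b, ∀ z ∈ q.support, z ∉ W) → False := by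
    rintro u v huv ⟨qu, hqu⟩ ⟨qv, hqv⟩
    obtain ⟨z, hz, hzW⟩ := hsep (qu.reverse.append (Walk.cons huv qv))
    rw [Walk.mem_support_append_iff] at hz
    rcases hz with hz | hz
    · rw [Walk.support_reverse, List.mem_reverse] at hz
      exact hqu z hz hzW
    · rw [Walk.support_cons] at hz
      rcases List.mem_cons.mp hz with rfl | hz
      · exact hqu z qu.start_mem_support hzW
      · exact hqv z hz hzW
  have cross2 : ∀ u : V, (∃ q : G.Walk u a, ∀ z ∈ q.support, z ∉ W) →
      (∃ q : G.Walk u b, ∀ z ∈ q.support, z ∉ W) → False := by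
    rintro u ⟨qu, hqu⟩ ⟨qv, hqv⟩
    obtain ⟨z, hz, hzW⟩ := hsep (qu.reverse.append qv)
    rw [Walk.mem_support_append_iff] at hz
    rcases hz with hz | hz
    · rw [Walk.support_reverse, List.mem_reverse] at hz
      exact hqu z hz hzW
    · exact hqv z hz hzW
  -- side-A geodesic
  have hexA : ∃ p : G.Walk x y, p.IsPath ∧ ∀ u ∈ p.support, u ≠ x → u ≠ y →
      (u ∉ W ∧ ∃ q : G.Walk u a, ∀ z ∈ q.support, z ∉ W) := by
    refine ⟨(ax.reverse.append ay).bypass, Walk.bypass_isPath _, ?_⟩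
    intro u hu hux huy
    have hu' := (ax.reverse.append ay).support_bypass_subset hu
    rw [Walk.mem_support_append_iff] at hu'
    rcases hu' with hu' | hu'
    · rw [Walk.support_reverse, List.mem_reverse] at hu'
      exact ⟨fun hW => hux (haxW u hu' hW), reach_of_mem_leg ax hax haxW hu' hux⟩
    · exact ⟨fun hW => huy (hayW u hu' hW), reach_of_mem_leg ay hay hayW hu' huy⟩
  obtain ⟨pA, hpA, hIA, hgeoA⟩ := exists_geodesic _ hexA
  -- side-B geodesic
  have hxbW' : ∀ u ∈ xb.reverse.support, u ∈ W → u = x := by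
    intro u hu
    rw [Walk.support_reverse, List.mem_reverse] at hu
    exact hxbW u hu
  have hybW' : ∀ u ∈ yb.reverse.support, u ∈ W → u = y := by
    intro u hu
    rw [Walk.support_reverse, List.mem_reverse] at hu
    exact hybW u hu
  have hexB : ∃ p : G.Walk x y, p.IsPath ∧ ∀ u ∈ p.support, u ≠ x → u ≠ y →
      (u ∉ W ∧ ∃ q : G.Walk u b, ∀ z ∈ q.support, z ∉ W) := by
    refine ⟨(xb.append yb.reverse).bypass, Walk.bypass_isPath _, ?_⟩
    intro u hu hux huy
    have hu' := (xb.append yb.reverse).support_bypass_subset hu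
    rw [Walk.mem_support_append_iff] at hu'
    rcases hu' with hu' | hu'
    · have hu'' : u ∈ xb.reverse.support := by
        rw [Walk.support_reverse, List.mem_reverse]; exact hu'
      exact ⟨fun hW => hux (hxbW u hu' hW),
        reach_of_mem_leg xb.reverse hxb.reverse hxbW' hu'' hux⟩
    · have hu'' : u ∈ yb.support := by
        rw [Walk.support_reverse, List.mem_reverse] at hu'; exact hu'
      exact ⟨fun hW => huy (hybW u hu'' hW),
        reach_of_mem_leg yb.reverse hyb.reverse hybW' hu' huy⟩
  obtain ⟨pB, hpB, hIB, hgeoB⟩ := exists_geodesic _ hexB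
  -- lengths
  have h2A : 2 ≤ pA.length := by
    by_contra h
    push_neg at h
    obtain h0 | h1 : pA.length = 0 ∨ pA.length = 1 := by omega
    · exact hxyne (Walk.eq_of_length_eq_zero h0)
    · exact hxy (pA.adj_of_mem_edges (edge_of_length_one pA h1))
  have h2B : 2 ≤ pB.length := by
    by_contra h
    push_neg at h
    obtain h0 | h1 : pB.length = 0 ∨ pB.length = 1 := by omega
    · exact hxyne (Walk.eq_of_length_eq_zero h0)
    · exact hxy (pB.adj_of_mem_edges (edge_of_length_one pB h1))
  -- support disjointness
  have hdisj : ∀ u, u ∈ pA.support → u ∈ pB.support → u = x ∨ u = y := by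
    intro u h1 h2
    by_contra h
    push_neg at h
    exact cross2 u (hIA u h1 h.1 h.2).2 (hIB u h2 h.1 h.2).2
  -- the cycle
  set c : G.Walk x x := pA.append pB.reverse with hc
  have hcsupp : ∀ u, u ∈ c.support ↔ u ∈ pA.support ∨ u ∈ pB.support := by
    intro u
    rw [hc, Walk.mem_support_append_iff, Walk.support_reverse, List.mem_reverse]
  have hcedge : ∀ e, e ∈ c.edges ↔ e ∈ pA.edges ∨ e ∈ pB.edges := by
    intro e
    rw [hc, Walk.edges_append, List.mem_append, Walk.edges_reverse, List.mem_reverse]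
  have hnoshared : ∀ e, e ∈ pA.edges → e ∈ pB.edges → False := by
    intro e
    induction e using Sym2.ind with
    | _ u v =>
      intro h1 h2
      have huv : G.Adj u v := pA.adj_of_mem_edges h1
      have hu1 := pA.fst_mem_support_of_mem_edges h1
      have hv1 := pA.snd_mem_support_of_mem_edges h1
      have hu2 := pB.fst_mem_support_of_mem_edges h2
      have hv2 := pB.snd_mem_support_of_mem_edges h2
      rcases hdisj u hu1 hu2 with rfl | rfl <;> rcases hdisj v hv1 hv2 with rfl | rfl
      · exact huv.ne rfl
      · exact hxy huv
      · exact hxy huv.symm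
      · exact huv.ne rfl
  have hclen : c.length = pA.length + pB.length := by
    rw [hc, Walk.length_append, Walk.length_reverse]
  have hcycle : c.IsCycle := by
    rw [Walk.isCycle_def]
    refine ⟨?_, ?_, ?_⟩
    · rw [Walk.isTrail_def, hc, Walk.edges_append, Walk.edges_reverse]
      refine List.Nodup.append hpA.isTrail.edges_nodup
        (List.nodup_reverse.mpr hpB.isTrail.edges_nodup) ?_
      intro e he1 he2
      exact hnoshared e he1 (List.mem_reverse.mp he2)
    · intro hnil
      rw [hnil] at hclen
      simp at hclen
      omega
    · have hA : pA.support.Nodup := hpA.support_nodup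
      have hB : pB.reverse.support.Nodup := hpB.reverse.support_nodup
      have hxA : x ∉ pA.support.tail := by
        rw [pA.support_eq_cons] at hA
        exact (List.nodup_cons.mp hA).1
      have hyB : y ∉ pB.reverse.support.tail := by
        rw [pB.reverse.support_eq_cons] at hB
        exact (List.nodup_cons.mp hB).1
      have hct : c.support.tail = pA.support.tail ++ pB.reverse.support.tail := by
        rw [hc, Walk.support_append, List.tail_append_of_ne_nil pA.support_ne_nil]
      rw [hct]
      refine List.Nodup.append ?_ ?_ ?_
      · rw [pA.support_eq_cons] at hA
        exact (List.nodup_cons.mp hA).2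
      · rw [pB.reverse.support_eq_cons] at hB
        exact (List.nodup_cons.mp hB).2
      · intro u hu1 hu2
        have huA : u ∈ pA.support := by
          rw [pA.support_eq_cons]
          exact List.mem_cons_of_mem _ hu1
        have huB : u ∈ pB.support := by
          have : u ∈ pB.reverse.support := by
            rw [pB.reverse.support_eq_cons]
            exact List.mem_cons_of_mem _ hu2
          rwa [Walk.support_reverse, List.mem_reverse] at this
        rcases hdisj u huA huB with rfl | rfl
        · exact hxA hu1
        · exact hyB hu2
  have h4 : 4 ≤ c.length := by omega
  obtain ⟨u, hu, v, hv, huv, hne_edge⟩ := hchordal x c hcycle h4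
  rw [hcsupp] at hu hv
  rcases hu with hu | hu <;> rcases hv with hv | hv
  · exact hne_edge ((hcedge _).mpr (Or.inl (hgeoA u hu v hv huv)))
  · by_cases hvA : v ∈ pA.support
    · exact hne_edge ((hcedge _).mpr (Or.inl (hgeoA u hu v hvA huv)))
    by_cases huB : u ∈ pB.support
    · exact hne_edge ((hcedge _).mpr (Or.inr (hgeoB u huB v hv huv)))
    have hux : u ≠ x := fun h => huB (by rw [h]; exact pB.start_mem_support)
    have huy : u ≠ y := fun h => huB (by rw [h]; exact pB.end_mem_support)
    have hvx : v ≠ x := fun h => hvA (by rw [h]; exact pA.start_mem_support)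
    have hvy : v ≠ y := fun h => hvA (by rw [h]; exact pA.end_mem_support)
    exact cross u v huv (hIA u hu hux huy).2 (hIB v hv hvx hvy).2
  · by_cases huA : u ∈ pA.support
    · exact hne_edge ((hcedge _).mpr (Or.inl (hgeoA u huA v hv huv)))
    by_cases hvB : v ∈ pB.support
    · exact hne_edge ((hcedge _).mpr (Or.inr (hgeoB u hu v hvB huv)))
    have hux : u ≠ x := fun h => huA (by rw [h]; exact pA.start_mem_support)
    have huy : u ≠ y := fun h => huA (by rw [h]; exact pA.end_mem_support)
    have hvx : v ≠ x := fun h => hvB (by rw [h]; exact pB.start_mem_support)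
    have hvy : v ≠ y := fun h => hvB (by rw [h]; exact pB.end_mem_support)
    exact cross v u huv.symm (hIA v hv hvx hvy).2 (hIB u hu hux huy).2
  · exact hne_edge ((hcedge _).mpr (Or.inr (hgeoB u hu v hv huv)))
end

section
/- Let G be a DAG in which no three vertices form a v-structure (i.e., every vertex's parent set is a clique). Then the moral graph of G equals the skeleton of G, and if moreover the skeleton is chordal, every minimal d-separator between two non-adjacent vertices is a clique in G. -/
/-- The skeleton of a directed graph, as a simple graph. -/
def Skel {V : Type*} (E : V → V → Prop) : SimpleGraph V where
  Adj a b := a ≠ b ∧ (E a b ∨ E b a)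
  symm := ⟨fun a b h => ⟨h.1.symm, h.2.symm⟩⟩
  loopless := ⟨fun a h => h.1 rfl⟩

namespace Stmt13
open List Relation SimpleGraph

open List Relation

variable {V : Type*}

@[simp] theorem List.chain'_nil {R : V → V → Prop} : List.Chain' R [] := List.isChain_nil
@[simp] theorem List.chain'_singleton {R : V → V → Prop} (a : V) : List.Chain' R [a] :=
  List.isChain_singleton a
theorem List.chain'_cons {R : V → V → Prop} {a b : V} {l : List V} :
    List.Chain' R (a :: b :: l) ↔ R a b ∧ List.Chain' R (b :: l) := List.isChain_cons_cons
theorem List.chain'_cons' {R : V → V → Prop} {x : V} {l : List V} :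
    List.Chain' R (x :: l) ↔ (∀ y ∈ l.head?, R x y) ∧ List.Chain' R l := List.isChain_cons
theorem List.chain'_append {R : V → V → Prop} {l₁ l₂ : List V} :
    List.Chain' R (l₁ ++ l₂) ↔ List.Chain' R l₁ ∧ List.Chain' R l₂ ∧
      ∀ x ∈ l₁.getLast?, ∀ y ∈ l₂.head?, R x y := List.isChain_append
theorem List.chain'_reverse {R : V → V → Prop} {l : List V} :
    List.Chain' R l.reverse ↔ List.Chain' (flip R) l := List.isChain_reverse

lemma triple_prefix_iff {x m y : V} {l : List V} :
    [x, m, y] <+: l ↔ ∃ r, l = x :: m :: y :: r := by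
  constructor
  · rintro ⟨r, rfl⟩; exact ⟨r, rfl⟩
  · rintro ⟨r, rfl⟩; exact ⟨r, rfl⟩

lemma triple_infix_mid {x m y c : V} {s t : List V}
    (h : [x, m, y] <:+: s ++ c :: t) :
    [x, m, y] <:+: s ++ [c] ∨ [x, m, y] <:+: c :: t ∨
      (m = c ∧ s.getLast? = some x ∧ t.head? = some y) := by
  induction s generalizing x m y with
  | nil => exact Or.inr (Or.inl (by simpa using h))
  | cons d s' ih =>
    rw [cons_append, List.infix_cons_iff] at h
    rcases h with h | h
    · rw [triple_prefix_iff] at h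
      obtain ⟨r, hr⟩ := h
      have hx : x = d := (List.cons_eq_cons.mp hr).1.symm
      have hr' : s' ++ c :: t = m :: y :: r := (List.cons_eq_cons.mp hr).2
      subst hx
      match s', hr' with
      | [], hr' =>
        have h1 : c = m := (List.cons_eq_cons.mp hr').1
        have h2 : t = y :: r := (List.cons_eq_cons.mp hr').2
        exact Or.inr (Or.inr ⟨h1.symm, rfl, by rw [h2]; rfl⟩)
      | [e], hr' =>
        have h1 : e = m := (List.cons_eq_cons.mp hr').1
        have h2 : c = y := (List.cons_eq_cons.mp (List.cons_eq_cons.mp hr').2).1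
        subst h1; subst h2
        exact Or.inl (by simp)
      | e :: f :: s'', hr' =>
        have h1 : e = m := (List.cons_eq_cons.mp hr').1
        have h2 : f = y := (List.cons_eq_cons.mp (List.cons_eq_cons.mp hr').2).1
        subst h1; subst h2
        refine Or.inl ⟨[], s'' ++ [c], by simp⟩
    · rcases ih h with h1 | h2 | ⟨rfl, hx, hy⟩
      · exact Or.inl (h1.trans (List.suffix_cons d _).isInfix)
      · exact Or.inr (Or.inl h2)
      · refine Or.inr (Or.inr ⟨rfl, ?_, hy⟩)
        cases s' with
        | nil => simp at hx
        | cons a as => rw [List.getLast?_cons_cons]; exact hx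

lemma triple_infix_mid2 {x m y a b : V} {s t : List V}
    (h : [x, m, y] <:+: s ++ a :: b :: t) :
    [x, m, y] <:+: s ++ [a] ∨ [x, m, y] <:+: b :: t ∨
      (m = a ∧ y = b ∧ s.getLast? = some x) ∨
      (x = a ∧ m = b ∧ t.head? = some y) := by
  rcases triple_infix_mid h with h1 | h2 | ⟨rfl, hx, hy⟩
  · exact Or.inl h1
  · rw [List.infix_cons_iff] at h2
    rcases h2 with h2 | h2
    · rw [triple_prefix_iff] at h2
      obtain ⟨r, hr⟩ := h2
      have h1 : a = x := (List.cons_eq_cons.mp hr).1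
      have h2 : b = m := (List.cons_eq_cons.mp (List.cons_eq_cons.mp hr).2).1
      have h3 : t = y :: r := (List.cons_eq_cons.mp (List.cons_eq_cons.mp hr).2).2
      exact Or.inr (Or.inr (Or.inr ⟨h1.symm, h2.symm, by rw [h3]; rfl⟩))
    · exact Or.inr (Or.inl h2)
  · rw [List.head?_cons] at hy
    exact Or.inr (Or.inr (Or.inl ⟨rfl, (Option.some.inj hy).symm, hx⟩))

lemma chain'_triple {R : V → V → Prop} {l : List V} (h : l.Chain' R) {x m y : V}
    (ht : [x, m, y] <:+: l) : R x m ∧ R m y := by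
  have h2 := h.infix ht
  rw [List.isChain_cons_cons, List.isChain_cons_cons] at h2
  exact ⟨h2.1, h2.2.1⟩

lemma rtg_list {R : V → V → Prop} {a b : V} (h : Relation.ReflTransGen R a b) :
    ∃ l : List V, l.head? = some a ∧ l.getLast? = some b ∧ l.Chain' R ∧
      ∀ z ∈ l, Relation.ReflTransGen R a z := by
  induction h with
  | refl => exact ⟨[a], rfl, rfl, List.chain'_singleton a, by simp [Relation.ReflTransGen.refl]⟩
  | @tail b c hab hbc ih =>
    obtain ⟨l, h1, h2, h3, h4⟩ := ih
    refine ⟨l ++ [c], ?_, ?_, ?_, ?_⟩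
    · rw [List.head?_append, h1]; rfl
    · rw [List.getLast?_append]; rfl
    · refine h3.append (List.chain'_singleton c) ?_
      intro p hp q hq
      rw [h2] at hp
      rw [List.head?_cons] at hq
      rw [← Option.some.inj hp, ← Option.some.inj hq] at *
      exact hbc
    · intro z hz
      rcases List.mem_append.mp hz with hz | hz
      · exact h4 z hz
      · rw [List.mem_singleton.mp hz]; exact hab.tail hbc

lemma chain'_rtg {R : V → V → Prop} : ∀ {l : List V}, l.Chain' R → ∀ {a : V},
    l.head? = some a → ∀ z ∈ l, Relation.ReflTransGen R a z
  | [], _, _, ha => by simp at ha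
  | x :: l', h, a, ha => by
    rw [List.head?_cons] at ha
    obtain rfl : x = a := Option.some.inj ha
    intro z hz
    rcases List.mem_cons.mp hz with rfl | hz
    · exact Relation.ReflTransGen.refl
    · cases l' with
      | nil => simp at hz
      | cons y l'' =>
        rw [List.chain'_cons] at h
        exact Relation.ReflTransGen.head h.1 (chain'_rtg h.2 rfl z hz)

open List Relation

variable {V : Type*}

lemma pair_sublist_split {a : V} : ∀ {l : List V}, [a, a] <+ l →
    ∃ A M B, l = A ++ (a :: (M ++ (a :: B))) := by
  intro l h
  induction l with
  | nil => simp at h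
  | cons c l' ih =>
    rcases h with _ | ⟨_, _⟩ | _
    case cons h' =>
      obtain ⟨A, M, B, hl⟩ := ih h'
      exact ⟨c :: A, M, B, by rw [hl]; rfl⟩
    case cons_cons h' =>
      have ha : a ∈ l' := (List.singleton_sublist).mp h'
      obtain ⟨M, B, hl⟩ := List.append_of_mem ha
      exact ⟨[], M, B, by rw [hl]; rfl⟩

lemma getLast?_or_collapse {a : V} (M B : List V) :
    (M ++ (a :: B)).getLast? = (a :: B).getLast? := by
  rw [List.getLast?_append]
  cases hB : (a :: B).getLast? with
  | none => simp at hB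
  | some w => rfl

lemma nodupify {R : V → V → Prop} : ∀ (n : ℕ) (l : List V), l.length ≤ n → l.Chain' R →
    ∃ l' : List V, l'.Chain' R ∧ l'.head? = l.head? ∧ l'.getLast? = l.getLast? ∧ l'.Nodup ∧
      ∀ z ∈ l', z ∈ l := by
  intro n
  induction n with
  | zero =>
    intro l hl _
    rw [Nat.le_zero, List.length_eq_zero_iff] at hl
    subst hl
    exact ⟨[], by simp, rfl, rfl, by simp, fun z hz => hz⟩
  | succ n ih =>
    intro l hl hc
    by_cases hnd : l.Nodup
    · exact ⟨l, hc, rfl, rfl, hnd, fun z hz => hz⟩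
    · obtain ⟨a, ha⟩ := List.exists_duplicate_iff_not_nodup.mpr hnd
      obtain ⟨A, M, B, rfl⟩ := pair_sublist_split (List.duplicate_iff_sublist.mp ha)
      have hsub : ∀ z ∈ A ++ (a :: B), z ∈ A ++ (a :: (M ++ (a :: B))) := by
        intro z hz
        rcases List.mem_append.mp hz with hz | hz
        · exact List.mem_append.mpr (Or.inl hz)
        · rcases List.mem_cons.mp hz with rfl | hz
          · exact List.mem_append.mpr (Or.inr (List.mem_cons_self))
          · exact List.mem_append.mpr (Or.inr (List.mem_cons.mpr (Or.inr
              (List.mem_append.mpr (Or.inr (List.mem_cons.mpr (Or.inr hz)))))))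
      have hlen : (A ++ (a :: B)).length ≤ n := by
        simp only [List.length_append, List.length_cons] at hl ⊢
        omega
      have hc2 : (A ++ (a :: B)).Chain' R := by
        rw [List.chain'_append] at hc ⊢
        refine ⟨hc.1, ?_, ?_⟩
        · exact hc.2.1.infix ⟨a :: M, [], by simp⟩
        · intro p hp q hq
          exact hc.2.2 p hp q (by rw [List.head?_cons] at hq ⊢; exact hq)
      obtain ⟨l', c1, c2, c3, c4, c5⟩ := ih _ hlen hc2
      refine ⟨l', c1, ?_, ?_, c4, fun z hz => hsub z (c5 z hz)⟩
      · rw [c2, List.head?_append, List.head?_append, List.head?_cons, List.head?_cons]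
      · rw [c3, List.getLast?_append, List.getLast?_append]
        rw [show a :: (M ++ (a :: B)) = (a :: M) ++ (a :: B) from by simp]
        rw [getLast?_or_collapse]

lemma two_mem_split {l : List V} {x y : V} (hx : x ∈ l) (hy : y ∈ l) (hxy : x ≠ y) :
    (∃ A M B, l = A ++ (x :: (M ++ (y :: B)))) ∨
    (∃ A M B, l = A ++ (y :: (M ++ (x :: B)))) := by
  obtain ⟨s, t, rfl⟩ := List.append_of_mem hx
  rcases List.mem_append.mp hy with hy | hy
  · obtain ⟨A, B', rfl⟩ := List.append_of_mem hy
    exact Or.inr ⟨A, B', t, by simp⟩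
  · rcases List.mem_cons.mp hy with rfl | hy
    · exact absurd rfl hxy
    · obtain ⟨M, B, rfl⟩ := List.append_of_mem hy
      exact Or.inl ⟨s, M, B, by simp⟩

lemma interior_middle {l A B : List V} {z : V} (h : l = A ++ (z :: B)) (hA : A ≠ [])
    (hB : B ≠ []) : ∃ x₀ y₀, [x₀, z, y₀] <:+: l ∧ A.getLast? = some x₀ ∧
      B.head? = some y₀ := by
  obtain ⟨A', x₀, rfl⟩ := A.eq_nil_or_concat.resolve_left hA
  cases B with
  | nil => exact absurd rfl hB
  | cons y₀ B' =>
    refine ⟨x₀, y₀, ⟨A', B', by rw [h]; simp⟩, by simp, rfl⟩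

open List Relation SimpleGraph

variable {V : Type*}

def pairs (l : List V) : List (Sym2 V) := List.zipWith (fun a b => s(a, b)) l l.tail

@[simp] lemma pairs_nil : pairs ([] : List V) = [] := rfl
@[simp] lemma pairs_single (a : V) : pairs [a] = [] := rfl
@[simp] lemma pairs_cons_cons (a b : V) (l : List V) :
    pairs (a :: b :: l) = s(a, b) :: pairs (b :: l) := rfl

lemma mem_of_mem_pairs {l : List V} {e : Sym2 V} (he : e ∈ pairs l) :
    ∀ z ∈ e, z ∈ l := by
  induction l with
  | nil => simp at he
  | cons a l' ih =>
    cases l' with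
    | nil => simp at he
    | cons b l'' =>
      rw [pairs_cons_cons, List.mem_cons] at he
      rcases he with rfl | he
      · intro z hz
        rcases Sym2.mem_iff.mp hz with rfl | rfl
        · exact List.mem_cons_self
        · exact List.mem_cons.mpr (Or.inr (List.mem_cons_self))
      · intro z hz
        exact List.mem_cons.mpr (Or.inr (ih he z hz))

lemma pairs_mem_decomp {l : List V} {e : Sym2 V} (he : e ∈ pairs l) :
    ∃ a b s t, e = s(a, b) ∧ l = s ++ (a :: b :: t) := by
  induction l with
  | nil => simp at he
  | cons c l' ih =>
    cases l' with
    | nil => simp at he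
    | cons d l'' =>
      rw [pairs_cons_cons, List.mem_cons] at he
      rcases he with rfl | he
      · exact ⟨c, d, [], l'', rfl, rfl⟩
      · obtain ⟨a, b, s, t, h1, h2⟩ := ih he
        exact ⟨a, b, c :: s, t, h1, by rw [h2]; rfl⟩

lemma pairs_append' {g : V} : ∀ {A : List V}, A.getLast? = some g → ∀ (B : List V),
    pairs (A ++ B) = pairs A ++ pairs (g :: B) := by
  intro A
  induction A with
  | nil => intro h; simp at h
  | cons x A' ih =>
    intro h B
    cases A' with
    | nil =>
      obtain rfl : x = g := by simpa using h
      simp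
    | cons y A'' =>
      rw [List.getLast?_cons_cons] at h
      have := ih h B
      rw [cons_append] at this
      show pairs (x :: (y :: (A'' ++ B))) = _
      rw [pairs_cons_cons, this]
      rfl

lemma decomp_mem_pairs {l s t : List V} {a b : V} (h : l = s ++ (a :: b :: t)) :
    s(a, b) ∈ pairs l := by
  subst h
  induction s with
  | nil => simp
  | cons c s' ih =>
    cases hs : s' ++ (a :: b :: t) with
    | nil => simp at hs
    | cons d r =>
      rw [cons_append, hs, pairs_cons_cons, ← hs]
      exact List.mem_cons.mpr (Or.inr ih)

lemma pairs_reverse : ∀ (l : List V), pairs l.reverse = (pairs l).reverse := by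
  intro l
  induction l with
  | nil => rfl
  | cons x l' ih =>
    cases l' with
    | nil => rfl
    | cons y l'' =>
      rw [pairs_cons_cons, List.reverse_cons]
      have hg : (y :: l'').reverse.getLast? = some y := by
        rw [List.getLast?_reverse]; rfl
      rw [pairs_append' hg [x], ih]
      simp [Sym2.eq_swap]

lemma pairs_nodup : ∀ {l : List V}, l.Nodup → (pairs l).Nodup := by
  intro l h
  induction l with
  | nil => simp
  | cons x l' ih =>
    cases l' with
    | nil => simp
    | cons y l'' =>
      rw [pairs_cons_cons, List.nodup_cons]
      refine ⟨?_, ih (List.nodup_cons.mp h).2⟩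
      intro hmem
      have hx : x ∈ y :: l'' := mem_of_mem_pairs hmem x (by simp)
      exact (List.nodup_cons.mp h).1 hx

def mkW (S : SimpleGraph V) : (a : V) → (l : List V) → List.Chain' S.Adj (a :: l) →
    S.Walk a ((a :: l).getLast (List.cons_ne_nil a l))
  | a, [], _ => SimpleGraph.Walk.nil.copy rfl rfl
  | a, b :: l, h =>
    (SimpleGraph.Walk.cons (List.chain'_cons.mp h).1 (mkW S b l (List.chain'_cons.mp h).2)).copy
      rfl (by rw [List.getLast_cons (List.cons_ne_nil b l)])

@[simp] lemma support_mkW (S : SimpleGraph V) : ∀ (a : V) (l : List V)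
    (h : List.Chain' S.Adj (a :: l)), (mkW S a l h).support = a :: l := by
  intro a l
  induction l generalizing a with
  | nil => intro h; simp [mkW]
  | cons b l' ih =>
    intro h
    rw [mkW]
    rw [SimpleGraph.Walk.support_copy, SimpleGraph.Walk.support_cons, ih]

@[simp] lemma edges_mkW (S : SimpleGraph V) : ∀ (a : V) (l : List V)
    (h : List.Chain' S.Adj (a :: l)), (mkW S a l h).edges = pairs (a :: l) := by
  intro a l
  induction l generalizing a with
  | nil => intro h; simp [mkW]
  | cons b l' ih =>
    intro h
    rw [mkW]
    rw [SimpleGraph.Walk.edges_copy, SimpleGraph.Walk.edges_cons, ih, pairs_cons_cons]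

lemma length_mkW (S : SimpleGraph V) (a : V) (l : List V) (h : List.Chain' S.Adj (a :: l)) :
    (mkW S a l h).length = l.length := by
  have := SimpleGraph.Walk.length_support (mkW S a l h)
  rw [support_mkW] at this
  simp at this
  omega

lemma triple_infix_iff {x m y : V} {l : List V} :
    [x, m, y] <:+: l ↔ ∃ s t, l = s ++ (x :: m :: y :: t) := by
  constructor
  · rintro ⟨s, t, rfl⟩; exact ⟨s, t, by simp⟩
  · rintro ⟨s, t, rfl⟩; exact ⟨s, t, by simp⟩

def SPath (E : V → V → Prop) (C : Set V) (p : List V) : Prop :=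
  p.Chain' (fun a b => E a b ∨ E b a) ∧ ∀ x m y, [x, m, y] <:+: p → m ∉ C

def SConn (E : V → V → Prop) (C : Set V) (u v : V) : Prop :=
  ∃ p : List V, p.head? = some u ∧ p.getLast? = some v ∧ SPath E C p

section Surgery

variable {E : V → V → Prop} {C : Set V}

lemma no_two_cycle (hacyc : AcyclicRel E) {a w : V} (haw : E a w) : ¬ E w a :=
  fun hwa => hacyc a (Relation.TransGen.head haw (Relation.TransGen.single hwa))

lemma active_shortcut (hacyc : AcyclicRel E)
    (hnov : ∀ a b c : V, E a c → E b c → a ≠ b → (E a b ∨ E b a))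
    {p : List V} (hp : ActivePath E C p) {a w b : V} {s t : List V}
    (hdec : p = s ++ (a :: w :: b :: t)) (haw : E a w) (hbw : E b w) :
    ∃ q : List V, q.length < p.length ∧ q.head? = p.head? ∧ q.getLast? = p.getLast? ∧
      ActivePath E C q := by
  obtain ⟨hch, hnc, hcl⟩ := hp
  have htriple : [a, w, b] <:+: p := triple_infix_iff.mpr ⟨s, t, hdec⟩
  have hwdesc : ∃ d ∈ C, Relation.ReflTransGen E w d := hcl a w b htriple haw hbw
  have hanotC : ∀ x, s.getLast? = some x → a ∉ C := by
    intro x hx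
    obtain ⟨s', rfl⟩ := List.getLast?_eq_some_iff.mp hx
    exact hnc x a w (triple_infix_iff.mpr ⟨s', b :: t, by simp [hdec]⟩)
      (fun hc => no_two_cycle hacyc haw hc.2)
  by_cases hab : a = b
  · subst hab
    refine ⟨s ++ (a :: t), by simp [hdec], by simp [hdec], ?_, ?_, ?_, ?_⟩
    · rw [hdec, List.getLast?_append, List.getLast?_append,
        List.getLast?_cons_cons, List.getLast?_cons_cons]
    · -- chain'
      rw [List.chain'_append]
      rw [hdec, List.chain'_append] at hch
      refine ⟨hch.1, ?_, ?_⟩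
      · exact hch.2.1.infix ⟨[a, w], [], by simp⟩
      · intro x hx y hy
        exact hch.2.2 x hx y (by rw [List.head?_cons] at hy ⊢; exact hy)
    · -- non-collider condition
      intro x m y htri hncol
      rcases triple_infix_mid htri with h1 | h2 | ⟨rfl, hx, hy⟩
      · exact hnc x m y (h1.trans ⟨[], w :: a :: t, by simp [hdec]⟩) hncol
      · exact hnc x m y (h2.trans ⟨s ++ [a, w], [], by simp [hdec]⟩) hncol
      · exact hanotC x hx
    · -- collider condition
      intro x m y htri hxm hym
      rcases triple_infix_mid htri with h1 | h2 | ⟨rfl, hx, hy⟩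
      · exact hcl x m y (h1.trans ⟨[], w :: a :: t, by simp [hdec]⟩) hxm hym
      · exact hcl x m y (h2.trans ⟨s ++ [a, w], [], by simp [hdec]⟩) hxm hym
      · obtain ⟨d, hd, hwd⟩ := hwdesc
        exact ⟨d, hd, Relation.ReflTransGen.head haw hwd⟩
  · refine ⟨s ++ (a :: b :: t), by simp [hdec], by simp [hdec], ?_, ?_, ?_, ?_⟩
    · rw [hdec, List.getLast?_append, List.getLast?_append,
        List.getLast?_cons_cons, List.getLast?_cons_cons, List.getLast?_cons_cons]
    · rw [List.chain'_append]
      rw [hdec, List.chain'_append] at hch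
      refine ⟨hch.1, ?_, ?_⟩
      · rw [List.chain'_cons]
        exact ⟨hnov a b w haw hbw hab, hch.2.1.infix ⟨[a, w], [], by simp⟩⟩
      · intro x hx y hy
        exact hch.2.2 x hx y (by rw [List.head?_cons] at hy ⊢; exact hy)
    · intro x m y htri hncol
      rcases triple_infix_mid2 htri with h1 | h2 | ⟨rfl, rfl, hx⟩ | ⟨rfl, rfl, hy⟩
      · exact hnc x m y (h1.trans ⟨[], w :: b :: t, by simp [hdec]⟩) hncol
      · exact hnc x m y (h2.trans ⟨s ++ [a, w], [], by simp [hdec]⟩) hncol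
      · exact hanotC x hx
      · obtain ⟨t', rfl⟩ : ∃ t', t = y :: t' := by
          cases t with
          | nil => simp at hy
          | cons y' t' => exact ⟨t', by rw [List.head?_cons] at hy; rw [Option.some.inj hy]⟩
        refine hnc w m y (triple_infix_iff.mpr ⟨s ++ [x], t', by simp [hdec]⟩) ?_
        exact fun hc => no_two_cycle hacyc hbw hc.1
    · intro x m y htri hxm hym
      rcases triple_infix_mid2 htri with h1 | h2 | ⟨rfl, rfl, hx⟩ | ⟨rfl, rfl, hy⟩
      · exact hcl x m y (h1.trans ⟨[], w :: b :: t, by simp [hdec]⟩) hxm hym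
      · exact hcl x m y (h2.trans ⟨s ++ [a, w], [], by simp [hdec]⟩) hxm hym
      · obtain ⟨d, hd, hwd⟩ := hwdesc
        exact ⟨d, hd, Relation.ReflTransGen.head haw hwd⟩
      · obtain ⟨d, hd, hwd⟩ := hwdesc
        exact ⟨d, hd, Relation.ReflTransGen.head hbw hwd⟩

end Surgery

section Elim

variable {E : V → V → Prop} {C : Set V}

lemma spath_shortcut (hnov : ∀ a b c : V, E a c → E b c → a ≠ b → (E a b ∨ E b a))
    {p : List V} (hp : SPath E C p) {a w b : V} {s t : List V}
    (hdec : p = s ++ (a :: w :: b :: t)) (haw : E a w) (hbw : E b w) :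
    ∃ q : List V, q.length < p.length ∧ q.head? = p.head? ∧ q.getLast? = p.getLast? ∧
      SPath E C q := by
  obtain ⟨hch, hmid⟩ := hp
  have hamid : ∀ x, s.getLast? = some x → a ∉ C := by
    intro x hx
    obtain ⟨s', rfl⟩ := List.getLast?_eq_some_iff.mp hx
    exact hmid x a w (triple_infix_iff.mpr ⟨s', b :: t, by simp [hdec]⟩)
  by_cases hab : a = b
  · subst hab
    refine ⟨s ++ (a :: t), by simp [hdec], by simp [hdec], ?_, ?_, ?_⟩
    · rw [hdec, List.getLast?_append, List.getLast?_append,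
        List.getLast?_cons_cons, List.getLast?_cons_cons]
    · rw [List.chain'_append]
      rw [hdec, List.chain'_append] at hch
      refine ⟨hch.1, hch.2.1.infix ⟨[a, w], [], by simp⟩, ?_⟩
      intro x hx y hy
      exact hch.2.2 x hx y (by rw [List.head?_cons] at hy ⊢; exact hy)
    · intro x m y htri
      rcases triple_infix_mid htri with h1 | h2 | ⟨rfl, hx, hy⟩
      · exact hmid x m y (h1.trans ⟨[], w :: a :: t, by simp [hdec]⟩)
      · exact hmid x m y (h2.trans ⟨s ++ [a, w], [], by simp [hdec]⟩)
      · exact hamid x hx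
  · refine ⟨s ++ (a :: b :: t), by simp [hdec], by simp [hdec], ?_, ?_, ?_⟩
    · rw [hdec, List.getLast?_append, List.getLast?_append,
        List.getLast?_cons_cons, List.getLast?_cons_cons, List.getLast?_cons_cons]
    · rw [List.chain'_append]
      rw [hdec, List.chain'_append] at hch
      refine ⟨hch.1, ?_, ?_⟩
      · rw [List.chain'_cons]
        exact ⟨hnov a b w haw hbw hab, hch.2.1.infix ⟨[a, w], [], by simp⟩⟩
      · intro x hx y hy
        exact hch.2.2 x hx y (by rw [List.head?_cons] at hy ⊢; exact hy)
    · intro x m y htri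
      rcases triple_infix_mid2 htri with h1 | h2 | ⟨rfl, rfl, hx⟩ | ⟨rfl, rfl, hy⟩
      · exact hmid x m y (h1.trans ⟨[], w :: b :: t, by simp [hdec]⟩)
      · exact hmid x m y (h2.trans ⟨s ++ [a, w], [], by simp [hdec]⟩)
      · exact hamid x hx
      · obtain ⟨t', rfl⟩ : ∃ t', t = y :: t' := by
          cases t with
          | nil => simp at hy
          | cons y' t' => exact ⟨t', by rw [List.head?_cons] at hy; rw [Option.some.inj hy]⟩
        exact hmid w m y (triple_infix_iff.mpr ⟨s ++ [x], t', by simp [hdec]⟩)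

lemma elimA (hacyc : AcyclicRel E)
    (hnov : ∀ a b c : V, E a c → E b c → a ≠ b → (E a b ∨ E b a)) :
    ∀ (n : ℕ) (p : List V), p.length ≤ n → ActivePath E C p →
    ∃ q : List V, q.head? = p.head? ∧ q.getLast? = p.getLast? ∧ ActivePath E C q ∧
      ∀ x m y, [x, m, y] <:+: q → ¬(E x m ∧ E y m) := by
  intro n
  induction n with
  | zero =>
    intro p hl hp
    rw [Nat.le_zero, List.length_eq_zero_iff] at hl
    exact ⟨p, rfl, rfl, hp, by subst hl; intro x m y h; simp [triple_infix_iff] at h⟩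
  | succ n ih =>
    intro p hl hp
    by_cases hcol : ∃ x m y, [x, m, y] <:+: p ∧ E x m ∧ E y m
    · obtain ⟨a, w, b, htri, haw, hbw⟩ := hcol
      obtain ⟨s, t, hdec⟩ := triple_infix_iff.mp htri
      obtain ⟨q, hql, hqh, hqg, hq⟩ := active_shortcut hacyc hnov hp hdec haw hbw
      obtain ⟨r, h1, h2, h3, h4⟩ := ih q (by omega) hq
      exact ⟨r, h1.trans hqh, h2.trans hqg, h3, h4⟩
    · push_neg at hcol
      exact ⟨p, rfl, rfl, hp, fun x m y h hc => hcol x m y h hc.1 hc.2⟩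

lemma elimS (hnov : ∀ a b c : V, E a c → E b c → a ≠ b → (E a b ∨ E b a)) :
    ∀ (n : ℕ) (p : List V), p.length ≤ n → SPath E C p →
    ∃ q : List V, q.head? = p.head? ∧ q.getLast? = p.getLast? ∧ SPath E C q ∧
      ∀ x m y, [x, m, y] <:+: q → ¬(E x m ∧ E y m) := by
  intro n
  induction n with
  | zero =>
    intro p hl hp
    rw [Nat.le_zero, List.length_eq_zero_iff] at hl
    exact ⟨p, rfl, rfl, hp, by subst hl; intro x m y h; simp [triple_infix_iff] at h⟩
  | succ n ih =>
    intro p hl hp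
    by_cases hcol : ∃ x m y, [x, m, y] <:+: p ∧ E x m ∧ E y m
    · obtain ⟨a, w, b, htri, haw, hbw⟩ := hcol
      obtain ⟨s, t, hdec⟩ := triple_infix_iff.mp htri
      obtain ⟨q, hql, hqh, hqg, hq⟩ := spath_shortcut hnov hp hdec haw hbw
      obtain ⟨r, h1, h2, h3, h4⟩ := ih q (by omega) hq
      exact ⟨r, h1.trans hqh, h2.trans hqg, h3, h4⟩
    · push_neg at hcol
      exact ⟨p, rfl, rfl, hp, fun x m y h hc => hcol x m y h hc.1 hc.2⟩

lemma dconn_iff_sconn (hacyc : AcyclicRel E)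
    (hnov : ∀ a b c : V, E a c → E b c → a ≠ b → (E a b ∨ E b a)) {u v : V} :
    DConn E C u v ↔ SConn E C u v := by
  constructor
  · rintro ⟨p, hph, hpg, hp⟩
    obtain ⟨q, h1, h2, h3, h4⟩ := elimA hacyc hnov p.length p le_rfl hp
    refine ⟨q, h1.trans hph, h2.trans hpg, h3.1, ?_⟩
    intro x m y htri
    exact h3.2.1 x m y htri (h4 x m y htri)
  · rintro ⟨p, hph, hpg, hp⟩
    obtain ⟨q, h1, h2, h3, h4⟩ := elimS hnov p.length p le_rfl hp
    refine ⟨q, h1.trans hph, h2.trans hpg, h3.1, ?_, ?_⟩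
    · intro x m y htri _
      exact h3.2 x m y htri
    · intro x m y htri hxm hym
      exact absurd ⟨hxm, hym⟩ (h4 x m y htri)

end Elim

section Graph

variable {E : V → V → Prop} {C : Set V}

lemma rel_symm_of {l : List V} (h : l.Chain' (fun a b => E a b ∨ E b a)) :
    l.reverse.Chain' (fun a b => E a b ∨ E b a) := by
  rw [List.chain'_reverse]
  exact h.imp (fun a b hab => hab.symm)

lemma triple_infix_reverse {x m y : V} {l : List V} (h : [x, m, y] <:+: l.reverse) :
    [y, m, x] <:+: l := by
  have := List.reverse_infix.mpr h
  simpa using this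

lemma sconn_symm {u v : V} (h : SConn E C u v) : SConn E C v u := by
  obtain ⟨p, h1, h2, h3, h4⟩ := h
  refine ⟨p.reverse, by simpa using h2, by simpa using h1, rel_symm_of h3, ?_⟩
  intro x m y htri
  exact h4 y m x (triple_infix_reverse htri)

lemma sconn_drop_self {v w : V} :
    ∀ (n : ℕ) (p : List V), p.length ≤ n →
    p.Chain' (fun a b => E a b ∨ E b a) → p.head? = some w →
    p.getLast? = some v → (∀ x m y, [x, m, y] <:+: p → m ∉ C \ {w}) →
    SConn E C w v := by
  intro n
  induction n with
  | zero =>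
    intro p hl hc hh hg hm
    rw [Nat.le_zero, List.length_eq_zero_iff] at hl
    subst hl; simp at hh
  | succ n ih =>
    intro p hl hc hh hg hm
    by_cases hint : ∃ x y s t, p = s ++ (x :: w :: y :: t)
    · obtain ⟨x, y, s, t, rfl⟩ := hint
      refine ih (w :: y :: t) ?_ (hc.infix ⟨s ++ [x], [], by simp⟩) rfl ?_ ?_
      · simp at hl ⊢; omega
      · rw [← hg, List.getLast?_append,
          show (x :: w :: y :: t).getLast? = (w :: y :: t).getLast? from List.getLast?_cons_cons]
        cases hgl : (w :: y :: t).getLast? with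
        | none => simp at hgl
        | some w' => rw [Option.some_or]
      · intro a m b htri
        exact hm a m b (htri.trans ⟨s ++ [x], [], by simp⟩)
    · refine ⟨p, hh, hg, hc, ?_⟩
      intro x m y htri
      by_cases hmw : m = w
      · subst hmw
        obtain ⟨s, t, hdec⟩ := triple_infix_iff.mp htri
        exact absurd ⟨x, y, s, t, hdec⟩ hint
      · intro hmC
        exact hm x m y htri ⟨hmC, hmw⟩

lemma chain'_strengthen {R R' : V → V → Prop} : ∀ {l : List V}, l.Chain' R →
    (∀ a ∈ l, ∀ b ∈ l, R a b → R' a b) → l.Chain' R'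
  | [], _, _ => List.chain'_nil
  | [a], _, _ => List.chain'_singleton a
  | a :: b :: l, h, hs => by
    rw [List.chain'_cons] at h ⊢
    refine ⟨hs a (by simp) b (by simp) h.1, chain'_strengthen h.2 ?_⟩
    intro p hp q hq
    exact hs p (List.mem_cons.mpr (Or.inr hp)) q (List.mem_cons.mpr (Or.inr hq))

lemma exists_min_length {Q : List V → Prop} (h : ∃ l, Q l) :
    ∃ l, Q l ∧ ∀ l', Q l' → l.length ≤ l'.length := by
  classical
  obtain ⟨l0, h0⟩ := h
  have hex : ∃ n, ∃ l, Q l ∧ l.length = n := ⟨l0.length, l0, h0, rfl⟩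
  obtain ⟨l, hQ, hlen⟩ := Nat.find_spec hex
  exact ⟨l, hQ, fun l' h' => hlen ▸ Nat.find_min' hex ⟨l', h', rfl⟩⟩

lemma rtg_symm {R : V → V → Prop} (hs : ∀ a b, R a b → R b a) {a b : V}
    (h : Relation.ReflTransGen R a b) : Relation.ReflTransGen R b a := by
  induction h with
  | refl => exact Relation.ReflTransGen.refl
  | tail hab hbc ih => exact Relation.ReflTransGen.head (hs _ _ hbc) ih

/-- The C-avoiding undirected step relation. -/
def RC (E : V → V → Prop) (C : Set V) (a b : V) : Prop :=
  a ∉ C ∧ b ∉ C ∧ (E a b ∨ E b a)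

lemma rc_symm : ∀ a b : V, RC E C a b → RC E C b a :=
  fun _ _ h => ⟨h.2.1, h.1, h.2.2.symm⟩

lemma rc_rtg_sconn {u v : V} (h : Relation.ReflTransGen (RC E C) u v) :
    SConn E C u v := by
  obtain ⟨l, h1, h2, h3, _⟩ := rtg_list h
  refine ⟨l, h1, h2, h3.imp (fun a b hab => hab.2.2), ?_⟩
  intro x m y htri
  exact (chain'_triple h3 htri).1.2.1

lemma mem_rtg_notC {u z : V} (hu : u ∉ C) (h : Relation.ReflTransGen (RC E C) u z) :
    z ∉ C := by
  rcases h.cases_tail with rfl | ⟨c, _, hcz⟩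
  · exact hu
  · exact hcz.2.1

/-- For a vertex `z` of the separator, there is a neighbour of `z`
reachable from `u` while avoiding `C`. -/
lemma separator_neighbor {u v z : V} (hnsc : ¬ SConn E C u v)
    (hC' : SConn E (C \ {z}) u v) (hu : u ∉ C) (hv : v ∉ C) :
    ∃ a, Relation.ReflTransGen (RC E C) u a ∧ (E a z ∨ E z a) := by
  classical
  obtain ⟨q, hqh, hqg, hqc, hqm⟩ := hC'
  set A := q.takeWhile (fun w => decide (w ∉ C)) with hA
  set R := q.dropWhile (fun w => decide (w ∉ C)) with hR
  have hq : q = A ++ R := List.takeWhile_append_dropWhile.symm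
  have hAmem : ∀ w ∈ A, w ∉ C := by
    intro w hw
    simpa using List.mem_takeWhile_imp hw
  cases hRe : R with
  | nil =>
    exfalso
    apply hnsc
    refine ⟨q, hqh, hqg, hqc, ?_⟩
    intro x m y htri
    have hm : m ∈ q := htri.subset (by simp)
    rw [hq, hRe, List.append_nil] at hm
    exact hAmem m hm
  | cons z' B =>
    have hz'C : z' ∈ C := by
      have := List.head?_dropWhile_not (fun w => decide (w ∉ C)) q
      rw [← hR, hRe, List.head?_cons] at this
      simpa using this
    have hAne : A ≠ [] := by
      intro hAe
      rw [hAe, List.nil_append, hRe] at hq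
      rw [hq, List.head?_cons] at hqh
      exact hu (Option.some.inj hqh ▸ hz'C)
    have hBne : B ≠ [] := by
      intro hBe
      rw [hRe, hBe] at hq
      rw [hq, List.getLast?_append, List.getLast?_singleton] at hqg
      rw [Option.some_or] at hqg
      exact hv (Option.some.inj hqg ▸ hz'C)
    obtain ⟨x₀, y₀, htri, hx₀, hy₀⟩ :=
      interior_middle (l := q) (A := A) (B := B) (by rw [hq, hRe]) hAne hBne
    have hz' : z' = z := by
      have := hqm x₀ z' y₀ htri
      by_contra hne
      exact this ⟨hz'C, hne⟩
    have hchA : A.Chain' (RC E C) := by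
      refine chain'_strengthen (hqc.prefix (by rw [hq]; exact List.prefix_append A R)) ?_
      intro a ha b hb hab
      exact ⟨hAmem a ha, hAmem b hb, hab⟩
    have hheadA : A.head? = some u := by
      rw [hq, List.head?_append] at hqh
      cases hA2 : A.head? with
      | none => rw [hA2] at hqh; simp [List.head?_eq_none_iff.mp hA2] at hAne
      | some w => rw [hA2] at hqh; simpa using hqh
    have hx₀Ku : Relation.ReflTransGen (RC E C) u x₀ := by
      refine chain'_rtg hchA hheadA x₀ ?_
      cases hA3 : A.getLast? with
      | none => rw [hA3] at hx₀; simp at hx₀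
      | some w =>
        rw [hA3] at hx₀
        obtain rfl : w = x₀ := Option.some.inj hx₀
        obtain ⟨A', hA'⟩ := List.getLast?_eq_some_iff.mp hA3
        rw [hA']; simp
    have hadj : E x₀ z' ∨ E z' x₀ := (chain'_triple hqc htri).1
    exact ⟨x₀, hx₀Ku, hz' ▸ hadj⟩

end Graph

section Chord

variable {E : V → V → Prop} {C : Set V}

/-- Paths from `x` to `y` with interior in `K`. -/
def Pset (E : V → V → Prop) (K : Set V) (x y : V) (l : List V) : Prop :=
  l.Chain' (fun a b => E a b ∨ E b a) ∧ l.head? = some x ∧ l.getLast? = some y ∧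
    l.Nodup ∧ ∀ z ∈ l, z = x ∨ z = y ∨ z ∈ K

lemma chord_min_ordered {K : Set V} {x y x' y' : V} {p : List V}
    (hp : Pset E K x y p) (hmin : ∀ l', Pset E K x y l' → p.length ≤ l'.length)
    {A M B : List V} (hdec : p = A ++ (x' :: (M ++ (y' :: B))))
    (hadj : E x' y' ∨ E y' x') (hedge : s(x', y') ∉ pairs p) : False := by
  obtain ⟨hch, hh, hg, hnd, hmem⟩ := hp
  cases hM : M with
  | nil =>
    subst hM
    exact hedge (decomp_mem_pairs (by simpa using hdec))
  | cons m₀ M' =>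
    have hMne : M ≠ [] := by rw [hM]; exact List.cons_ne_nil _ _
    set q : List V := A ++ (x' :: (y' :: B)) with hq
    have hsub : q <+ p := by
      rw [hdec, hq]
      refine List.Sublist.append_left ?_ A
      exact List.Sublist.cons₂ x' (List.sublist_append_right M (y' :: B))
    have hqP : Pset E K x y q := by
      refine ⟨?_, ?_, ?_, hnd.sublist hsub, fun z hz => hmem z (hsub.subset hz)⟩
      · rw [hdec, List.chain'_append] at hch
        rw [hq, List.chain'_append]
        refine ⟨hch.1, ?_, hch.2.2⟩
        rw [List.chain'_cons]
        exact ⟨hadj, hch.2.1.infix ⟨x' :: M, [], by simp⟩⟩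
      · rw [← hh, hdec, hq, List.head?_append, List.head?_append,
          List.head?_cons, List.head?_cons]
      · rw [← hg, hdec, hq, List.getLast?_append, List.getLast?_append]
        rw [show x' :: (M ++ (y' :: B)) = (x' :: M) ++ (y' :: B) from by simp,
          getLast?_or_collapse, show x' :: y' :: B = [x'] ++ (y' :: B) from rfl,
          getLast?_or_collapse]
    have h1 := hmin q hqP
    rw [hdec, hq] at h1
    simp [hM] at h1
    omega

lemma chord_min {K : Set V} {x y x' y' : V} {p : List V}
    (hp : Pset E K x y p) (hmin : ∀ l', Pset E K x y l' → p.length ≤ l'.length)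
    (hx' : x' ∈ p) (hy' : y' ∈ p) (hne : x' ≠ y')
    (hadj : E x' y' ∨ E y' x') (hedge : s(x', y') ∉ pairs p) : False := by
  rcases two_mem_split hx' hy' hne with ⟨A, M, B, hdec⟩ | ⟨A, M, B, hdec⟩
  · exact chord_min_ordered ⟨hp.1, hp.2.1, hp.2.2.1, hp.2.2.2.1, hp.2.2.2.2⟩ hmin hdec hadj hedge
  · refine chord_min_ordered ⟨hp.1, hp.2.1, hp.2.2.1, hp.2.2.2.1, hp.2.2.2.2⟩ hmin hdec
      (hadj.symm) (by rwa [Sym2.eq_swap] at hedge)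

lemma pset_nonempty {u x y ax ay : V}
    (hax : Relation.ReflTransGen (RC E C) u ax)
    (hay : Relation.ReflTransGen (RC E C) u ay)
    (hadjx : E ax x ∨ E x ax) (hadjy : E ay y ∨ E y ay) :
    ∃ l, Pset E {z | Relation.ReflTransGen (RC E C) u z} x y l := by
  obtain ⟨l, h1, h2, h3, h4⟩ := rtg_list ((rtg_symm rc_symm hax).trans hay)
  have hlne : l ≠ [] := by intro h; rw [h] at h1; simp at h1
  set full : List V := x :: (l ++ [y]) with hfull
  have hchf : full.Chain' (fun a b => E a b ∨ E b a) := by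
    rw [hfull, show x :: (l ++ [y]) = [x] ++ (l ++ [y]) from rfl, List.chain'_append]
    refine ⟨List.chain'_singleton x, ?_, ?_⟩
    · rw [List.chain'_append]
      refine ⟨h3.imp (fun a b hab => hab.2.2), List.chain'_singleton y, ?_⟩
      intro a ha b hb
      rw [h2] at ha
      rw [List.head?_cons] at hb
      rw [← Option.some.inj ha, ← Option.some.inj hb]
      exact hadjy
    · intro a ha b hb
      rw [List.getLast?_singleton] at ha
      rw [List.head?_append, h1, Option.some_or] at hb
      rw [← Option.some.inj ha, ← Option.some.inj hb]
      exact hadjx.symm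
  have hheadf : full.head? = some x := rfl
  have hlastf : full.getLast? = some y := by
    rw [hfull, show x :: (l ++ [y]) = (x :: l) ++ [y] from rfl, List.getLast?_append,
      List.getLast?_singleton, Option.some_or]
  obtain ⟨l', c1, c2, c3, c4, c5⟩ := nodupify full.length full le_rfl hchf
  refine ⟨l', c1, c2.trans hheadf, c3.trans hlastf, c4, ?_⟩
  intro z hz
  have := c5 z hz
  rw [hfull] at this
  rcases List.mem_cons.mp this with rfl | this
  · exact Or.inl rfl
  · rcases List.mem_append.mp this with hzl | hzy
    · exact Or.inr (Or.inr (hax.trans (h4 z hzl)))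
    · exact Or.inr (Or.inl (List.mem_singleton.mp hzy))

lemma pset_three {K : Set V} {x y : V} {p : List V} (hp : Pset E K x y p)
    (hxy : x ≠ y) (hnadj : ¬(E x y ∨ E y x)) :
    ∃ M, p = x :: (M ++ [y]) ∧ M ≠ [] := by
  obtain ⟨hch, hh, hg, _, _⟩ := hp
  cases p with
  | nil => simp at hh
  | cons x0 r =>
    have hx0 : x0 = x := by rw [List.head?_cons] at hh; exact Option.some.inj hh
    subst hx0
    rcases r.eq_nil_or_concat with h | ⟨r', w, h⟩
    · subst h
      rw [List.getLast?_singleton] at hg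
      exact absurd (Option.some.inj hg) hxy
    · rw [List.concat_eq_append] at h
      subst h
      have hw : w = y := by
        rw [show x0 :: (r' ++ [w]) = (x0 :: r') ++ [w] from rfl, List.getLast?_append,
          List.getLast?_singleton, Option.some_or] at hg
        exact Option.some.inj hg
      subst hw
      refine ⟨r', rfl, ?_⟩
      intro hre
      subst hre
      rw [List.nil_append, List.chain'_cons] at hch
      exact hnadj hch.1

lemma edge_ne (hacyc : AcyclicRel E) {a b : V} (h : E a b ∨ E b a) : a ≠ b := by
  intro heq
  subst heq
  rcases h with h | h <;> exact hacyc a (Relation.TransGen.single h)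

end Chord

section Main

variable {E : V → V → Prop}

lemma pset_decomp_facts {K : Set V} {x y : V} {p M : List V} (hnd : p.Nodup)
    (hmem : ∀ z ∈ p, z = x ∨ z = y ∨ z ∈ K) (hdec : p = x :: (M ++ [y])) :
    (∀ z ∈ M, z ∈ K) ∧ x ∉ M ∧ y ∉ M ∧ M.Nodup := by
  subst hdec
  rw [List.nodup_cons, List.nodup_append] at hnd
  have hxM : x ∉ M := fun h => hnd.1 (List.mem_append.mpr (Or.inl h))
  have hyM : y ∉ M := fun h => hnd.2.2.2 y h y (List.mem_singleton.mpr rfl) rfl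
  refine ⟨?_, hxM, hyM, hnd.2.1⟩
  intro z hz
  rcases hmem z (List.mem_cons.mpr (Or.inr (List.mem_append.mpr (Or.inl hz)))) with rfl | rfl | hK
  · exact absurd hz hxM
  · exact absurd hz hyM
  · exact hK

lemma part2 (hacyc : AcyclicRel E)
    (hch : ChordalGraph (Skel E)) {u v : V}
    {C : Set V} (hnsc : ¬ SConn E C u v) (hminC : ∀ C' ⊂ C, SConn E C' u v) :
    ∀ x ∈ C, ∀ y ∈ C, x ≠ y → (E x y ∨ E y x) := by
  classical
  have hu : u ∉ C := by
    intro huC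
    obtain ⟨q, a, b, c, d⟩ := hminC (C \ {u}) (Set.sdiff_singleton_ssubset.mpr huC)
    exact hnsc (sconn_drop_self q.length q le_rfl c a b d)
  have hv : v ∉ C := by
    intro hvC
    obtain ⟨q, a, b, c, d⟩ := sconn_symm (hminC (C \ {v}) (Set.sdiff_singleton_ssubset.mpr hvC))
    exact hnsc (sconn_symm (sconn_drop_self q.length q le_rfl c a b d))
  intro x hxC y hyC hxy
  by_contra hnadjxy
  have hnscv : ¬ SConn E C v u := fun h => hnsc (sconn_symm h)
  have hdisj : ∀ z, Relation.ReflTransGen (RC E C) u z →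
      Relation.ReflTransGen (RC E C) v z → False := by
    intro z h1 h2
    exact hnsc (rc_rtg_sconn (h1.trans (rtg_symm rc_symm h2)))
  obtain ⟨ax, haxr, haxadj⟩ := separator_neighbor hnsc
    (hminC (C \ {x}) (Set.sdiff_singleton_ssubset.mpr hxC)) hu hv
  obtain ⟨ay, hayr, hayadj⟩ := separator_neighbor hnsc
    (hminC (C \ {y}) (Set.sdiff_singleton_ssubset.mpr hyC)) hu hv
  obtain ⟨bx, hbxr, hbxadj⟩ := separator_neighbor hnscv
    (sconn_symm (hminC (C \ {x}) (Set.sdiff_singleton_ssubset.mpr hxC))) hv hu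
  obtain ⟨bby, hbyr, hbyadj⟩ := separator_neighbor hnscv
    (sconn_symm (hminC (C \ {y}) (Set.sdiff_singleton_ssubset.mpr hyC))) hv hu
  obtain ⟨p₁, hp₁, hp₁min⟩ := exists_min_length (pset_nonempty haxr hayr haxadj hayadj)
  obtain ⟨p₂, hp₂, hp₂min⟩ := exists_min_length (pset_nonempty hbxr hbyr hbxadj hbyadj)
  set Ku : Set V := {z | Relation.ReflTransGen (RC E C) u z} with hKu
  set Kv : Set V := {z | Relation.ReflTransGen (RC E C) v z} with hKv
  obtain ⟨M₁, hM₁dec, hM₁ne⟩ := pset_three hp₁ hxy hnadjxy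
  obtain ⟨M₂, hM₂dec, hM₂ne⟩ := pset_three hp₂ hxy hnadjxy
  have hp₁K : ∀ z ∈ p₁, z = x ∨ z = y ∨ z ∈ Ku := hp₁.2.2.2.2
  have hp₂K : ∀ z ∈ p₂, z = x ∨ z = y ∨ z ∈ Kv := hp₂.2.2.2.2
  obtain ⟨hM₁K, hxM₁, hyM₁, hM₁nd⟩ := pset_decomp_facts hp₁.2.2.2.1 hp₁K hM₁dec
  obtain ⟨hM₂K, hxM₂, hyM₂, hM₂nd⟩ := pset_decomp_facts hp₂.2.2.2.1 hp₂K hM₂dec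
  set T : List V := M₁ ++ (y :: (M₂.reverse ++ [x])) with hT
  have hLdec : x :: T = p₁ ++ (M₂.reverse ++ [x]) := by rw [hM₁dec, hT]; simp
  have hrevp₂ : p₂.reverse = y :: (M₂.reverse ++ [x]) := by rw [hM₂dec]; simp
  have hp₁last : p₁.getLast? = some y := hp₁.2.2.1
  have hrev₂ch : (y :: (M₂.reverse ++ [x])).Chain' (fun a b => E a b ∨ E b a) := by
    have := rel_symm_of hp₂.1
    rwa [hrevp₂] at this
  have hchainrel : (x :: T).Chain' (fun a b => E a b ∨ E b a) := by
    rw [hLdec, List.chain'_append]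
    refine ⟨hp₁.1, hrev₂ch.tail, ?_⟩
    intro a ha b hb
    rw [hp₁last] at ha
    rw [← Option.some.inj ha]
    exact (List.chain'_cons'.mp hrev₂ch).1 b hb
  have hchainadj : (x :: T).Chain' (Skel E).Adj :=
    chain'_strengthen hchainrel (fun a _ b _ hab => ⟨edge_ne hacyc hab, hab⟩)
  have hTlastq : (x :: T).getLast? = some x := by
    rw [hT, show x :: (M₁ ++ (y :: (M₂.reverse ++ [x])))
        = (x :: (M₁ ++ (y :: M₂.reverse))) ++ [x] from by simp,
      List.getLast?_append, List.getLast?_singleton, Option.some_or]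
  have hTlast : (x :: T).getLast (List.cons_ne_nil _ _) = x := by
    have h := List.getLast?_eq_getLast (l := x :: T) (List.cons_ne_nil _ _)
    rw [hTlastq] at h
    exact (Option.some.inj h).symm
  set c : (Skel E).Walk x x := (mkW (Skel E) x T hchainadj).copy rfl hTlast with hc
  have hsupp : c.support = x :: T := by
    rw [hc, SimpleGraph.Walk.support_copy, support_mkW]
  have hedges : c.edges = pairs p₁ ++ (pairs p₂).reverse := by
    rw [hc, SimpleGraph.Walk.edges_copy, edges_mkW, hLdec,
      pairs_append' hp₁last, ← hrevp₂, pairs_reverse]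
  have hlen : c.length = M₁.length + M₂.length + 2 := by
    rw [hc, SimpleGraph.Walk.length_copy, length_mkW, hT]
    simp
    omega
  have h4 : 4 ≤ c.length := by
    rw [hlen]
    have h5 := List.length_pos_iff.mpr hM₁ne
    have h6 := List.length_pos_iff.mpr hM₂ne
    omega
  have hmemT : ∀ z ∈ x :: T, z ∈ p₁ ∨ z ∈ p₂ := by
    intro z hz
    rw [hLdec] at hz
    rcases List.mem_append.mp hz with hz | hz
    · exact Or.inl hz
    · rcases List.mem_append.mp hz with hz | hz
      · exact Or.inr (by
          rw [hM₂dec]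
          exact List.mem_cons.mpr (Or.inr (List.mem_append.mpr
            (Or.inl (List.mem_reverse.mp hz)))))
      · exact Or.inr (by rw [hM₂dec, List.mem_singleton.mp hz]; simp)
  have hKuC : ∀ z, z ∈ Ku → z ∉ C := fun z hz => mem_rtg_notC hu hz
  have hKvC : ∀ z, z ∈ Kv → z ∉ C := fun z hz => mem_rtg_notC hv hz
  have hbothxy : ∀ z, z ∈ p₁ → z ∈ p₂ → z = x ∨ z = y := by
    intro z h1 h2
    rcases hp₁K z h1 with rfl | rfl | hK1
    · exact Or.inl rfl
    · exact Or.inr rfl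
    rcases hp₂K z h2 with rfl | rfl | hK2
    · exact Or.inl rfl
    · exact Or.inr rfl
    exact absurd hK2 (fun h => hdisj z hK1 h)
  have hedisj : ∀ e ∈ pairs p₁, e ∈ pairs p₂ → False := by
    intro e he1 he2
    obtain ⟨a, b, s, t, rfl, hdec'⟩ := pairs_mem_decomp he1
    have hab : E a b ∨ E b a := by
      have h := hp₁.1.infix (show [a, b] <:+: p₁ from ⟨s, t, by rw [hdec']; simp⟩)
      rw [List.isChain_cons_cons] at h
      exact h.1
    have hap₁ : a ∈ p₁ := by rw [hdec']; simp
    have hbp₁ : b ∈ p₁ := by rw [hdec']; simp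
    have hap₂ : a ∈ p₂ := mem_of_mem_pairs he2 a (by simp)
    have hbp₂ : b ∈ p₂ := mem_of_mem_pairs he2 b (by simp)
    rcases hbothxy a hap₁ hap₂ with rfl | rfl <;> rcases hbothxy b hbp₁ hbp₂ with rfl | rfl
    · exact edge_ne hacyc hab rfl
    · exact hnadjxy hab
    · exact hnadjxy hab.symm
    · exact edge_ne hacyc hab rfl
  have hTnd : T.Nodup := by
    rw [hT, List.nodup_append]
    refine ⟨hM₁nd, ?_, ?_⟩
    · rw [List.nodup_cons, List.nodup_append]
      refine ⟨?_, by simpa using hM₂nd, by simp, ?_⟩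
      · intro hym
        rcases List.mem_append.mp hym with h | h
        · exact hyM₂ (List.mem_reverse.mp h)
        · exact hxy (List.mem_singleton.mp h).symm
      · intro z hz w hw heq
        rw [heq, List.mem_singleton.mp hw] at hz
        exact hxM₂ (List.mem_reverse.mp hz)
    · intro z hz1 w hz2 heq
      subst heq
      have hzKu : z ∈ Ku := hM₁K z hz1
      rcases List.mem_cons.mp hz2 with rfl | hz2
      · exact hyM₁ hz1
      rcases List.mem_append.mp hz2 with hz2 | hz2
      · exact hdisj z hzKu (hM₂K z (List.mem_reverse.mp hz2))
      · rw [List.mem_singleton.mp hz2] at hz1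
        exact hxM₁ hz1
  have hcyc : c.IsCycle := by
    refine ⟨⟨⟨?_⟩, ?_⟩, ?_⟩
    · rw [hedges, List.nodup_append]
      exact ⟨pairs_nodup hp₁.2.2.2.1, List.nodup_reverse.mpr (pairs_nodup hp₂.2.2.2.1),
        fun e he1 e' he2 heq => hedisj e he1 (List.mem_reverse.mp (heq ▸ he2))⟩
    · intro hnil
      rw [hnil] at hlen
      simp at hlen
    · rw [hsupp, List.tail_cons]
      exact hTnd
  obtain ⟨x', hx's, y', hy's, hadj', hnedge⟩ := hch x c hcyc h4
  rw [hsupp] at hx's hy's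
  rw [hedges] at hnedge
  have hadj'' : x' ≠ y' ∧ (E x' y' ∨ E y' x') := hadj'
  have hrel' : E x' y' ∨ E y' x' := hadj''.2
  have hne' : x' ≠ y' := hadj''.1
  have hnp₁ : s(x', y') ∉ pairs p₁ := fun h => hnedge (List.mem_append.mpr (Or.inl h))
  have hnp₂ : s(x', y') ∉ pairs p₂ :=
    fun h => hnedge (List.mem_append.mpr (Or.inr (List.mem_reverse.mpr h)))
  have hin1 : x' ∈ p₁ → y' ∈ p₁ → False :=
    fun h1 h2 => chord_min hp₁ hp₁min h1 h2 hne' hrel' hnp₁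
  have hin2 : x' ∈ p₂ → y' ∈ p₂ → False :=
    fun h1 h2 => chord_min hp₂ hp₂min h1 h2 hne' hrel' hnp₂
  have hxyp₁ : ∀ z, z = x ∨ z = y → z ∈ p₁ := by
    rintro z (rfl | rfl) <;> rw [hM₁dec] <;> simp
  have hxyp₂ : ∀ z, z = x ∨ z = y → z ∈ p₂ := by
    rintro z (rfl | rfl) <;> rw [hM₂dec] <;> simp
  have hKmem₁ : ∀ z ∈ p₁, z ≠ x → z ≠ y → z ∈ Ku := by
    intro z h h1 h2
    rcases hp₁K z h with rfl | rfl | hK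
    · exact absurd rfl h1
    · exact absurd rfl h2
    · exact hK
  have hKmem₂ : ∀ z ∈ p₂, z ≠ x → z ≠ y → z ∈ Kv := by
    intro z h h1 h2
    rcases hp₂K z h with rfl | rfl | hK
    · exact absurd rfl h1
    · exact absurd rfl h2
    · exact hK
  rcases hmemT x' hx's with h1 | h1 <;> rcases hmemT y' hy's with h2 | h2
  · exact hin1 h1 h2
  · by_cases hx'xy : x' = x ∨ x' = y
    · exact hin2 (hxyp₂ x' hx'xy) h2
    · by_cases hy'xy : y' = x ∨ y' = y
      · exact hin1 h1 (hxyp₁ y' hy'xy)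
      · push_neg at hx'xy hy'xy
        have hx'Ku : x' ∈ Ku := hKmem₁ x' h1 hx'xy.1 hx'xy.2
        have hy'Kv : y' ∈ Kv := hKmem₂ y' h2 hy'xy.1 hy'xy.2
        exact hdisj y' (Relation.ReflTransGen.tail hx'Ku
          ⟨hKuC x' hx'Ku, hKvC y' hy'Kv, hrel'⟩) hy'Kv
  · by_cases hx'xy : x' = x ∨ x' = y
    · exact hin1 (hxyp₁ x' hx'xy) h2
    · by_cases hy'xy : y' = x ∨ y' = y
      · exact hin2 h1 (hxyp₂ y' hy'xy)
      · push_neg at hx'xy hy'xy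
        have hx'Kv : x' ∈ Kv := hKmem₂ x' h1 hx'xy.1 hx'xy.2
        have hy'Ku : y' ∈ Ku := hKmem₁ y' h2 hy'xy.1 hy'xy.2
        exact hdisj x' (Relation.ReflTransGen.tail hy'Ku
          ⟨hKuC y' hy'Ku, hKvC x' hx'Kv, hrel'.symm⟩) hx'Kv
  · exact hin2 h1 h2

end Main

end Stmt13

/-- If a DAG has no v-structures (the parents of every vertex form a clique),
then its moral graph equals its skeleton; and if moreover the skeleton is
chordal, every minimal d-separator between two non-adjacent vertices is a
clique in `G`. -/
theorem stmt_13 {V : Type*} [Fintype V] (E : V → V → Prop) (hacyc : AcyclicRel E)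
    (hnov : ∀ a b c : V, E a c → E b c → a ≠ b → (E a b ∨ E b a)) :
    (∀ a b : V, a ≠ b →
      ((E a b ∨ E b a ∨ ∃ c, E a c ∧ E b c) ↔ (E a b ∨ E b a))) ∧
    (ChordalGraph (Skel E) → ∀ u v : V, u ≠ v → ¬ (E u v ∨ E v u) →
      ∀ C : Set V, DSep E C u v → (∀ C' ⊂ C, ¬ DSep E C' u v) →
        ∀ x ∈ C, ∀ y ∈ C, x ≠ y → (E x y ∨ E y x)) := by
  constructor
  · intro a b hab
    constructor
    · rintro (h | h | ⟨c, hac, hbc⟩)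
      · exact Or.inl h
      · exact Or.inr h
      · exact hnov a b c hac hbc hab
    · rintro (h | h)
      · exact Or.inl h
      · exact Or.inr (Or.inl h)
  · intro hch u v huv hnadj C hdsep hmin
    have hnsc : ¬ Stmt13.SConn E C u v := fun h =>
      hdsep ((Stmt13.dconn_iff_sconn hacyc hnov).mpr h)
    have hminC : ∀ C' ⊂ C, Stmt13.SConn E C' u v := fun C' hC' =>
      (Stmt13.dconn_iff_sconn hacyc hnov).mp (not_not.mp (hmin C' hC'))
    exact Stmt13.part2 hacyc hch hnsc hminC
end

section
/- Two Markov equivalent DAGs have the same skeleton: if G and H are DAGs such that for all disjoint sets A, B, C, A is d-separated from B given C in G iff in H, then u and v are adjacent in G iff they are adjacent in H. -/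
section Aux

variable {V : Type*} {E : V → V → Prop} {C S : Set V}

lemma activePath_tail {a : V} {p : List V} (h : ActivePath E C (a :: p)) :
    ActivePath E C p := by
  obtain ⟨hch, hnc, hcol⟩ := h
  refine ⟨hch.tail, fun x w y hinf => hnc x w y (hinf.trans (List.suffix_cons a p).isInfix),
    fun x w y hinf => hcol x w y (hinf.trans (List.suffix_cons a p).isInfix)⟩

lemma adj_dconn {u v : V} (h : E u v ∨ E v u) : DConn E C u v := by
  refine ⟨[u, v], rfl, by simp, ?_, ?_, ?_⟩
  · simpa [List.Chain', List.isChain_pair] using h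
  · intro a w b hinf
    have := hinf.length_le
    simp at this
  · intro a w b hinf
    have := hinf.length_le
    simp at this

lemma climb (hS : ∀ x y, E x y → y ∈ S → x ∈ S) :
    ∀ (r : List V) (a b z : V), E a b →
      List.Chain' (fun x y => E x y ∨ E y x) (a :: b :: r) →
      (∀ x w y, [x, w, y] <:+: (a :: b :: r) → E x w → E y w → w ∈ S) →
      (a :: b :: r).getLast? = some z → z ∈ S → a ∈ S := by
  intro r
  induction r with
  | nil =>
    intro a b z hab hch hcol hlast hz
    simp at hlast
    exact hS a b hab (hlast ▸ hz)
  | cons c r' ih =>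
    intro a b z hab hch hcol hlast hz
    have hch' : List.Chain' (fun x y => E x y ∨ E y x) (b :: c :: r') :=
      (List.isChain_cons_cons.mp hch).2
    have hbc : E b c ∨ E c b := (List.isChain_cons_cons.mp hch').1
    rcases hbc with hbc | hcb
    · have hb : b ∈ S := by
        refine ih b c z hbc hch'
          (fun x w y hinf => hcol x w y (hinf.trans (List.suffix_cons a _).isInfix)) ?_ hz
        rw [List.getLast?_cons_cons] at hlast
        exact hlast
      exact hS a b hab hb
    · have hb : b ∈ S := hcol a b c ⟨[], r', by simp⟩ hab hcb
      exact hS a b hab hb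

lemma non_adj_dsep (hE : AcyclicRel E) (u v : V) (huv : u ≠ v)
    (hne : ¬(E u v ∨ E v u)) :
    DSep E ((AncI E u ∪ AncI E v) \ {u, v}) u v := by
  set S : Set V := AncI E u ∪ AncI E v with hSdef
  set C : Set V := S \ {u, v} with hCdef
  have huS : u ∈ S := Or.inl Relation.ReflTransGen.refl
  have hvS : v ∈ S := Or.inr Relation.ReflTransGen.refl
  have hSrtg : ∀ x y, Relation.ReflTransGen E x y → y ∈ S → x ∈ S := by
    rintro x y hxy (hy | hy)
    · exact Or.inl (hxy.trans hy)
    · exact Or.inr (hxy.trans hy)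
  have hS : ∀ x y, E x y → y ∈ S → x ∈ S :=
    fun x y hxy => hSrtg x y (Relation.ReflTransGen.single hxy)
  rintro ⟨p, hp1, hp2, hp3⟩
  suffices H : ∀ n, ∀ p : List V, p.length = n → p.head? = some u →
      p.getLast? = some v → ActivePath E C p → False from
    H _ p rfl hp1 hp2 hp3
  intro n
  induction n using Nat.strong_induction_on with
  | _ n ih =>
  intro p hlen h1 h2 h3
  obtain ⟨hch, hnc, hcol⟩ := h3
  have hcolS : ∀ x w y, [x, w, y] <:+: p → E x w → E y w → w ∈ S := by
    intro x w y hinf hx hy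
    obtain ⟨d, hd, hwd⟩ := hcol x w y hinf hx hy
    exact hSrtg w d hwd hd.1
  rcases p with _ | ⟨a, _ | ⟨b, _ | ⟨c, r⟩⟩⟩
  · simp at h1
  · simp at h1 h2
    exact huv (h1.symm.trans h2)
  · -- p = [a, b] with a = u, b = v : adjacency, contradiction
    simp at h1 h2
    subst a; subst b
    exact hne (List.isChain_cons_cons.mp hch).1
  · -- p = a :: b :: c :: r
    simp only [List.head?_cons, Option.some.injEq] at h1
    subst a
    have hab : E u b ∨ E b u := (List.isChain_cons_cons.mp hch).1
    have hch2 : List.Chain' (fun x y => E x y ∨ E y x) (b :: c :: r) :=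
      (List.isChain_cons_cons.mp hch).2
    have hbc : E b c ∨ E c b := (List.isChain_cons_cons.mp hch2).1
    have htriple1 : [u, b, c] <:+: (u :: b :: c :: r) := ⟨[], r, by simp⟩
    have h2' : (b :: c :: r).getLast? = some v := by
      rw [List.getLast?_cons_cons] at h2; exact h2
    by_cases hbu : b = u
    · -- drop the head, shorter walk from u
      subst hbu
      exact ih (c :: r).length.succ (by simp [← hlen]) (b :: c :: r) rfl rfl h2'
        (activePath_tail ⟨hch, hnc, hcol⟩)
    · by_cases hbv : b = v
      · subst hbv; exact hne hab
      · by_cases hcolb : E u b ∧ E c b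
        · -- b is a collider
          have hbS : b ∈ S := hcolS u b c htriple1 hcolb.1 hcolb.2
          rcases hbS with hbu' | hbv'
          · -- b ancestor of u, and E u b : cycle
            exact hE u (Relation.TransGen.head' hcolb.1 hbu')
          · -- b ancestor of v
            rcases r with _ | ⟨d, r'⟩
            · -- p = [u, b, c], c = v, E v b, b → v : cycle
              simp at h2
              subst c
              exact hE v (Relation.TransGen.head' hcolb.2 hbv')
            · by_cases hcv : c = v
              · -- prefix [u, b, v] is a shorter active walk
                subst c
                refine ih 3 ?_ [u, b, v] rfl rfl (by simp) ⟨?_, ?_, ?_⟩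
                · simp at hlen; omega
                · simp [List.Chain', List.isChain_cons_cons, List.isChain_pair]
                  exact ⟨hab, hbc⟩
                · intro x w y hinf
                  have hxy : x = u ∧ w = b ∧ y = v := by
                    have := hinf.eq_of_length (by simp)
                    simp at this; tauto
                  obtain ⟨hx, hw, hy⟩ := hxy
                  subst x; subst w; subst y
                  exact hnc u b v htriple1
                · intro x w y hinf
                  have hxy : x = u ∧ w = b ∧ y = v := by
                    have := hinf.eq_of_length (by simp)
                    simp at this; tauto
                  obtain ⟨hx, hw, hy⟩ := hxy
                  subst x; subst w; subst y
                  exact hcol u b v htriple1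
              · by_cases hcu : c = u
                · -- drop first two, shorter walk from u
                  subst hcu
                  have h2'' : (c :: d :: r').getLast? = some v := by
                    rw [List.getLast?_cons_cons] at h2'; exact h2'
                  exact ih (d :: r').length.succ (by simp at hlen ⊢; omega)
                    (c :: d :: r') rfl rfl h2''
                    (activePath_tail (activePath_tail ⟨hch, hnc, hcol⟩))
                · -- c is interior, c ∈ S, non-collider ⇒ c ∈ C contradiction
                  have hcS : c ∈ S := hS c b hcolb.2 (Or.inr hbv')
                  have htriple2 : [b, c, d] <:+: (u :: b :: c :: d :: r') :=
                    ⟨[u], r', by simp⟩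
                  have hnbc : ¬ E b c := by
                    intro h'
                    exact hE b (Relation.TransGen.head h' (Relation.TransGen.single hcolb.2))
                  have := hnc b c d htriple2 (fun hh => hnbc hh.1)
                  exact this ⟨hcS, by simp [hcu, hcv]⟩
        · -- b is a non-collider
          have hbS : b ∈ S := by
            rcases hab with hub | hbu'
            · -- E u b; then ¬ E c b, so E b c, climb
              have hbc' : E b c := by
                rcases hbc with h' | h'
                · exact h'
                · exact absurd ⟨hub, h'⟩ hcolb
              exact climb hS r b c v hbc' hch2
                (fun x w y hinf => hcolS x w y (hinf.trans (List.suffix_cons u _).isInfix))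
                h2' hvS
            · exact hS b u hbu' huS
          exact hnc u b c htriple1 hcolb ⟨hbS, by simp [hbu, hbv]⟩

end Aux

/-- Two Markov equivalent DAGs (agreeing on all d-separation statements among
disjoint sets) have the same skeleton. -/
theorem stmt_15 {V : Type*} [Fintype V] (E F : V → V → Prop)
    (hE : AcyclicRel E) (hF : AcyclicRel F)
    (h : ∀ A B C : Set V, Disjoint A B → Disjoint A C → Disjoint B C →
      ((∀ a ∈ A, ∀ b ∈ B, DSep E C a b) ↔ (∀ a ∈ A, ∀ b ∈ B, DSep F C a b)))
    (u v : V) :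
    (E u v ∨ E v u) ↔ (F u v ∨ F v u) := by
  by_cases huv : u = v
  · subst huv
    constructor <;> rintro (h' | h')
    · exact absurd (Relation.TransGen.single h') (hE u)
    · exact absurd (Relation.TransGen.single h') (hE u)
    · exact absurd (Relation.TransGen.single h') (hF u)
    · exact absurd (Relation.TransGen.single h') (hF u)
  · have d1 : Disjoint ({u} : Set V) {v} := by
      simp [Set.disjoint_singleton, huv]
    constructor
    · intro hadj
      by_contra hnadj
      set C : Set V := (AncI F u ∪ AncI F v) \ {u, v} with hC
      have hsepF : DSep F C u v := non_adj_dsep hF u v huv hnadj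
      have d2 : Disjoint ({u} : Set V) C := by
        rw [Set.disjoint_left]
        rintro x rfl hx
        exact hx.2 (by simp)
      have d3 : Disjoint ({v} : Set V) C := by
        rw [Set.disjoint_left]
        rintro x rfl hx
        exact hx.2 (by simp)
      have hsepE : DSep E C u v := by
        have := (h {u} {v} C d1 d2 d3).mpr
          (by rintro a rfl b rfl; exact hsepF)
        exact this u rfl v rfl
      exact hsepE (adj_dconn hadj)
    · intro hadj
      by_contra hnadj
      set C : Set V := (AncI E u ∪ AncI E v) \ {u, v} with hC
      have hsepE : DSep E C u v := non_adj_dsep hE u v huv hnadj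
      have d2 : Disjoint ({u} : Set V) C := by
        rw [Set.disjoint_left]
        rintro x rfl hx
        exact hx.2 (by simp)
      have d3 : Disjoint ({v} : Set V) C := by
        rw [Set.disjoint_left]
        rintro x rfl hx
        exact hx.2 (by simp)
      have hsepF : DSep F C u v := by
        have := (h {u} {v} C d1 d2 d3).mp
          (by rintro a rfl b rfl; exact hsepE)
        exact this u rfl v rfl
      exact hsepF (adj_dconn hadj)
end

section
/- In a DAG, two vertices u and v are adjacent if and only if u and v are d-connected given C for every C ⊆ V \ {u, v}. In particular, if u and v are non-adjacent, then u ⫫_G v | Pa(u) ∪ Pa(v) \ {u,v}, where without loss of generality v is not an ancestor of u. -/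
lemma activePath_reverse {V : Type*} {E : V → V → Prop} {C : Set V} {p : List V}
    (h : ActivePath E C p) : ActivePath E C p.reverse := by
  obtain ⟨hc, hnc, hcol⟩ := h
  have key : ∀ a w b : V, [a, w, b] <:+: p.reverse → [b, w, a] <:+: p := by
    intro a w b hinf
    have := List.reverse_infix.mpr hinf
    simpa using this
  refine ⟨?_, ?_, ?_⟩
  · rw [List.Chain', List.isChain_reverse]
    exact hc.imp (fun a b hab => hab.symm)
  · intro a w b hinf hncol
    exact hnc b w a (key a w b hinf) (fun hh => hncol ⟨hh.2, hh.1⟩)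
  · intro a w b hinf ha hb
    exact hcol b w a (key a w b hinf) hb ha

lemma activePath_suffix {V : Type*} {E : V → V → Prop} {C : Set V} {p q : List V}
    (h : ActivePath E C p) (hs : q <:+ p) : ActivePath E C q := by
  obtain ⟨hc, hnc, hcol⟩ := h
  refine ⟨hc.infix hs.isInfix, ?_, ?_⟩
  · intro a w b hinf; exact hnc a w b (hinf.trans hs.isInfix)
  · intro a w b hinf; exact hcol a w b (hinf.trans hs.isInfix)

lemma dconn_symm {V : Type*} {E : V → V → Prop} {C : Set V} {u v : V}
    (h : DConn E C u v) : DConn E C v u := by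
  obtain ⟨p, hh, hl, hap⟩ := h
  exact ⟨p.reverse, by simpa using hl, by simpa using hh, activePath_reverse hap⟩

section Main
variable {V : Type*} {E : V → V → Prop} {u v : V}

lemma lemA (hacyc : AcyclicRel E) (hnadj : ¬ (E u v ∨ E v u))
    (hvanc : ¬ Relation.TransGen E v u) :
    ∀ (rest : List V) (x y : V),
      ActivePath E (({a | E a u} ∪ {a | E a v}) \ {u, v}) (x :: y :: rest) →
      (x :: y :: rest).getLast? = some u →
      Relation.ReflTransGen E v x → E x y → False := by
  intro rest
  induction rest with
  | nil =>
    intro x y hap hl hvx hxy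
    have hyu : y = u := by simpa using hl
    subst hyu
    exact hvanc (Relation.TransGen.tail' hvx hxy)
  | cons z rest' ih =>
    intro x y hap hl hvx hxy
    have hvy : Relation.TransGen E v y := Relation.TransGen.tail' hvx hxy
    by_cases hzy : E z y
    · -- collider at y
      obtain ⟨d, hdC, hyd⟩ := hap.2.2 x y z ⟨[], rest', rfl⟩ hxy hzy
      have hvd : Relation.TransGen E v d := Relation.TransGen.trans_left hvy hyd
      simp only [Set.mem_diff, Set.mem_union, Set.mem_setOf_eq, Set.mem_insert_iff,
        Set.mem_singleton_iff, not_or] at hdC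
      rcases hdC.1 with hdu | hdv
      · exact hvanc (hvd.tail hdu)
      · exact hacyc v (hvd.tail hdv)
    · -- non-collider, edge y → z
      have hyz : E y z := by
        rcases (List.isChain_cons_cons.mp (List.isChain_cons_cons.mp hap.1).2).1 with h1 | h1
        · exact h1
        · exact absurd h1 hzy
      have hap' : ActivePath E _ (y :: z :: rest') :=
        activePath_suffix hap ⟨[x], rfl⟩
      have hl' : (y :: z :: rest').getLast? = some u := by
        rw [List.getLast?_cons_cons] at hl ⊢
        exact hl
      exact ih y z hap' hl' (hvy.to_reflTransGen) hyz

lemma sepLemma (hacyc : AcyclicRel E) (huv : u ≠ v) (hnadj : ¬ (E u v ∨ E v u))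
    (hvanc : ¬ Relation.TransGen E v u) :
    DSep E (({a | E a u} ∪ {a | E a v}) \ {u, v}) u v := by
  rintro ⟨p, hh, hl, hap⟩
  set C := ({a | E a u} ∪ {a | E a v}) \ ({u, v} : Set V) with hC
  -- reverse the path: from v to u
  have hh' : p.reverse.head? = some v := by simpa using hl
  have hl' : p.reverse.getLast? = some u := by simpa using hh
  have hap' : ActivePath E C p.reverse := activePath_reverse hap
  obtain ⟨q, hq⟩ : ∃ q, p.reverse = v :: q := by
    cases hp : p.reverse with
    | nil => rw [hp] at hh'; simp at hh'
    | cons a q => rw [hp] at hh'; simp at hh'; exact ⟨q, by rw [hh']⟩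
  rw [hq] at hh' hl' hap'
  cases q with
  | nil => simp at hl'; exact huv hl'.symm
  | cons w rest =>
    by_cases hvw : E v w
    · exact lemA hacyc hnadj hvanc rest v w hap' hl' Relation.ReflTransGen.refl hvw
    · have hwv : E w v := by
        have := hap'.1
        rw [List.Chain', List.isChain_cons_cons] at this
        tauto
      cases rest with
      | nil =>
        have : w = u := by simpa using hl'
        exact hnadj (Or.inl (this ▸ hwv))
      | cons z rest' =>
        have hwC : w ∉ C := hap'.2.1 v w z ⟨[], rest', rfl⟩ (by tauto)
        apply hwC
        have hwu : w ≠ u := fun h => hnadj (Or.inl (h ▸ hwv))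
        have hwv' : w ≠ v := fun h => hacyc v (Relation.TransGen.single (h ▸ hwv))
        simp only [hC, Set.mem_diff, Set.mem_union, Set.mem_setOf_eq, Set.mem_insert_iff,
          Set.mem_singleton_iff, not_or]
        exact ⟨Or.inr hwv, hwu, hwv'⟩

end Main


/-- In a DAG, `u` and `v` are adjacent iff they are d-connected given every
`C ⊆ V \ {u, v}`; in particular, if they are non-adjacent and `v` is not an
ancestor of `u`, then `Pa(u) ∪ Pa(v) \ {u, v}` d-separates them. -/
theorem stmt_16 {V : Type*} [Fintype V] (E : V → V → Prop) (hacyc : AcyclicRel E)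
    (u v : V) (huv : u ≠ v) :
    ((E u v ∨ E v u) ↔ ∀ C : Set V, u ∉ C → v ∉ C → DConn E C u v) ∧
    (¬ (E u v ∨ E v u) → v ∉ Anc E u →
      DSep E (({a | E a u} ∪ {a | E a v}) \ {u, v}) u v) := by
  constructor
  · constructor
    · intro hadj C hu hv
      refine ⟨[u, v], rfl, by simp, ?_, ?_, ?_⟩
      · simpa [List.Chain'] using hadj
      · intro a w b hinf
        have := hinf.length_le
        simp at this
      · intro a w b hinf
        have := hinf.length_le
        simp at this
    · intro h
      by_contra hnadj
      by_cases hvanc : Relation.TransGen E v u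
      · have huanc : ¬ Relation.TransGen E u v := fun h' => hacyc u (h'.trans hvanc)
        have hsep := sepLemma hacyc huv.symm (fun h' => hnadj h'.symm) huanc
        apply hsep
        apply dconn_symm
        apply h <;> simp
      · have hsep := sepLemma hacyc huv hnadj hvanc
        apply hsep
        apply h <;> simp
  · intro hnadj hvanc
    exact sepLemma hacyc huv hnadj hvanc
end
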